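/- arXiv:1905.11306 — 12 statements merged into one kernel-verified Lean document; each statement's English description precedes it below -/
import Mathlib

section
/- The map from (ℂ*)² to ℂ³ sending (x,y) to (x⁻¹ + d·y⁻¹, x + d·y, x² + d·y²) is injective, for every integer d ≥ 2. -/
/-- The map `(ℂ*)² → ℂ³`, `(x,y) ↦ (x⁻¹ + d·y⁻¹, x + d·y, x² + d·y²)` is injective
for every integer `d ≥ 2`. -/
theorem stmt0 (d : ℤ) (hd : 2 ≤ d) (x y x' y' : ℂ)
    (hx : x ≠ 0) (hy : y ≠ 0) (hx' : x' ≠ 0) (hy' : y' ≠ 0)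
    (h1 : x⁻¹ + (d : ℂ) * y⁻¹ = x'⁻¹ + (d : ℂ) * y'⁻¹)
    (h2 : x + (d : ℂ) * y = x' + (d : ℂ) * y')
    (h3 : x ^ 2 + (d : ℂ) * y ^ 2 = x' ^ 2 + (d : ℂ) * y' ^ 2) :
    x = x' ∧ y = y' := by
  have hd0 : (d : ℂ) ≠ 0 := by exact_mod_cast (show d ≠ 0 by omega)
  have hdp1 : (d : ℂ) + 1 ≠ 0 := by
    have : ((d : ℂ) + 1) = ((d + 1 : ℤ) : ℂ) := by push_cast; ring
    rw [this]
    exact_mod_cast (show d + 1 ≠ 0 by omega)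
  have hdm1 : (d : ℂ) - 1 ≠ 0 := by
    have : ((d : ℂ) - 1) = ((d - 1 : ℤ) : ℂ) := by push_cast; ring
    rw [this]
    exact_mod_cast (show d - 1 ≠ 0 by omega)
  by_cases hv : y = y'
  · subst hv
    refine ⟨by linear_combination h2, rfl⟩
  · have hv' : y - y' ≠ 0 := sub_ne_zero.mpr hv
    have hc : -(d : ℂ) * (y - y') ≠ 0 := mul_ne_zero (neg_ne_zero.mpr hd0) hv'
    have key : (-(d : ℂ) * (y - y')) * (x + x') = (-(d : ℂ) * (y - y')) * (y + y') := by
      linear_combination h3 - (x + x') * h2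
    have hp : x + x' = y + y' := mul_left_cancel₀ hc key
    -- clear denominators in h1
    have h1' : x' * y * y' + (d : ℂ) * x * x' * y' = x * y * y' + (d : ℂ) * x * x' * y := by
      field_simp at h1
      linear_combination h1
    have key2 : ((d : ℂ) * (y - y')) * (y * y') = ((d : ℂ) * (y - y')) * (x * x') := by
      linear_combination h1' + (y * y') * h2
    have hq : y * y' = x * x' := mul_left_cancel₀ (mul_ne_zero hd0 hv') key2
    have hfac : (x - y) * (x - y') = 0 := by linear_combination x * hp + hq
    rcases mul_eq_zero.mp hfac with h | h
    · have hxy : x = y := sub_eq_zero.mp h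
      have hxy' : x' = y' := by linear_combination hp - hxy
      have hxx : ((d : ℂ) + 1) * (x - x') = 0 := by
        linear_combination h2 + (d : ℂ) * hxy - (d : ℂ) * hxy'
      have hxx' : x = x' := by
        rcases mul_eq_zero.mp hxx with h' | h'
        · exact absurd h' hdp1
        · exact sub_eq_zero.mp h'
      exact ⟨hxx', by rw [← hxy, ← hxy', hxx']⟩
    · have hxy' : x = y' := sub_eq_zero.mp h
      have hx'y : x' = y := by linear_combination hp - hxy'
      have hxx : ((d : ℂ) - 1) * (x - x') = 0 := by
        linear_combination -h2 + (d : ℂ) * hxy' - (d : ℂ) * hx'y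
      have hxx' : x = x' := by
        rcases mul_eq_zero.mp hxx with h' | h'
        · exact absurd h' hdm1
        · exact sub_eq_zero.mp h'
      refine ⟨hxx', ?_⟩
      rw [← hx'y, ← hxy', hxx']
end

section
/- For d ≥ 3, if f, f', g, g' are nonzero linear binary forms over ℂ with f, f', g, g' not proportional to T₀ or T₁, written f = T₀ − αT₁, g = T₀ − βT₁, f' = T₀ − α'T₁, g' = T₀ − β'T₁ with α,α',β,β' nonzero, and the polynomial f^d·g − f'^d·g' has zero coefficients at T₀^{d+1}, T₀^d T₁, T₀^{d-1}T₁², T₀T₁^d, and T₁^{d+1}, then α = α' and β = β'. -/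
open MvPolynomial

lemma single_pair_eq_iff (a b k j : ℕ) :
    (Finsupp.single (0:Fin 2) a + Finsupp.single 1 b = Finsupp.single 0 k + Finsupp.single 1 j)
    ↔ (a = k ∧ b = j) := by
  constructor
  · intro h
    constructor
    · have := DFunLike.congr_fun h 0
      simpa using this
    · have := DFunLike.congr_fun h 1
      simpa using this
  · rintro ⟨rfl, rfl⟩; rfl

lemma coeff_pow_lin (α : ℂ) (d a b : ℕ) :
    coeff (Finsupp.single 0 a + Finsupp.single 1 b)
      ((X 0 - C α * X 1 : MvPolynomial (Fin 2) ℂ) ^ d)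
    = if a + b = d then (d.choose b : ℂ) * (-α) ^ b else 0 := by
  have hX : (X 0 - C α * X 1 : MvPolynomial (Fin 2) ℂ) = X 0 + C (-α) * X 1 := by
    rw [map_neg]; ring
  rw [hX, add_pow, MvPolynomial.coeff_sum]
  have hterm : ∀ k, (X (0:Fin 2) : MvPolynomial (Fin 2) ℂ) ^ k * (C (-α) * X 1) ^ (d - k) * (d.choose k : MvPolynomial (Fin 2) ℂ)
      = monomial (Finsupp.single 0 k + Finsupp.single 1 (d - k)) ((-α) ^ (d-k) * (d.choose k : ℂ)) := by
    intro k
    rw [mul_pow, ← C_pow, X_pow_eq_monomial, X_pow_eq_monomial, C_mul_monomial, monomial_mul,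
      ← C_eq_coe_nat, mul_comm _ (C _), C_mul_monomial]
    congr 1
    ring
  simp only [hterm, MvPolynomial.coeff_monomial]
  rw [Finset.sum_eq_single a]
  · by_cases hab : a + b = d
    · have ha : a ≤ d := by omega
      have hb : d - a = b := by omega
      rw [if_pos hab, if_pos]
      · have h1 : (a+b).choose ((a+b) - b) = (a+b).choose b := Nat.choose_symm (Nat.le_add_left b a)
        rw [Nat.add_sub_cancel] at h1
        rw [hb, ← hab, h1, mul_comm]
      · rw [single_pair_eq_iff]; exact ⟨rfl, hb⟩
    · rw [if_neg hab]
      by_cases hle : a ≤ d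
      · rw [if_neg]
        rw [single_pair_eq_iff]
        rintro ⟨-, h2⟩
        omega
      · split_ifs with h
        · have : d.choose a = 0 := Nat.choose_eq_zero_of_lt (by omega)
          simp [this]
        · rfl
  · intro k _ hk
    rw [if_neg]
    rw [single_pair_eq_iff]
    rintro ⟨rfl, -⟩; exact hk rfl
  · intro ha
    simp only [Finset.mem_range, not_lt] at ha
    split_ifs with h
    · have : d.choose a = 0 := Nat.choose_eq_zero_of_lt (by omega)
      simp [this]
    · rfl

lemma sub_single0 (a b : ℕ) :
    (Finsupp.single (0:Fin 2) a + Finsupp.single 1 b) - Finsupp.single 0 1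
      = Finsupp.single 0 (a-1) + Finsupp.single 1 b := by
  ext i; fin_cases i <;> simp

lemma sub_single1 (a b : ℕ) :
    (Finsupp.single (0:Fin 2) a + Finsupp.single 1 b) - Finsupp.single 1 1
      = Finsupp.single 0 a + Finsupp.single 1 (b-1) := by
  ext i; fin_cases i <;> simp

lemma coeff_prod_lin (α β : ℂ) (d a b : ℕ) :
    coeff (Finsupp.single 0 a + Finsupp.single 1 b)
      ((X 0 - C α * X 1 : MvPolynomial (Fin 2) ℂ)^d * (X 0 - C β * X 1))
    = (if 1 ≤ a ∧ (a-1)+b = d then (d.choose b:ℂ) * (-α)^b else 0)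
      - β * (if 1 ≤ b ∧ a+(b-1) = d then (d.choose (b-1):ℂ) * (-α)^(b-1) else 0) := by
  have hexp : (X 0 - C α * X 1 : MvPolynomial (Fin 2) ℂ)^d * (X 0 - C β * X 1)
      = ((X 0 - C α * X 1)^d * X 0) - C β * ((X 0 - C α * X 1)^d * X 1) := by ring
  rw [hexp, coeff_sub, coeff_C_mul, coeff_mul_X', coeff_mul_X']
  have hs0 : ((0:Fin 2) ∈ (Finsupp.single (0:Fin 2) a + Finsupp.single 1 b).support) ↔ 1 ≤ a := by
    simp [Finsupp.mem_support_iff, Nat.one_le_iff_ne_zero]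
  have hs1 : ((1:Fin 2) ∈ (Finsupp.single (0:Fin 2) a + Finsupp.single 1 b).support) ↔ 1 ≤ b := by
    simp [Finsupp.mem_support_iff, Nat.one_le_iff_ne_zero]
  rw [sub_single0, sub_single1, coeff_pow_lin, coeff_pow_lin]
  by_cases ha : 1 ≤ a <;> by_cases hb : 1 ≤ b <;>
    simp [hs0, hs1, ha, hb, mul_ite, mul_zero]


lemma key_alg (e : ℕ) (x y b b' : ℂ) (hx : x ≠ 0) (hy : y ≠ 0)
    (E1 : ((e:ℂ)+3) * x - b = ((e:ℂ)+3) * y - b')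
    (E2 : ((e:ℂ)+3)*((e:ℂ)+2)*x^2 - 2*((e:ℂ)+3)*x*b
        = ((e:ℂ)+3)*((e:ℂ)+2)*y^2 - 2*((e:ℂ)+3)*y*b')
    (E3 : 2*x^(3+e) - 2*((e:ℂ)+3)*x^(2+e)*b = 2*y^(3+e) - 2*((e:ℂ)+3)*y^(2+e)*b')
    (E4 : b*x^(3+e) = b'*y^(3+e)) :
    x = y ∧ b = b' := by
  set n : ℂ := (e:ℂ) with hn
  have h1n : n + 1 ≠ 0 := by
    have : ((e+1:ℕ):ℂ) ≠ 0 := Nat.cast_ne_zero.mpr (by omega)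
    push_cast at this; exact this
  have h2n : n + 2 ≠ 0 := by
    have : ((e+2:ℕ):ℂ) ≠ 0 := Nat.cast_ne_zero.mpr (by omega)
    push_cast at this; exact this
  have h3n : n + 3 ≠ 0 := by
    have : ((e+3:ℕ):ℂ) ≠ 0 := Nat.cast_ne_zero.mpr (by omega)
    push_cast at this; exact this
  have h4n : n + 4 ≠ 0 := by
    have : ((e+4:ℕ):ℂ) ≠ 0 := Nat.cast_ne_zero.mpr (by omega)
    push_cast at this; exact this
  suffices hxy : x = y by
    refine ⟨hxy, ?_⟩
    subst hxy
    linear_combination -E1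
  by_contra hne
  have hsub : x - y ≠ 0 := sub_ne_zero.mpr hne
  -- beta formulas
  have hK : ((n+3) * (x - y)) * (2*b - ((n+2)*x - (n+4)*y)) = 0 := by
    linear_combination 2*(n+3)*y*E1 - E2
  have hb2 : 2*b = (n+2)*x - (n+4)*y := by
    rcases mul_eq_zero.mp hK with h | h
    · exact absurd h (mul_ne_zero h3n hsub)
    · linear_combination h
  have hb2' : 2*b' = (n+2)*y - (n+4)*x := by
    linear_combination hb2 + 2*E1
  have HC : (n+3)*(x*y)*(x^(e+1) - y^(e+1)) = (n+1)*(x^(3+e) - y^(3+e)) := by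
    have h0 : (n+4) * ((n+3)*(x*y)*(x^(e+1)-y^(e+1)) - (n+1)*(x^(3+e)-y^(3+e))) = 0 := by
      linear_combination E3 + (n+3)*x^(2+e)*hb2 - (n+3)*y^(2+e)*hb2'
    rcases mul_eq_zero.mp h0 with h | h
    · exact absurd h h4n
    · linear_combination h
  have HD : (n+2)*(x^(4+e) - y^(4+e)) = (n+4)*(x*y)*(x^(e+2)-y^(e+2)) := by
    linear_combination 2*E4 - x^(3+e)*hb2 + y^(3+e)*hb2'
  have h_i : (n+1)*((x+y)*(x^(e+2)-y^(e+2))) = (2*n+4)*((x*y)*(x^(e+1)-y^(e+1))) := by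
    linear_combination -HC
  have h_ii : (n+2)*((x+y)*(x^(e+1)-y^(e+1))) = (2*n+2)*(x^(e+2)-y^(e+2)) := by
    have h0 : ((n+3)*(x*y)) * ((n+2)*((x+y)*(x^(e+1)-y^(e+1))) - (2*n+2)*(x^(e+2)-y^(e+2))) = 0 := by
      linear_combination (n+2)*(x+y)*HC + (n+1)*HD
    rcases mul_eq_zero.mp h0 with h | h
    · exact absurd h (mul_ne_zero h3n (mul_ne_zero hx hy))
    · linear_combination h
  have hPQ : (x^(e+1)-y^(e+1)) = 0 ∨ (x^(e+2)-y^(e+2)) = 0 := by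
    have h0 : ((n+2)*(n+1)) * ((x^(e+1)-y^(e+1)) * ((x^(e+2)-y^(e+2)) * (x-y)^2)) = 0 := by
      linear_combination ((n+2)*(x+y)*(x^(e+1)-y^(e+1)))*h_i
        + ((2*n+4)*(x*y)*(x^(e+1)-y^(e+1)))*h_ii
    rcases mul_eq_zero.mp h0 with h | h
    · exact absurd h (mul_ne_zero h2n h1n)
    · rcases mul_eq_zero.mp h with h | h
      · exact Or.inl h
      · rcases mul_eq_zero.mp h with h | h
        · exact Or.inr h
        · exact absurd h (pow_ne_zero _ hsub)
  rcases hPQ with hP | hQ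
  · -- P = 0 case
    have hR : x^(3+e) - y^(3+e) = 0 := by
      have h0 : (n+1) * (x^(3+e)-y^(3+e)) = 0 := by
        linear_combination -HC + (n+3)*(x*y)*hP
      rcases mul_eq_zero.mp h0 with h | h
      · exact absurd h h1n
      · exact h
    have hxx : (x^2 - y^2) * x^(e+1) = 0 := by
      linear_combination hR - y^2*hP
    have hx2 : x^2 - y^2 = 0 := by
      rcases mul_eq_zero.mp hxx with h | h
      · exact h
      · exact absurd h (pow_ne_zero _ hx)
    have hyx : y = -x := by
      rcases mul_eq_zero.mp (show (x-y)*(x+y) = 0 by linear_combination hx2) with h | h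
      · exact absurd h hsub
      · linear_combination h
    subst hyx
    have hm1 : ((-1:ℂ))^(e+1) = 1 := by
      have hnx : (-1:ℂ)^(e+1) * x^(e+1) = 1 * x^(e+1) := by
        rw [← neg_pow]; linear_combination -hP
      exact mul_right_cancel₀ (pow_ne_zero _ hx) hnx
    have hm2 : ((-1:ℂ))^(e+2) = -1 := by
      have h := pow_succ (-1:ℂ) (e+1)
      rw [hm1] at h
      calc ((-1:ℂ))^(e+2) = (-1:ℂ)^(e+1+1) := by norm_num
        _ = -1 := by rw [h]; ring
    have hm4 : ((-1:ℂ))^(4+e) = -1 := by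
      have : ((-1:ℂ))^(4+e) = ((-1:ℂ))^(e+2) * ((-1:ℂ))^2 := by
        rw [← pow_add]; ring_nf
      rw [this, hm2]; ring
    have n2 : (-x)^(e+2) = -x^(e+2) := by rw [neg_pow, hm2]; ring
    have n4 : (-x)^(4+e) = -x^(4+e) := by rw [neg_pow, hm4]; ring
    rw [n2, n4] at HD
    have hz : ((4:ℂ)*n+12) * x^(4+e) = 0 := by linear_combination HD
    rcases mul_eq_zero.mp hz with h | h
    · exact h3n (by linear_combination h/4)
    · exact pow_ne_zero _ hx h
  · -- Q = 0 case
    have hsP : (x+y) * (x^(e+1)-y^(e+1)) = 0 := by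
      have h0 : (n+2) * ((x+y)*(x^(e+1)-y^(e+1))) = 0 := by
        linear_combination h_ii + (2*n+2)*hQ
      rcases mul_eq_zero.mp h0 with h | h
      · exact absurd h h2n
      · exact h
    rcases mul_eq_zero.mp hsP with hs | hP
    · -- s = 0
      have hyx : y = -x := by linear_combination hs
      subst hyx
      have hm2 : ((-1:ℂ))^(e+2) = 1 := by
        have hnx : (-1:ℂ)^(e+2) * x^(e+2) = 1 * x^(e+2) := by
          rw [← neg_pow]; linear_combination -hQ
        exact mul_right_cancel₀ (pow_ne_zero _ hx) hnx
      have hm1 : ((-1:ℂ))^(e+1) = -1 := by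
        have h := pow_succ (-1:ℂ) (e+1)
        have h' : ((-1:ℂ))^(e+1+1) = ((-1:ℂ))^(e+2) := by norm_num
        rw [h', hm2] at h
        linear_combination h
      have hm3 : ((-1:ℂ))^(3+e) = -1 := by
        have : ((-1:ℂ))^(3+e) = ((-1:ℂ))^(e+1) * ((-1:ℂ))^2 := by
          rw [← pow_add]; ring_nf
        rw [this, hm1]; ring
      have n1 : (-x)^(e+1) = -x^(e+1) := by rw [neg_pow, hm1]; ring
      have n3 : (-x)^(3+e) = -x^(3+e) := by rw [neg_pow, hm3]; ring
      rw [n1, n3] at HC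
      have hz : ((4:ℂ)*n+8) * x^(3+e) = 0 := by linear_combination -HC
      rcases mul_eq_zero.mp hz with h | h
      · exact h2n (by linear_combination h/4)
      · exact pow_ne_zero _ hx h
    · -- P = 0 and Q = 0
      have : (x - y) * x^(e+1) = 0 := by linear_combination hQ - y*hP
      rcases mul_eq_zero.mp this with h | h
      · exact hsub h
      · exact pow_ne_zero _ hx h

/-- For `d ≥ 3`: if `f = T₀ - αT₁`, `g = T₀ - βT₁`, `f' = T₀ - α'T₁`, `g' = T₀ - β'T₁`
with `α, α', β, β'` nonzero, and the binary form `f^d·g - f'^d·g'` has vanishing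
coefficients at `T₀^{d+1}`, `T₀^d T₁`, `T₀^{d-1}T₁²`, `T₀T₁^d` and `T₁^{d+1}`, then
`α = α'` and `β = β'`. -/
theorem stmt1 (d : ℕ) (hd : 3 ≤ d) (α α' β β' : ℂ)
    (hα : α ≠ 0) (hα' : α' ≠ 0) (hβ : β ≠ 0) (hβ' : β' ≠ 0)
    (f f' g g' : MvPolynomial (Fin 2) ℂ)
    (hf : f = X 0 - C α * X 1) (hg : g = X 0 - C β * X 1)
    (hf' : f' = X 0 - C α' * X 1) (hg' : g' = X 0 - C β' * X 1)
    (h1 : coeff (Finsupp.single 0 (d + 1)) (f ^ d * g - f' ^ d * g') = 0)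
    (h2 : coeff (Finsupp.single 0 d + Finsupp.single 1 1) (f ^ d * g - f' ^ d * g') = 0)
    (h3 : coeff (Finsupp.single 0 (d - 1) + Finsupp.single 1 2) (f ^ d * g - f' ^ d * g') = 0)
    (h4 : coeff (Finsupp.single 0 1 + Finsupp.single 1 d) (f ^ d * g - f' ^ d * g') = 0)
    (h5 : coeff (Finsupp.single 1 (d + 1)) (f ^ d * g - f' ^ d * g') = 0) :
    α = α' ∧ β = β' := by
  subst hf hg hf' hg'
  obtain ⟨e, rfl⟩ := Nat.exists_eq_add_of_le hd
  have m5 : (Finsupp.single (1:Fin 2) (3+e+1) : Fin 2 →₀ ℕ)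
      = Finsupp.single 0 0 + Finsupp.single 1 (3+e+1) := by
    rw [Finsupp.single_zero, zero_add]
  rw [m5] at h5
  rw [coeff_sub, sub_eq_zero] at h2 h3 h4 h5
  rw [coeff_prod_lin, coeff_prod_lin] at h2 h3 h4 h5
  simp only [if_pos (show (1 ≤ 3+e ∧ 3+e-1+1 = 3+e) by omega),
      if_pos (show (1 ≤ 1 ∧ 3+e+(1-1) = 3+e) by omega)] at h2
  simp only [if_pos (show (1 ≤ 3+e-1 ∧ 3+e-1-1+2 = 3+e) by omega),
      if_pos (show (1 ≤ 2 ∧ 3+e-1+(2-1) = 3+e) by omega)] at h3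
  simp only [if_pos (show (1 ≤ 1 ∧ 1-1+(3+e) = 3+e) by omega),
      if_pos (show (1 ≤ 3+e ∧ 1+(3+e-1) = 3+e) by omega)] at h4
  simp only [if_neg (show ¬(1 ≤ 0 ∧ 0-1+(3+e+1) = 3+e) by omega),
      if_pos (show (1 ≤ 3+e+1 ∧ 0+(3+e+1-1) = 3+e) by omega)] at h5
  rw [Nat.choose_one_right, Nat.choose_zero_right] at h2
  rw [Nat.choose_one_right] at h3
  have hcsym : (3+e).choose (3+e-1) = 3+e := by
    rw [Nat.choose_symm (by omega : 1 ≤ 3+e), Nat.choose_one_right]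
  rw [Nat.choose_self, hcsym, show (3:ℕ)+e-1 = 2+e by omega] at h4
  rw [show (3:ℕ)+e+1-1 = 3+e by omega, Nat.choose_self] at h5
  have hchoose2 : 2 * ((3+e).choose 2) = (3+e)*(2+e) := by
    rw [Nat.choose_two_right, show (3:ℕ)+e-1 = 2+e by omega]
    have hev : Even ((2+e)*((2+e)+1)) := Nat.even_mul_succ_self (2+e)
    rw [show (2+e)+1 = 3+e by omega, mul_comm] at hev
    obtain ⟨r, hr⟩ := hev
    omega
  have hcastC : (2:ℂ) * (((3+e).choose 2 : ℕ):ℂ) = ((e:ℂ)+3)*((e:ℂ)+2) := by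
    have h := congrArg (Nat.cast : ℕ → ℂ) hchoose2
    push_cast at h
    linear_combination h
  push_cast at h2 h3 h4 h5
  have E1 : ((e:ℂ)+3)*(-α) - β = ((e:ℂ)+3)*(-α') - β' := by linear_combination h2
  have E2 : ((e:ℂ)+3)*((e:ℂ)+2)*(-α)^2 - 2*((e:ℂ)+3)*(-α)*β
      = ((e:ℂ)+3)*((e:ℂ)+2)*(-α')^2 - 2*((e:ℂ)+3)*(-α')*β' := by
    linear_combination 2*h3 - ((-α)^2 - (-α')^2)*hcastC
  have E3 : 2*(-α)^(3+e) - 2*((e:ℂ)+3)*(-α)^(2+e)*β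
      = 2*(-α')^(3+e) - 2*((e:ℂ)+3)*(-α')^(2+e)*β' := by linear_combination 2*h4
  have E4 : β*(-α)^(3+e) = β'*(-α')^(3+e) := by linear_combination -h5
  obtain ⟨hxy, hbb⟩ := key_alg e (-α) (-α') β β' (neg_ne_zero.mpr hα) (neg_ne_zero.mpr hα') E1 E2 E3 E4
  exact ⟨neg_injective hxy, hbb⟩
end

section
/- The morphism ψ : ℙ^{n-1} → ℙ^{2(n-1)} sending [x₁ : ⋯ : x_n] to the point whose ℓ-th coordinate (for ℓ = 2,…,2n) is ∑_{i+j=ℓ, i ≤ j} x_i^{k-1} x_j is injective, for every integer k ≥ 2. -/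
open Finset

private noncomputable def Sfun (n k : ℕ) (x : Fin n → ℂ) (ℓ : ℕ) : ℂ :=
  ∑ i : Fin n, ∑ j : Fin n,
    if (i : ℕ) + 1 + ((j : ℕ) + 1) = ℓ ∧ i ≤ j then x i ^ (k - 1) * x j else 0

private lemma Sfun_smul (n k : ℕ) (hk : 1 ≤ k) (μ : ℂ) (x : Fin n → ℂ) (ℓ : ℕ) :
    Sfun n k (μ • x) ℓ = μ ^ k * Sfun n k x ℓ := by
  simp only [Sfun, Finset.mul_sum]
  refine Finset.sum_congr rfl fun i _ => Finset.sum_congr rfl fun j _ => ?_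
  split
  · simp only [Pi.smul_apply, smul_eq_mul]
    have : (μ * x i) ^ (k - 1) * (μ * x j) = (μ ^ (k - 1) * μ) * (x i ^ (k - 1) * x j) := by
      rw [mul_pow]; ring
    rw [this, ← pow_succ]
    congr 2
    omega
  · simp

private lemma Sfun_zero (n k : ℕ) (hk : 2 ≤ k) (x : Fin n → ℂ) (a : Fin n)
    (h0 : ∀ i : Fin n, (i : ℕ) < (a : ℕ) → x i = 0) (ℓ : ℕ) (hℓ : ℓ < 2 * (a : ℕ) + 2) :
    Sfun n k x ℓ = 0 := by
  simp only [Sfun]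
  refine Finset.sum_eq_zero fun i _ => Finset.sum_eq_zero fun j _ => ?_
  split
  · rename_i hc
    obtain ⟨he, hij⟩ := hc
    have hij' : (i : ℕ) ≤ (j : ℕ) := hij
    have : (i : ℕ) < (a : ℕ) := by omega
    rw [h0 i this, zero_pow (by omega : k - 1 ≠ 0), zero_mul]
  · rfl

private lemma Sfun_diag (n k : ℕ) (hk : 2 ≤ k) (x : Fin n → ℂ) (a : Fin n)
    (h0 : ∀ i : Fin n, (i : ℕ) < (a : ℕ) → x i = 0) :
    Sfun n k x (2 * (a : ℕ) + 2) = x a ^ k := by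
  simp only [Sfun]
  rw [Finset.sum_eq_single a]
  · rw [Finset.sum_eq_single a]
    · rw [if_pos ⟨by omega, le_refl a⟩, ← pow_succ]
      congr 1
      omega
    · intro j _ hj
      rw [if_neg]
      rintro ⟨he, _⟩
      exact hj (Fin.ext (by omega))
    · intro habs; exact absurd (Finset.mem_univ a) habs
  · intro i _ hi
    refine Finset.sum_eq_zero fun j _ => ?_
    split
    · rename_i hc
      obtain ⟨he, hij⟩ := hc
      have hij' : (i : ℕ) ≤ (j : ℕ) := hij
      have hia : (i : ℕ) ≠ (a : ℕ) := fun hh => hi (Fin.ext hh)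
      have : (i : ℕ) < (a : ℕ) := by omega
      rw [h0 i this, zero_pow (by omega : k - 1 ≠ 0), zero_mul]
    · rfl
  · intro habs; exact absurd (Finset.mem_univ a) habs

private lemma Sfun_split (n k : ℕ) (hk : 2 ≤ k) (x : Fin n → ℂ) (a j : Fin n)
    (h0 : ∀ i : Fin n, (i : ℕ) < (a : ℕ) → x i = 0) (haj : (a : ℕ) < (j : ℕ)) :
    Sfun n k x ((a : ℕ) + 1 + ((j : ℕ) + 1)) =
      x a ^ (k - 1) * x j +
      ∑ i : Fin n, ∑ m : Fin n,
        if ((i : ℕ) + 1 + ((m : ℕ) + 1) = (a : ℕ) + 1 + ((j : ℕ) + 1) ∧ i ≤ m)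
            ∧ (a : ℕ) < (i : ℕ) then x i ^ (k - 1) * x m else 0 := by
  have hsplit : ∀ i m : Fin n,
      (if (i : ℕ) + 1 + ((m : ℕ) + 1) = (a : ℕ) + 1 + ((j : ℕ) + 1) ∧ i ≤ m
        then x i ^ (k - 1) * x m else 0)
    = (if ((i : ℕ) + 1 + ((m : ℕ) + 1) = (a : ℕ) + 1 + ((j : ℕ) + 1) ∧ i ≤ m)
          ∧ ¬ ((a : ℕ) < (i : ℕ)) then x i ^ (k - 1) * x m else 0)
    + (if ((i : ℕ) + 1 + ((m : ℕ) + 1) = (a : ℕ) + 1 + ((j : ℕ) + 1) ∧ i ≤ m)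
          ∧ (a : ℕ) < (i : ℕ) then x i ^ (k - 1) * x m else 0) := by
    intro i m
    by_cases hc : (i : ℕ) + 1 + ((m : ℕ) + 1) = (a : ℕ) + 1 + ((j : ℕ) + 1) ∧ i ≤ m
    · by_cases ha : (a : ℕ) < (i : ℕ) <;> simp [hc, ha]
    · simp [hc]
  simp only [Sfun, hsplit, Finset.sum_add_distrib]
  congr 1
  rw [Finset.sum_eq_single a]
  · rw [Finset.sum_eq_single j]
    · rw [if_pos ⟨⟨rfl, by rw [Fin.le_def]; omega⟩, by omega⟩]
    · intro m _ hm
      rw [if_neg]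
      rintro ⟨⟨he, _⟩, _⟩
      exact hm (Fin.ext (by omega))
    · intro habs; exact absurd (Finset.mem_univ j) habs
  · intro i _ hi
    refine Finset.sum_eq_zero fun m _ => ?_
    split
    · rename_i hc
      obtain ⟨⟨he, him⟩, hai⟩ := hc
      have hia : (i : ℕ) ≠ (a : ℕ) := fun hh => hi (Fin.ext hh)
      have : (i : ℕ) < (a : ℕ) := by omega
      rw [h0 i this, zero_pow (by omega : k - 1 ≠ 0), zero_mul]
    · rfl
  · intro habs; exact absurd (Finset.mem_univ a) habs

/-- The morphism `ψ : ℙ^{n-1} → ℙ^{2(n-1)}` whose `ℓ`-th coordinate (for `ℓ = 2,…,2n`)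
is `∑_{i+j=ℓ, i ≤ j} x_i^{k-1} x_j` is injective, for every `k ≥ 2`. -/
theorem stmt2 (n k : ℕ) (hn : 1 ≤ n) (hk : 2 ≤ k)
    (x x' : Fin n → ℂ) (hx : x ≠ 0) (hx' : x' ≠ 0) (lam : ℂ) (hlam : lam ≠ 0)
    (h : ∀ ℓ : ℕ, 2 ≤ ℓ → ℓ ≤ 2 * n →
      (∑ i : Fin n, ∑ j : Fin n,
        if (i : ℕ) + 1 + ((j : ℕ) + 1) = ℓ ∧ i ≤ j then x i ^ (k - 1) * x j else 0)
      = lam ^ k * ∑ i : Fin n, ∑ j : Fin n,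
        if (i : ℕ) + 1 + ((j : ℕ) + 1) = ℓ ∧ i ≤ j then x' i ^ (k - 1) * x' j else 0) :
    ∃ μ : ℂ, μ ≠ 0 ∧ x = μ • x' := by
  have hS : ∀ ℓ : ℕ, 2 ≤ ℓ → ℓ ≤ 2 * n →
      Sfun n k x ℓ = lam ^ k * Sfun n k x' ℓ := by
    intro ℓ h1 h2
    simpa only [Sfun] using h ℓ h1 h2
  -- minimal nonzero index of x
  obtain ⟨a, hamem, hamin⟩ := Finset.exists_min_image
    (Finset.univ.filter fun i => x i ≠ 0) (fun i => (i : ℕ))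
    (by
      obtain ⟨i0, hi0⟩ := Function.ne_iff.mp hx
      simp only [Pi.zero_apply] at hi0
      exact ⟨i0, by simp [hi0]⟩)
  have hxa : x a ≠ 0 := by simpa using hamem
  have h0 : ∀ i : Fin n, (i : ℕ) < (a : ℕ) → x i = 0 := by
    intro i hi
    by_contra hne
    have := hamin i (by simp [hne])
    omega
  obtain ⟨a', hamem', hamin'⟩ := Finset.exists_min_image
    (Finset.univ.filter fun i => x' i ≠ 0) (fun i => (i : ℕ))
    (by
      obtain ⟨i0, hi0⟩ := Function.ne_iff.mp hx'
      simp only [Pi.zero_apply] at hi0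
      exact ⟨i0, by simp [hi0]⟩)
  have hxa' : x' a' ≠ 0 := by simpa using hamem'
  have h0' : ∀ i : Fin n, (i : ℕ) < (a' : ℕ) → x' i = 0 := by
    intro i hi
    by_contra hne
    have := hamin' i (by simp [hne])
    omega
  -- the minimal indices coincide
  have hval : (a : ℕ) = (a' : ℕ) := by
    by_contra hne
    rcases Nat.lt_or_ge (a : ℕ) (a' : ℕ) with hlt | hge
    · have he := hS (2 * (a : ℕ) + 2) (by omega) (by have := a.isLt; omega)
      rw [Sfun_diag n k hk x a h0,
        Sfun_zero n k hk x' a' h0' _ (by omega), mul_zero] at he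
      exact pow_ne_zero k hxa he
    · have hlt' : (a' : ℕ) < (a : ℕ) := by omega
      have he := hS (2 * (a' : ℕ) + 2) (by omega) (by have := a'.isLt; omega)
      rw [Sfun_diag n k hk x' a' h0',
        Sfun_zero n k hk x a h0 _ (by omega)] at he
      exact mul_ne_zero (pow_ne_zero k hlam) (pow_ne_zero k hxa') he.symm
  have haa' : a = a' := Fin.ext hval
  subst haa'
  -- define μ
  set μ : ℂ := x a / x' a with hμdef
  have hμ : μ ≠ 0 := div_ne_zero hxa hxa'
  have hxa_eq : x a = μ * x' a := (div_mul_cancel₀ _ hxa').symm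
  have hμk : μ ^ k = lam ^ k := by
    have he := hS (2 * (a : ℕ) + 2) (by omega) (by have := a.isLt; omega)
    rw [Sfun_diag n k hk x a h0, Sfun_diag n k hk x' a h0'] at he
    rw [hμdef, div_pow, he, mul_div_cancel_right₀ _ (pow_ne_zero k hxa')]
  set y : Fin n → ℂ := μ • x' with hydef
  have hy0 : ∀ i : Fin n, (i : ℕ) < (a : ℕ) → y i = 0 := by
    intro i hi; simp [hydef, h0' i hi]
  have hya : y a = x a := by
    simp only [hydef, Pi.smul_apply, smul_eq_mul]
    exact hxa_eq.symm
  have hSy : ∀ ℓ : ℕ, 2 ≤ ℓ → ℓ ≤ 2 * n → Sfun n k x ℓ = Sfun n k y ℓ := by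
    intro ℓ h1 h2
    rw [hydef, Sfun_smul n k (by omega) μ x' ℓ, hμk]
    exact hS ℓ h1 h2
  have key : ∀ N : ℕ, ∀ j : Fin n, (j : ℕ) = N → x j = y j := by
    intro N
    induction N using Nat.strong_induction_on with
    | _ N IH =>
      intro j hjN
      rcases lt_trichotomy ((j : ℕ)) ((a : ℕ)) with hlt | heq | hgt
      · rw [h0 j hlt, hy0 j hlt]
      · have hja : j = a := Fin.ext heq
        rw [hja, hya]
      · have hIH : ∀ m : Fin n, (m : ℕ) < (j : ℕ) → x m = y m := by
          intro m hm
          exact IH (m : ℕ) (by omega) m rfl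
        have hℓ2 : 2 ≤ (a : ℕ) + 1 + ((j : ℕ) + 1) := by omega
        have hℓn : (a : ℕ) + 1 + ((j : ℕ) + 1) ≤ 2 * n := by
          have := a.isLt; have := j.isLt; omega
        have e1 := Sfun_split n k hk x a j h0 hgt
        have e2 := Sfun_split n k hk y a j hy0 hgt
        have eT : (∑ i : Fin n, ∑ m : Fin n,
            if ((i : ℕ) + 1 + ((m : ℕ) + 1) = (a : ℕ) + 1 + ((j : ℕ) + 1) ∧ i ≤ m)
              ∧ (a : ℕ) < (i : ℕ) then x i ^ (k - 1) * x m else 0)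
          = ∑ i : Fin n, ∑ m : Fin n,
            if ((i : ℕ) + 1 + ((m : ℕ) + 1) = (a : ℕ) + 1 + ((j : ℕ) + 1) ∧ i ≤ m)
              ∧ (a : ℕ) < (i : ℕ) then y i ^ (k - 1) * y m else 0 := by
          refine Finset.sum_congr rfl fun i _ => Finset.sum_congr rfl fun m _ => ?_
          split
          · rename_i hc
            obtain ⟨⟨he, him⟩, hai⟩ := hc
            have him' : (i : ℕ) ≤ (m : ℕ) := him
            have hm : (m : ℕ) < (j : ℕ) := by omega
            have hi : (i : ℕ) < (j : ℕ) := by omega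
            rw [hIH i hi, hIH m hm]
          · rfl
        have heq := hSy _ hℓ2 hℓn
        rw [e1, e2, eT, hya] at heq
        have : x a ^ (k - 1) * x j = x a ^ (k - 1) * y j := by
          exact add_right_cancel heq
        exact mul_left_cancel₀ (pow_ne_zero _ hxa) this
  exact ⟨μ, hμ, funext fun j => key (j : ℕ) j rfl⟩
end

section
/- The map ℙ¹ × ℙ¹ → ℙ³ sending [x₀:x₁] × [y₀:y₁] to [x₀y₀² : x₁y₀² + 2x₀y₀y₁ : 2x₁y₀y₁ + x₀y₁² : x₁y₁²] is injective. -/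
/-- The map `ℙ¹ × ℙ¹ → ℙ³`,
`[x₀:x₁] × [y₀:y₁] ↦ [x₀y₀² : x₁y₀² + 2x₀y₀y₁ : 2x₁y₀y₁ + x₀y₁² : x₁y₁²]` is injective. -/
theorem stmt3 (x₀ x₁ y₀ y₁ x₀' x₁' y₀' y₁' : ℂ)
    (hx : (x₀, x₁) ≠ 0) (hy : (y₀, y₁) ≠ 0) (hx' : (x₀', x₁') ≠ 0) (hy' : (y₀', y₁') ≠ 0)
    (lam : ℂ) (hlam : lam ≠ 0)
    (h1 : x₀ * y₀ ^ 2 = lam * (x₀' * y₀' ^ 2))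
    (h2 : x₁ * y₀ ^ 2 + 2 * x₀ * y₀ * y₁ = lam * (x₁' * y₀' ^ 2 + 2 * x₀' * y₀' * y₁'))
    (h3 : 2 * x₁ * y₀ * y₁ + x₀ * y₁ ^ 2 = lam * (2 * x₁' * y₀' * y₁' + x₀' * y₁' ^ 2))
    (h4 : x₁ * y₁ ^ 2 = lam * (x₁' * y₁' ^ 2)) :
    (∃ μ : ℂ, μ ≠ 0 ∧ x₀ = μ * x₀' ∧ x₁ = μ * x₁') ∧
    (∃ ν : ℂ, ν ≠ 0 ∧ y₀ = ν * y₀' ∧ y₁ = ν * y₁') := by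
  rw [Ne, Prod.mk_eq_zero, not_and_or] at hx hy hx' hy'
  by_cases hy0 : y₀ = 0
  · -- then y₁ ≠ 0 and y₀' = 0, y₁' ≠ 0
    have hy1 : y₁ ≠ 0 := by tauto
    have hy0' : y₀' = 0 := by
      by_contra hy0'
      have e1 : x₀' * y₀' ^ 2 = 0 := by
        have h : lam * (x₀' * y₀' ^ 2) = 0 := by rw [← h1, hy0]; ring
        exact (mul_eq_zero.mp h).resolve_left hlam
      have hx0' : x₀' = 0 :=
        (mul_eq_zero.mp e1).resolve_right (pow_ne_zero _ hy0')
      have e2 : x₁' * y₀' ^ 2 = 0 := by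
        have h : lam * (x₁' * y₀' ^ 2) = 0 := by
          linear_combination -h2 + (x₁*y₀ + 2*x₀*y₁)*hy0 - 2*lam*y₀'*y₁'*hx0'
        exact (mul_eq_zero.mp h).resolve_left hlam
      have hx1' : x₁' = 0 :=
        (mul_eq_zero.mp e2).resolve_right (pow_ne_zero _ hy0')
      tauto
    have hy1' : y₁' ≠ 0 := by tauto
    subst hy0 hy0'
    refine ⟨⟨lam * y₁'^2 / y₁^2, ?_, ?_, ?_⟩, ⟨y₁/y₁', div_ne_zero hy1 hy1', by simp, by field_simp⟩⟩
    · exact div_ne_zero (mul_ne_zero hlam (pow_ne_zero _ hy1')) (pow_ne_zero _ hy1)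
    · field_simp
      linear_combination h3
    · field_simp
      linear_combination h4
  · -- y₀ ≠ 0, show y₀' ≠ 0
    have hy0' : y₀' ≠ 0 := by
      intro hy0'
      have hx0 : x₀ = 0 := by
        have : x₀ * y₀ ^ 2 = 0 := by rw [h1, hy0']; ring
        exact (mul_eq_zero.mp this).resolve_right (pow_ne_zero _ hy0)
      have hx1 : x₁ = 0 := by
        have : x₁ * y₀ ^ 2 = 0 := by
          have := h2; rw [hy0', hx0] at this
          linear_combination this
        exact (mul_eq_zero.mp this).resolve_right (pow_ne_zero _ hy0)
      tauto
    have K1 : (y₁*y₀' - y₁'*y₀) * (2*x₁*y₀*y₀' + x₀*(y₁*y₀' - 3*y₁'*y₀)) = 0 := by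
      linear_combination y₀'^2*h3 - 2*y₁'*y₀'*h2 + 3*y₁'^2*h1
    have K2 : (y₁*y₀' - y₁'*y₀) * (x₁*(y₁*y₀' + y₁'*y₀)*y₀' - 2*x₀*y₁'^2*y₀) = 0 := by
      linear_combination y₀'^3*h4 - y₁'^2*y₀'*h2 + 2*y₁'^3*h1
    have hd0 : y₁*y₀' - y₁'*y₀ = 0 := by
      by_contra hd
      have A : 2*x₁*y₀*y₀' + x₀*(y₁*y₀' - 3*y₁'*y₀) = 0 := (mul_eq_zero.mp K1).resolve_left hd
      have B : x₁*(y₁*y₀' + y₁'*y₀)*y₀' - 2*x₀*y₁'^2*y₀ = 0 := (mul_eq_zero.mp K2).resolve_left hd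
      have hx0d : x₀ * (y₁*y₀' - y₁'*y₀)^2 = 0 := by
        linear_combination (y₁*y₀' + y₁'*y₀)*A - 2*y₀*B
      have hx0 : x₀ = 0 :=
        (mul_eq_zero.mp hx0d).resolve_right (pow_ne_zero _ (sub_ne_zero.mpr (by
          intro h; exact hd (by rw [h]; ring))))
      have hx1 : x₁ = 0 := by
        have : x₁ * (y₀ * y₀') = 0 := by linear_combination A/2 - (y₁*y₀' - 3*y₁'*y₀)/2 * hx0
        exact (mul_eq_zero.mp this).resolve_right (mul_ne_zero hy0 hy0')
      tauto
    have hx1eq : x₁ * y₀^2 = lam * x₁' * y₀'^2 := by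
      apply mul_right_cancel₀ hy0'
      linear_combination y₀'*h2 - 2*y₁'*h1 - 2*x₀*y₀*hd0
    refine ⟨⟨lam * y₀'^2 / y₀^2, ?_, ?_, ?_⟩, ⟨y₀/y₀', div_ne_zero hy0 hy0', by field_simp, ?_⟩⟩
    · exact div_ne_zero (mul_ne_zero hlam (pow_ne_zero _ hy0')) (pow_ne_zero _ hy0)
    · field_simp
      linear_combination h1
    · field_simp
      linear_combination hx1eq
    · field_simp
      linear_combination hd0
end

section
/- For each d ≥ 3, the map ℙ¹ × ℙ¹ → ℙ⁴ sending [x₀:x₁] × [y₀:y₁] to [x₀y₀^d : d·x₀y₀^{d-1}y₁ + x₁y₀^d : C(d,2)·x₀y₀^{d-2}y₁² + d·x₁y₀^{d-1}y₁ : x₀y₁^d + d·x₁y₀y₁^{d-1} : x₁y₁^d] is injective. -/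
private lemma lam_cancel4 {lam A : ℂ} (hlam : lam ≠ 0) (h : lam * A = 0) : A = 0 :=
  (mul_eq_zero.mp h).resolve_left hlam

private lemma aux_key4 (k : ℕ) : ((k:ℂ)+1) ≠ 0 := Nat.cast_add_one_ne_zero k

private lemma aux_core4 (e : ℕ) (s t s' t' : ℂ) (ht' : t' ≠ 0)
    (e1 : ((e:ℂ)+3)*t + s = ((e:ℂ)+3)*t' + s')
    (e2 : ((e:ℂ)+3)*((e:ℂ)+2)*t^2 + 2*((e:ℂ)+3)*s*t
        = ((e:ℂ)+3)*((e:ℂ)+2)*t'^2 + 2*((e:ℂ)+3)*s'*t')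
    (e3 : t^(e+3) + ((e:ℂ)+3)*s*t^(e+2) = t'^(e+3) + ((e:ℂ)+3)*s'*t'^(e+2))
    (e4 : s*t^(e+3) = s'*t'^(e+3)) : t = t' ∧ s = s' := by
  set D : ℂ := (e:ℂ)+3 with hD
  have hD0 : D ≠ 0 := by
    simp only [hD]; intro h; apply aux_key4 (e+2); push_cast; linear_combination h
  have hD1 : D + 1 ≠ 0 := by
    simp only [hD]; intro h; apply aux_key4 (e+3); push_cast; linear_combination h
  have hDm1 : D - 1 ≠ 0 := by
    simp only [hD]; intro h; apply aux_key4 (e+1); push_cast; linear_combination h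
  have hDm2 : D - 2 ≠ 0 := by
    simp only [hD]; intro h; apply aux_key4 e; push_cast; linear_combination h
  by_cases hne : t = t'
  · subst hne
    exact ⟨rfl, by linear_combination e1⟩
  · exfalso
    have hsub : t - t' ≠ 0 := sub_ne_zero.mpr hne
    have g0 : (t - t') * (D*(D-1)*(t+t') + 2*D*s - 2*D^2*t') = 0 := by
      linear_combination e2 - 2*D*t'*e1
    have f1 : D*(D-1)*(t+t') + 2*D*s - 2*D^2*t' = 0 :=
      (mul_eq_zero.mp g0).resolve_left hsub
    have f2 : D*(D-1)*(t+t') + 2*D*s' - 2*D^2*t = 0 := by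
      linear_combination f1 - 2*D*e1
    have g1 : 2*s = (D+1)*t' - (D-1)*t := by
      apply mul_left_cancel₀ hD0; linear_combination f1
    have g2 : 2*s' = (D+1)*t - (D-1)*t' := by
      apply mul_left_cancel₀ hD0; linear_combination f2
    have hP : ((D+1)*t' - (D-1)*t) * t^(e+3) = ((D+1)*t - (D-1)*t') * t'^(e+3) := by
      linear_combination 2*e4 - t^(e+3)*g1 + t'^(e+3)*g2
    have hQ : t^(e+2)*(D*t' - (D-2)*t) = t'^(e+2)*(D*t - (D-2)*t') := by
      apply mul_left_cancel₀ hD1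
      linear_combination 2*e3 - D*t^(e+2)*g1 + D*t'^(e+2)*g2
    have hR : 2*t^(e+3)*t' = (D*(D-1)*t^2 - 2*D*(D-2)*t*t' + (D-2)*(D-1)*t'^2) * t'^(e+2) := by
      linear_combination ((D-1)*t)*hQ - (D-2)*hP
    have hC : t'^(e+2) * (D*(D-1)*(D-2)*(t-t')^3) = 0 := by
      linear_combination (-2*t*t')*hQ - ((D-2)*t - D*t')*hR
    have h3 : (t-t')^3 = 0 := by
      have h' := (mul_eq_zero.mp hC).resolve_left (pow_ne_zero _ ht')
      rcases mul_eq_zero.mp h' with h | h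
      · exact absurd h (mul_ne_zero (mul_ne_zero hD0 hDm1) hDm2)
      · exact h
    exact hsub (pow_eq_zero_iff three_ne_zero |>.mp h3)

/-- For `d ≥ 3`, the map `ℙ¹ × ℙ¹ → ℙ⁴` given by
`[x₀y₀^d : d·x₀y₀^{d-1}y₁ + x₁y₀^d : C(d,2)·x₀y₀^{d-2}y₁² + d·x₁y₀^{d-1}y₁ :
  x₀y₁^d + d·x₁y₀y₁^{d-1} : x₁y₁^d]` is injective. -/
theorem stmt4 (d : ℕ) (hd : 3 ≤ d) (x₀ x₁ y₀ y₁ x₀' x₁' y₀' y₁' : ℂ)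
    (hx : (x₀, x₁) ≠ 0) (hy : (y₀, y₁) ≠ 0) (hx' : (x₀', x₁') ≠ 0) (hy' : (y₀', y₁') ≠ 0)
    (lam : ℂ) (hlam : lam ≠ 0)
    (h1 : x₀ * y₀ ^ d = lam * (x₀' * y₀' ^ d))
    (h2 : d * x₀ * y₀ ^ (d - 1) * y₁ + x₁ * y₀ ^ d
        = lam * ((d : ℂ) * x₀' * y₀' ^ (d - 1) * y₁' + x₁' * y₀' ^ d))
    (h3 : (d.choose 2 : ℂ) * x₀ * y₀ ^ (d - 2) * y₁ ^ 2 + d * x₁ * y₀ ^ (d - 1) * y₁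
        = lam * ((d.choose 2 : ℂ) * x₀' * y₀' ^ (d - 2) * y₁' ^ 2
            + (d : ℂ) * x₁' * y₀' ^ (d - 1) * y₁'))
    (h4 : x₀ * y₁ ^ d + d * x₁ * y₀ * y₁ ^ (d - 1)
        = lam * (x₀' * y₁' ^ d + (d : ℂ) * x₁' * y₀' * y₁' ^ (d - 1)))
    (h5 : x₁ * y₁ ^ d = lam * (x₁' * y₁' ^ d)) :
    (∃ μ : ℂ, μ ≠ 0 ∧ x₀ = μ * x₀' ∧ x₁ = μ * x₁') ∧
    (∃ ν : ℂ, ν ≠ 0 ∧ y₀ = ν * y₀' ∧ y₁ = ν * y₁') := by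
  obtain ⟨e, rfl⟩ : ∃ e, d = e + 3 := ⟨d - 3, by omega⟩
  push_cast at h1 h2 h3 h4 h5
  have hx2 : ¬(x₀ = 0 ∧ x₁ = 0) := by simpa [Prod.ext_iff] using hx
  have hy2 : ¬(y₀ = 0 ∧ y₁ = 0) := by simpa [Prod.ext_iff] using hy
  have hx2' : ¬(x₀' = 0 ∧ x₁' = 0) := by simpa [Prod.ext_iff] using hx'
  have hy2' : ¬(y₀' = 0 ∧ y₁' = 0) := by simpa [Prod.ext_iff] using hy'
  have hchoose : 2 * (((e+3).choose 2 : ℕ) : ℂ) = ((e:ℂ)+3)*((e:ℂ)+2) := by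
    have h : 2 * ((e+3).choose 2) = (e+3)*(e+2) := by
      rw [Nat.choose_two_right]
      exact Nat.mul_div_cancel' (by rw [Nat.mul_comm]; exact (Nat.even_mul_succ_self (e+2)).two_dvd)
    exact_mod_cast congrArg (Nat.cast : ℕ → ℂ) h
  have hD0 : ((e:ℂ)+3) ≠ 0 := by
    intro h; apply aux_key4 (e+2); push_cast; linear_combination h
  by_cases hy1 : y₁ = 0
  · -- Branch A : y₁ = 0, y₀ ≠ 0
    have hy0 : y₀ ≠ 0 := fun h => hy2 ⟨h, hy1⟩
    have hy1' : y₁' = 0 := by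
      by_contra hy1'
      have hz2 : x₁' * y₁'^(e+3) = 0 := by
        refine lam_cancel4 hlam ?_
        linear_combination -h5 + (x₁*y₁^(e+2))*hy1
      have hx1' : x₁' = 0 := (mul_eq_zero.mp hz2).resolve_right (pow_ne_zero _ hy1')
      have hx0' : x₀' ≠ 0 := fun h => hx2' ⟨h, hx1'⟩
      have hz3 : x₀' * y₁'^(e+3) = 0 := by
        refine lam_cancel4 hlam ?_
        linear_combination -h4 + (x₀*y₁^(e+2) + ((e:ℂ)+3)*x₁*y₀*y₁^(e+1))*hy1
          - lam*((e:ℂ)+3)*y₀'*y₁'^(e+2)*hx1'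
      exact hx0' ((mul_eq_zero.mp hz3).resolve_right (pow_ne_zero _ hy1'))
    have hy0' : y₀' ≠ 0 := fun h => hy2' ⟨h, hy1'⟩
    have h2' : x₁ * y₀^(e+3) = lam * (x₁' * y₀'^(e+3)) := by
      linear_combination h2 - (((e:ℂ)+3)*x₀*y₀^(e+2))*hy1 + (lam*((e:ℂ)+3)*x₀'*y₀'^(e+2))*hy1'
    refine ⟨⟨lam * y₀'^(e+3) / y₀^(e+3), ?_, ?_, ?_⟩, ⟨y₀/y₀', ?_, ?_, ?_⟩⟩
    · exact div_ne_zero (mul_ne_zero hlam (pow_ne_zero _ hy0')) (pow_ne_zero _ hy0)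
    · field_simp
      linear_combination h1
    · field_simp
      linear_combination h2'
    · exact div_ne_zero hy0 hy0'
    · field_simp
    · rw [hy1, hy1', mul_zero]
  by_cases hy0 : y₀ = 0
  · -- Branch B : y₀ = 0, y₁ ≠ 0
    have hy0' : y₀' = 0 := by
      by_contra hy0'
      have hz2 : x₀' * y₀'^(e+3) = 0 := by
        refine lam_cancel4 hlam ?_
        linear_combination -h1 + (x₀*y₀^(e+2))*hy0
      have hx0' : x₀' = 0 := (mul_eq_zero.mp hz2).resolve_right (pow_ne_zero _ hy0')
      have hx1' : x₁' ≠ 0 := fun h => hx2' ⟨hx0', h⟩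
      have hz3 : x₁' * y₀'^(e+3) = 0 := by
        refine lam_cancel4 hlam ?_
        linear_combination -h2 + (((e:ℂ)+3)*x₀*y₀^(e+1)*y₁ + x₁*y₀^(e+2))*hy0
          - lam*((e:ℂ)+3)*y₀'^(e+2)*y₁'*hx0'
      exact hx1' ((mul_eq_zero.mp hz3).resolve_right (pow_ne_zero _ hy0'))
    have hy1' : y₁' ≠ 0 := fun h => hy2' ⟨hy0', h⟩
    have h4' : x₀ * y₁^(e+3) = lam * (x₀' * y₁'^(e+3)) := by
      linear_combination h4 - (((e:ℂ)+3)*x₁*y₁^(e+2))*hy0 + (lam*((e:ℂ)+3)*x₁'*y₁'^(e+2))*hy0'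
    refine ⟨⟨lam * y₁'^(e+3) / y₁^(e+3), ?_, ?_, ?_⟩, ⟨y₁/y₁', ?_, ?_, ?_⟩⟩
    · exact div_ne_zero (mul_ne_zero hlam (pow_ne_zero _ hy1')) (pow_ne_zero _ hy1)
    · field_simp
      linear_combination h4'
    · field_simp
      linear_combination h5
    · exact div_ne_zero hy1 hy1'
    · rw [hy0, hy0', mul_zero]
    · field_simp
  -- Now y₀ ≠ 0, y₁ ≠ 0
  have hy1'n : y₁' ≠ 0 := by
    intro hy1'
    have hx1z : x₁ = 0 := by
      have h : x₁ * y₁^(e+3) = 0 := by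
        rw [h5, hy1']; ring
      exact (mul_eq_zero.mp h).resolve_right (pow_ne_zero _ hy1)
    have hx0z : x₀ = 0 := by
      have h : x₀ * y₁^(e+3) = 0 := by
        linear_combination h4 - ((e:ℂ)+3)*y₀*y₁^(e+2)*hx1z
          + (lam*x₀'*y₁'^(e+2) + lam*((e:ℂ)+3)*x₁'*y₀'*y₁'^(e+1))*hy1'
      exact (mul_eq_zero.mp h).resolve_right (pow_ne_zero _ hy1)
    exact hx2 ⟨hx0z, hx1z⟩
  have hy0'n : y₀' ≠ 0 := by
    intro hy0'
    have hx0z : x₀ = 0 := by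
      have h : x₀ * y₀^(e+3) = 0 := by
        linear_combination h1 + lam*x₀'*y₀'^(e+2)*hy0'
      exact (mul_eq_zero.mp h).resolve_right (pow_ne_zero _ hy0)
    have hx1z : x₁ = 0 := by
      have h : x₁ * y₀^(e+3) = 0 := by
        linear_combination h2 - ((e:ℂ)+3)*y₀^(e+2)*y₁*hx0z
          + (lam*((e:ℂ)+3)*x₀'*y₀'^(e+1)*y₁' + lam*x₁'*y₀'^(e+2))*hy0'
      exact (mul_eq_zero.mp h).resolve_right (pow_ne_zero _ hy0)
    exact hx2 ⟨hx0z, hx1z⟩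
  by_cases hx0 : x₀ = 0
  · -- Branch C : x₀ = 0
    have hx1n : x₁ ≠ 0 := fun h => hx2 ⟨hx0, h⟩
    have hx0' : x₀' = 0 := by
      have h : x₀' * y₀'^(e+3) = 0 := by
        refine lam_cancel4 hlam ?_
        linear_combination -h1 + y₀^(e+3)*hx0
      exact (mul_eq_zero.mp h).resolve_right (pow_ne_zero _ hy0'n)
    have hx1'n : x₁' ≠ 0 := fun h => hx2' ⟨hx0', h⟩
    subst hx0
    subst hx0'
    simp only [mul_zero, zero_mul, zero_add, add_zero] at h2 h3
    have key : ((((e:ℂ)+3))*x₁*x₁'*y₀^(e+2)*y₀'^(e+2)) * (y₁*y₀' - y₀*y₁') = 0 := by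
      linear_combination (x₁'*y₀'^(e+3))*h3 - (((e:ℂ)+3)*x₁'*y₀'^(e+2)*y₁')*h2
    have hyy : y₁*y₀' - y₀*y₁' = 0 := by
      refine (mul_eq_zero.mp key).resolve_left ?_
      exact mul_ne_zero (mul_ne_zero (mul_ne_zero
        (mul_ne_zero hD0 hx1n) hx1'n) (pow_ne_zero _ hy0)) (pow_ne_zero _ hy0'n)
    refine ⟨⟨x₁/x₁', div_ne_zero hx1n hx1'n, by simp, by field_simp⟩,
            ⟨y₀/y₀', div_ne_zero hy0 hy0'n, by field_simp, ?_⟩⟩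
    field_simp
    linear_combination hyy
  -- Branch D : main case
  have hx0'n : x₀' ≠ 0 := by
    intro h
    apply hx0
    have hz : x₀ * y₀^(e+3) = 0 := by rw [h1, h]; ring
    exact (mul_eq_zero.mp hz).resolve_right (pow_ne_zero _ hy0)
  obtain ⟨s, hs⟩ : ∃ s, x₁ = s*x₀ := ⟨x₁/x₀, by field_simp⟩
  obtain ⟨t, ht⟩ : ∃ t, y₁ = t*y₀ := ⟨y₁/y₀, by field_simp⟩
  obtain ⟨s', hs'⟩ : ∃ s, x₁' = s*x₀' := ⟨x₁'/x₀', by field_simp⟩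
  obtain ⟨t', ht'⟩ : ∃ t, y₁' = t*y₀' := ⟨y₁'/y₀', by field_simp⟩
  have ht'n : t' ≠ 0 := by
    intro h; rw [h, zero_mul] at ht'; exact hy1'n ht'
  rw [hs, ht, hs', ht'] at h2 h3 h4 h5
  have hM : ((x₀*x₀')*(y₀^(e+3)*y₀'^(e+3))) ≠ 0 :=
    mul_ne_zero (mul_ne_zero hx0 hx0'n)
      (mul_ne_zero (pow_ne_zero _ hy0) (pow_ne_zero _ hy0'n))
  have e1 : ((e:ℂ)+3)*t + s = ((e:ℂ)+3)*t' + s' := by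
    apply mul_left_cancel₀ hM
    linear_combination (x₀'*y₀'^(e+3))*h2
      - (((e:ℂ)+3)*x₀'*y₀'^(e+2)*(t'*y₀') + s'*x₀'*y₀'^(e+3))*h1
  have e2 : ((e:ℂ)+3)*((e:ℂ)+2)*t^2 + 2*((e:ℂ)+3)*s*t
      = ((e:ℂ)+3)*((e:ℂ)+2)*t'^2 + 2*((e:ℂ)+3)*s'*t' := by
    apply mul_left_cancel₀ hM
    linear_combination (2*x₀'*y₀'^(e+3))*h3
      - 2*((((e+3).choose 2 : ℕ):ℂ)*x₀'*y₀'^(e+1)*(t'*y₀')^2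
          + ((e:ℂ)+3)*s'*x₀'*y₀'^(e+2)*(t'*y₀'))*h1
      - ((x₀*x₀')*(y₀^(e+3)*y₀'^(e+3))*(t^2 - t'^2))*hchoose
  have e3 : t^(e+3) + ((e:ℂ)+3)*s*t^(e+2) = t'^(e+3) + ((e:ℂ)+3)*s'*t'^(e+2) := by
    apply mul_left_cancel₀ hM
    linear_combination (x₀'*y₀'^(e+3))*h4
      - (x₀'*y₀'^(e+3)*(t'^(e+3) + ((e:ℂ)+3)*s'*t'^(e+2)))*h1
  have e4 : s*t^(e+3) = s'*t'^(e+3) := by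
    apply mul_left_cancel₀ hM
    linear_combination (x₀'*y₀'^(e+3))*h5 - (x₀'*y₀'^(e+3)*s'*t'^(e+3))*h1
  obtain ⟨htt, hss⟩ := aux_core4 e s t s' t' ht'n e1 e2 e3 e4
  subst htt hss
  refine ⟨⟨x₀/x₀', div_ne_zero hx0 hx0'n, by field_simp, ?_⟩,
          ⟨y₀/y₀', div_ne_zero hy0 hy0'n, by field_simp, ?_⟩⟩
  · rw [hs, hs']; field_simp
  · rw [ht, ht']; field_simp
end

section
/- For all n, d ≥ 1, the map ℙ¹ × ℙⁿ → ℙ^{2(n+1)} sending [x₀:x₁]×[y₀:⋯:y_n] to [x₀^d y₀ : ⋯ : x₀^d y_n : x₁^d y_n : d x₀ x₁^{d-1} y₀ : x₁^d y₀ + d x₀ x₁^{d-1} y₁ : ⋯ : x₁^d y_{n-1} + d x₀ x₁^{d-1} y_n] is injective. -/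
/-- For `n, d ≥ 1`, the map `ℙ¹ × ℙⁿ → ℙ^{2(n+1)}` sending `[x₀:x₁] × [y₀:⋯:y_n]` to
`[x₀^d y₀ : ⋯ : x₀^d y_n : x₁^d y_n : d x₀x₁^{d-1}y₀ :
  x₁^d y₀ + d x₀x₁^{d-1}y₁ : ⋯ : x₁^d y_{n-1} + d x₀x₁^{d-1}y_n]` is injective. -/
theorem stmt5 (n d : ℕ) (hn : 1 ≤ n) (hd : 1 ≤ d)
    (x₀ x₁ x₀' x₁' : ℂ) (y y' : Fin (n + 1) → ℂ)
    (hx : (x₀, x₁) ≠ 0) (hy : y ≠ 0) (hx' : (x₀', x₁') ≠ 0) (hy' : y' ≠ 0)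
    (lam : ℂ) (hlam : lam ≠ 0)
    (h1 : ∀ i : Fin (n + 1), x₀ ^ d * y i = lam * (x₀' ^ d * y' i))
    (h2 : x₁ ^ d * y (Fin.last n) = lam * (x₁' ^ d * y' (Fin.last n)))
    (h3 : (d : ℂ) * x₀ * x₁ ^ (d - 1) * y 0 = lam * ((d : ℂ) * x₀' * x₁' ^ (d - 1) * y' 0))
    (h4 : ∀ i : Fin n,
      x₁ ^ d * y i.castSucc + (d : ℂ) * x₀ * x₁ ^ (d - 1) * y i.succ
        = lam * (x₁' ^ d * y' i.castSucc + (d : ℂ) * x₀' * x₁' ^ (d - 1) * y' i.succ)) :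
    (∃ μ : ℂ, μ ≠ 0 ∧ x₀ = μ * x₀' ∧ x₁ = μ * x₁') ∧
    (∃ ν : ℂ, ν ≠ 0 ∧ y = ν • y') := by
  obtain ⟨e, rfl⟩ : ∃ e, d = e + 1 := ⟨d - 1, (Nat.succ_pred_eq_of_pos hd).symm⟩
  simp only [Nat.add_sub_cancel] at h3 h4
  have hdC : ((e : ℂ) + 1) ≠ 0 := by
    intro h
    have := congrArg Complex.re h
    simp at this
    nlinarith [this, Nat.cast_nonneg (α := ℝ) e]
  have hdC' : ((e + 1 : ℕ) : ℂ) = (e : ℂ) + 1 := by push_cast; ring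
  rw [hdC'] at h3
  simp only [hdC'] at h4
  obtain ⟨j0, hj0⟩ : ∃ j, y j ≠ 0 := Function.ne_iff.mp hy
  by_cases hx0 : x₀ = 0
  · -- case x₀ = 0
    have hx1 : x₁ ≠ 0 := by
      intro h; exact hx (by simp [Prod.ext_iff, hx0, h])
    have hx0' : x₀' = 0 := by
      by_contra hc
      apply hy'
      funext i
      have h := h1 i
      rw [hx0, zero_pow (by omega), zero_mul] at h
      have := (mul_eq_zero.mp h.symm).resolve_left hlam
      simpa using (mul_eq_zero.mp this).resolve_left (pow_ne_zero _ hc)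
    have hx1' : x₁' ≠ 0 := by
      intro h; exact hx' (by simp [Prod.ext_iff, hx0', h])
    have key : ∀ j : Fin (n + 1), x₁ ^ (e + 1) * y j = lam * (x₁' ^ (e + 1) * y' j) := by
      intro j
      induction j using Fin.lastCases with
      | last => exact h2
      | cast i =>
        have h := h4 i
        rw [hx0, hx0'] at h
        linear_combination h
    constructor
    · refine ⟨x₁ / x₁', div_ne_zero hx1 hx1', by rw [hx0, hx0', mul_zero], by field_simp⟩
    · refine ⟨lam * x₁' ^ (e + 1) / x₁ ^ (e + 1),
        div_ne_zero (mul_ne_zero hlam (pow_ne_zero _ hx1')) (pow_ne_zero _ hx1), ?_⟩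
      funext j
      rw [Pi.smul_apply, smul_eq_mul]
      field_simp
      linear_combination key j
  · -- case x₀ ≠ 0
    have hA0 : lam * (x₀' ^ (e + 1) * y' j0) ≠ 0 :=
      h1 j0 ▸ mul_ne_zero (pow_ne_zero _ hx0) hj0
    have hx0' : x₀' ≠ 0 := by
      intro h; exact hA0 (by simp [h])
    have hy0' : y' j0 ≠ 0 := by
      intro h; exact hA0 (by simp [h])
    set ν := lam * x₀' ^ (e + 1) / x₀ ^ (e + 1) with hν
    have hνne : ν ≠ 0 :=
      div_ne_zero (mul_ne_zero hlam (pow_ne_zero _ hx0')) (pow_ne_zero _ hx0)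
    have hyy : ∀ i, y i = ν * y' i := by
      intro i
      rw [hν]
      field_simp
      linear_combination h1 i
    -- abbreviations: A := ν*(x₀*x₁^e), B := lam*(x₀'*x₁'^e), etc.
    have e0 : ((e : ℂ) + 1) * (ν * (x₀ * x₁ ^ e) - lam * (x₀' * x₁' ^ e)) * y' 0 = 0 := by
      linear_combination h3 - (((e : ℂ) + 1) * x₀ * x₁ ^ e) * hyy 0
    have eαβ : ∀ i : Fin n,
        (ν * x₁ ^ (e + 1) - lam * x₁' ^ (e + 1)) * y' i.castSucc
          + ((e : ℂ) + 1) * (ν * (x₀ * x₁ ^ e) - lam * (x₀' * x₁' ^ e)) * y' i.succ = 0 := by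
      intro i
      linear_combination h4 i - x₁ ^ (e + 1) * hyy i.castSucc
        - (((e : ℂ) + 1) * x₀ * x₁ ^ e) * hyy i.succ
    have eβ : (ν * x₁ ^ (e + 1) - lam * x₁' ^ (e + 1)) * y' (Fin.last n) = 0 := by
      linear_combination h2 - x₁ ^ (e + 1) * hyy (Fin.last n)
    have hA : ν * (x₀ * x₁ ^ e) = lam * (x₀' * x₁' ^ e) := by
      by_contra hc
      apply hy'
      have hall : ∀ k, ∀ hk : k < n + 1, y' ⟨k, hk⟩ = 0 := by
        intro k
        induction k with
        | zero =>
          intro hk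
          by_contra hne
          exact mul_ne_zero (mul_ne_zero hdC (sub_ne_zero.mpr hc)) hne e0
        | succ k ih =>
          intro hk
          have hkn : k < n := by omega
          have heq := eαβ ⟨k, hkn⟩
          have hcs : (Fin.castSucc ⟨k, hkn⟩ : Fin (n + 1)) = ⟨k, by omega⟩ := rfl
          have hsc : (Fin.succ ⟨k, hkn⟩ : Fin (n + 1)) = ⟨k + 1, hk⟩ := rfl
          rw [hcs, ih (by omega), mul_zero, zero_add, hsc] at heq
          by_contra hne
          exact mul_ne_zero (mul_ne_zero hdC (sub_ne_zero.mpr hc)) hne heq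
      funext j
      exact hall j.1 j.2
    have hB : ν * x₁ ^ (e + 1) = lam * x₁' ^ (e + 1) := by
      have hz : ∀ j : Fin (n + 1), (ν * x₁ ^ (e + 1) - lam * x₁' ^ (e + 1)) * y' j = 0 := by
        intro j
        induction j using Fin.lastCases with
        | last => exact eβ
        | cast i =>
          have h := eαβ i
          rw [hA, sub_self, mul_zero, zero_mul, add_zero] at h
          exact h
      exact sub_eq_zero.mp ((mul_eq_zero.mp (hz j0)).resolve_right hy0')
    refine ⟨?_, ν, hνne, funext fun i => by rw [Pi.smul_apply, smul_eq_mul]; exact hyy i⟩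
    by_cases hx1' : x₁' = 0
    · have hx1 : x₁ = 0 := by
        have : x₁ ^ (e + 1) = 0 := by
          have := hB
          rw [hx1', zero_pow (by omega), mul_zero] at this
          exact (mul_eq_zero.mp this).resolve_left hνne
        exact pow_eq_zero_iff (by omega) |>.mp this
      exact ⟨x₀ / x₀', div_ne_zero hx0 hx0', by field_simp, by rw [hx1, hx1', mul_zero]⟩
    · have hkey : lam * x₁' ^ e * (x₀' * x₁) = lam * x₁' ^ e * (x₁' * x₀) := by
        linear_combination (-x₁) * hA + x₀ * hB
      have hkey2 : x₀' * x₁ = x₁' * x₀ :=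
        mul_left_cancel₀ (mul_ne_zero hlam (pow_ne_zero _ hx1')) hkey
      refine ⟨x₀ / x₀', div_ne_zero hx0 hx0', by field_simp, ?_⟩
      field_simp
      linear_combination hkey2
end

section
/- Let r, m ≥ 1 and d = (d₁,…,d_r) be positive integers such that for all disjoint subsets I, J of {1,…,r} with (I,J) ≠ (∅,∅), the sums ∑_{i∈I} d_i and ∑_{j∈J} d_j differ. Then the map sending an r-tuple of nonzero linear forms (v₁,…,v_r) on ℂ^{m+1} (each up to scaling) to the product v₁^{d₁}⋯v_r^{d_r} up to scaling is injective. -/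
open MvPolynomial

/-- The linear form on `ℂ^{m+1}` with coefficient vector `v`. -/
noncomputable def linForm {m : ℕ} (v : Fin (m + 1) → ℂ) : MvPolynomial (Fin (m + 1)) ℂ :=
  ∑ i, C (v i) * X i

namespace StmtAux

variable {m : ℕ}

lemma coeff_linForm_mul (w : Fin (m + 1) → ℂ) (u : MvPolynomial (Fin (m + 1)) ℂ)
    (j : Fin (m + 1)) :
    MvPolynomial.coeff (Finsupp.single j 1) (linForm w * u) =
      w j * MvPolynomial.coeff 0 u := by
  classical
  rw [linForm, Finset.sum_mul, MvPolynomial.coeff_sum]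
  have hterm : ∀ k : Fin (m + 1),
      MvPolynomial.coeff (Finsupp.single j 1) (C (w k) * X k * u) =
        if k = j then w j * MvPolynomial.coeff 0 u else 0 := by
    intro k
    rw [mul_assoc, mul_comm (X k) u, ← mul_assoc, MvPolynomial.coeff_mul_X',
      Finsupp.support_single_ne_zero j one_ne_zero]
    by_cases hk : k = j
    · subst hk
      simp [MvPolynomial.coeff_C_mul]
    · simp [Finset.mem_singleton, hk, Ne.symm hk]
  rw [Finset.sum_congr rfl (fun k _ => hterm k)]
  simp

lemma coeff_linForm (v : Fin (m + 1) → ℂ) (j : Fin (m + 1)) :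
    MvPolynomial.coeff (Finsupp.single j 1) (linForm v) = v j := by
  simpa using coeff_linForm_mul v 1 j

lemma linForm_ne_zero {v : Fin (m + 1) → ℂ} (hv : v ≠ 0) : linForm v ≠ 0 := by
  intro h
  apply hv
  funext j
  have := coeff_linForm v j
  rw [h] at this
  simpa using this.symm

lemma prime_X0 : Prime (X 0 : MvPolynomial (Fin (m + 1)) ℂ) := by
  rw [← MulEquiv.prime_iff (MvPolynomial.finSuccEquiv ℂ m).toRingEquiv.toMulEquiv]
  have : (MvPolynomial.finSuccEquiv ℂ m).toRingEquiv.toMulEquiv (X 0) = Polynomial.X := by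
    simpa using MvPolynomial.finSuccEquiv_X_zero (R := ℂ) (n := m)
  rw [this]
  exact Polynomial.prime_X

lemma prime_Xj (j : Fin (m + 1)) : Prime (X j : MvPolynomial (Fin (m + 1)) ℂ) := by
  have h0 : Prime (X 0 : MvPolynomial (Fin (m + 1)) ℂ) := prime_X0
  rw [← MulEquiv.prime_iff
    (MvPolynomial.renameEquiv ℂ (Equiv.swap (0 : Fin (m + 1)) j)).toRingEquiv.toMulEquiv] at h0
  simpa using h0

lemma prime_linForm {v : Fin (m + 1) → ℂ} (hv : v ≠ 0) : Prime (linForm v) := by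
  classical
  obtain ⟨j0, hj0⟩ : ∃ j, v j ≠ 0 := by
    by_contra hcon
    push_neg at hcon
    exact hv (funext hcon)
  set F : Fin (m + 1) → MvPolynomial (Fin (m + 1)) ℂ :=
    fun j => if j = j0 then linForm v else X j with hF
  set G : Fin (m + 1) → MvPolynomial (Fin (m + 1)) ℂ :=
    fun j => if j = j0 then
      C (v j0)⁻¹ * (X j0 - ∑ k ∈ Finset.univ.erase j0, C (v k) * X k) else X j with hG
  have hsum : linForm v = C (v j0) * X j0 + ∑ k ∈ Finset.univ.erase j0, C (v k) * X k := by
    rw [linForm, ← Finset.add_sum_erase _ _ (Finset.mem_univ j0)]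
  have h1 : (MvPolynomial.aeval F).comp (MvPolynomial.aeval G) =
      AlgHom.id ℂ (MvPolynomial (Fin (m + 1)) ℂ) := by
    apply MvPolynomial.algHom_ext
    intro j
    by_cases hj : j = j0
    · subst hj
      have hGj : G j = C (v j)⁻¹ * (X j - ∑ k ∈ Finset.univ.erase j, C (v k) * X k) := by
        simp [hG]
      have hFj : F j = linForm v := by simp [hF]
      rw [AlgHom.comp_apply, AlgHom.id_apply, MvPolynomial.aeval_X, hGj]
      rw [map_mul, map_sub, MvPolynomial.aeval_C, MvPolynomial.algebraMap_eq,
        MvPolynomial.aeval_X, map_sum]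
      have : ∀ k ∈ Finset.univ.erase j, MvPolynomial.aeval F (C (v k) * X k) = C (v k) * X k := by
        intro k hk
        have hkj : k ≠ j := Finset.ne_of_mem_erase hk
        rw [map_mul, MvPolynomial.aeval_C, MvPolynomial.aeval_X, hF]
        simp [hkj]
      rw [Finset.sum_congr rfl this]
      rw [hFj, hsum, add_sub_cancel_right, ← mul_assoc, ← C_mul,
        inv_mul_cancel₀ hj0, C_1, one_mul]
    · simp [hG, hF, hj]
  have h2 : (MvPolynomial.aeval G).comp (MvPolynomial.aeval F) =
      AlgHom.id ℂ (MvPolynomial (Fin (m + 1)) ℂ) := by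
    apply MvPolynomial.algHom_ext
    intro j
    by_cases hj : j = j0
    · subst hj
      have hFj : F j = linForm v := by simp [hF]
      rw [AlgHom.comp_apply, AlgHom.id_apply, MvPolynomial.aeval_X, hFj]
      rw [hsum, map_add, map_mul, MvPolynomial.aeval_C, MvPolynomial.algebraMap_eq,
        MvPolynomial.aeval_X, map_sum]
      have : ∀ k ∈ Finset.univ.erase j, MvPolynomial.aeval G (C (v k) * X k) = C (v k) * X k := by
        intro k hk
        have hkj : k ≠ j := Finset.ne_of_mem_erase hk
        rw [map_mul, MvPolynomial.aeval_C, MvPolynomial.aeval_X, hG]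
        simp [hkj]
      rw [Finset.sum_congr rfl this]
      have hGj : G j = C (v j)⁻¹ * (X j - ∑ k ∈ Finset.univ.erase j, C (v k) * X k) := by
        simp [hG]
      rw [hGj, ← mul_assoc, ← C_mul, mul_inv_cancel₀ hj0, C_1, one_mul]
      ring
    · simp [hG, hF, hj]
  let e : MvPolynomial (Fin (m + 1)) ℂ ≃ₐ[ℂ] MvPolynomial (Fin (m + 1)) ℂ :=
    AlgEquiv.ofAlgHom (MvPolynomial.aeval F) (MvPolynomial.aeval G) h1 h2
  have hp : Prime (X j0 : MvPolynomial (Fin (m + 1)) ℂ) := prime_Xj j0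
  rw [← MulEquiv.prime_iff e.toRingEquiv.toMulEquiv] at hp
  have : e.toRingEquiv.toMulEquiv (X j0) = linForm v := by
    show MvPolynomial.aeval F (X j0) = linForm v
    simp [hF]
  rwa [this] at hp

lemma emult_irr {R : Type*} [CommMonoidWithZero R] [IsCancelMulZero R] [WfDvdMonoid R] {p q : R}
    (hp : Prime p) (hq : Irreducible q) [Decidable (Associated p q)] :
    emultiplicity p q = if Associated p q then 1 else 0 := by
  split_ifs with h
  · rw [emultiplicity_eq_of_associated_right h.symm]
    exact (FiniteMultiplicity.of_prime_left hp hp.ne_zero).emultiplicity_self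
  · exact emultiplicity_eq_zero.mpr fun hdvd => h (hp.irreducible.associated_of_dvd hq hdvd)

end StmtAux

open StmtAux

/-- If for all disjoint `I, J ⊆ {1,…,r}` not both empty the sums `∑_{i∈I} d_i` and
`∑_{j∈J} d_j` differ, then the map sending `([v₁],…,[v_r])` to `[v₁^{d₁}⋯v_r^{d_r}]` is
injective: `v₁^{d₁}⋯v_r^{d_r} = λ·w₁^{d₁}⋯w_r^{d_r}` forces each `w_i` to be a nonzero
scalar multiple of `v_i`. -/
theorem stmt6 (r m : ℕ) (hr : 1 ≤ r) (hm : 1 ≤ m) (d : Fin r → ℕ) (hd : ∀ i, 1 ≤ d i)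
    (hdist : ∀ I J : Finset (Fin r), Disjoint I J → (I.Nonempty ∨ J.Nonempty) →
      ∑ i ∈ I, d i ≠ ∑ j ∈ J, d j)
    (v w : Fin r → (Fin (m + 1) → ℂ)) (hv : ∀ i, v i ≠ 0) (hw : ∀ i, w i ≠ 0)
    (lam : ℂ) (hlam : lam ≠ 0)
    (h : ∏ i, linForm (v i) ^ d i = C lam * ∏ i, linForm (w i) ^ d i) :
    ∀ i, ∃ c : ℂ, c ≠ 0 ∧ w i = c • v i := by
  classical
  intro i
  set p : MvPolynomial (Fin (m + 1)) ℂ := linForm (w i) with hpdef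
  have hp : Prime p := prime_linForm (hw i)
  set Sv : Finset (Fin r) := Finset.univ.filter (fun j => Associated p (linForm (v j))) with hSv
  set Sw : Finset (Fin r) := Finset.univ.filter (fun j => Associated p (linForm (w j))) with hSw
  have hcompute : ∀ (x : Fin r → (Fin (m + 1) → ℂ)), (∀ i', x i' ≠ 0) →
      emultiplicity p (∏ j, linForm (x j) ^ d j) =
        ((∑ j ∈ Finset.univ.filter (fun j => Associated p (linForm (x j))), d j : ℕ) : ℕ∞) := by
    intro x hx
    rw [Finset.emultiplicity_prod hp, Nat.cast_sum, Finset.sum_filter]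
    refine Finset.sum_congr rfl fun j _ => ?_
    rw [emultiplicity_pow hp, emult_irr hp (prime_linForm (hx j)).irreducible]
    split_ifs with hass
    · simp
    · simp
  have hunit : IsUnit (C lam : MvPolynomial (Fin (m + 1)) ℂ) := hlam.isUnit.map C
  have hmain : ((∑ j ∈ Sv, d j : ℕ) : ℕ∞) = ((∑ j ∈ Sw, d j : ℕ) : ℕ∞) := by
    rw [← hcompute v hv, ← hcompute w hw, h, emultiplicity_mul hp,
      emultiplicity_of_isUnit_right hp.not_unit hunit, zero_add]
  have hsum : ∑ j ∈ Sv, d j = ∑ j ∈ Sw, d j := Nat.cast_inj.mp hmain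
  have h1 := Finset.sum_sdiff (f := d) (Finset.inter_subset_left (s₁ := Sv) (s₂ := Sw))
  have h2 := Finset.sum_sdiff (f := d) (Finset.inter_subset_right (s₁ := Sv) (s₂ := Sw))
  rw [Finset.sdiff_inter_self_left] at h1
  rw [Finset.sdiff_inter_self_right] at h2
  have hdd : ∑ j ∈ Sv \ Sw, d j = ∑ j ∈ Sw \ Sv, d j := by omega
  have hempty : ¬(Sw \ Sv).Nonempty := fun hne =>
    hdist (Sv \ Sw) (Sw \ Sv) disjoint_sdiff_sdiff (Or.inr hne) hdd
  have hsub : Sw ⊆ Sv := by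
    rw [← Finset.sdiff_eq_empty_iff_subset]
    exact Finset.not_nonempty_iff_eq_empty.mp hempty
  have hiw : i ∈ Sw := by
    rw [hSw, Finset.mem_filter]
    exact ⟨Finset.mem_univ i, Associated.refl p⟩
  have hiv : Associated p (linForm (v i)) := by
    have := hsub hiw
    rw [hSv, Finset.mem_filter] at this
    exact this.2
  obtain ⟨u, hu⟩ := hiv
  set c : ℂ := MvPolynomial.coeff 0 (u : MvPolynomial (Fin (m + 1)) ℂ) with hc
  have hco : ∀ j, v i j = w i j * c := by
    intro j
    rw [← coeff_linForm (v i) j, ← hu, hpdef, coeff_linForm_mul]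
  have hcne : c ≠ 0 := by
    intro h0
    apply hv i
    funext j
    rw [hco j, h0, mul_zero]
    rfl
  refine ⟨c⁻¹, inv_ne_zero hcne, funext fun j => ?_⟩
  have := hco j
  have hwj : w i j = c⁻¹ * v i j := by
    field_simp [this]
    exact this.symm
  simpa [Pi.smul_apply, smul_eq_mul] using hwj
end

section
/- The monoid S generated by the set P ∩ ℤ³ − 5e₁, where P = conv(0, 5e₁, 3e₂, 2e₃) ⊆ ℝ³, is not saturated: the lattice point (−6,2,1) lies in (½S) ∩ ℤ³ but not in S. -/
/-- The translated lattice points `P ∩ ℤ³ - 5e₁` of the simplex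
`P = conv(0, 5e₁, 3e₂, 2e₃) = {x ≥ 0 : 6x₁ + 10x₂ + 15x₃ ≤ 30}`. -/
def translatedLatticePts : Set (ℤ × ℤ × ℤ) :=
  {v | -5 ≤ v.1 ∧ 0 ≤ v.2.1 ∧ 0 ≤ v.2.2 ∧ 6 * (v.1 + 5) + 10 * v.2.1 + 15 * v.2.2 ≤ 30}

/-- Invariant submonoid: the linear form `f(v) = 6v₁+10v₂+15v₃` is `0` or `≤ -2`. -/
def invMonoid : AddSubmonoid (ℤ × ℤ × ℤ) where
  carrier := {v | 6 * v.1 + 10 * v.2.1 + 15 * v.2.2 = 0 ∨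
    6 * v.1 + 10 * v.2.1 + 15 * v.2.2 ≤ -2}
  zero_mem' := by simp
  add_mem' := by
    rintro a b ha hb
    simp only [Set.mem_setOf_eq, Prod.fst_add, Prod.snd_add] at *
    omega

/-- The monoid `S` generated by `P ∩ ℤ³ - 5e₁` is not saturated:
`(-6,2,1)` lies in `(½S) ∩ ℤ³` (i.e. twice it lies in `S`) but not in `S`. -/
theorem stmt12 :
    2 • ((-6, 2, 1) : ℤ × ℤ × ℤ) ∈ AddSubmonoid.closure translatedLatticePts ∧
    ((-6, 2, 1) : ℤ × ℤ × ℤ) ∉ AddSubmonoid.closure translatedLatticePts := by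
  constructor
  · have h : (2 • ((-6, 2, 1) : ℤ × ℤ × ℤ)) =
        ((-2, 1, 0) : ℤ × ℤ × ℤ) + (((-5, 3, 0) : ℤ × ℤ × ℤ) + ((-5, 0, 2) : ℤ × ℤ × ℤ)) := by
      decide
    rw [h]
    refine add_mem (AddSubmonoid.subset_closure ?_)
      (add_mem (AddSubmonoid.subset_closure ?_) (AddSubmonoid.subset_closure ?_)) <;>
      constructor <;> norm_num [translatedLatticePts]
  · intro hmem
    have hle : AddSubmonoid.closure translatedLatticePts ≤ invMonoid := by
      rw [AddSubmonoid.closure_le]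
      rintro v ⟨h1, h2, h3, h4⟩
      simp only [invMonoid, AddSubmonoid.mem_mk, Set.mem_setOf_eq]
      have h5 : 6 * v.1 + 10 * v.2.1 + 15 * v.2.2 ≠ -1 := by omega
      by_cases h6 : 6 * v.1 + 10 * v.2.1 + 15 * v.2.2 ≤ -2
      · exact Or.inr h6
      · exact Or.inl (by omega)
    have := hle hmem
    simp only [invMonoid, AddSubmonoid.mem_mk, Set.mem_setOf_eq] at this
    norm_num at this
end

section
/- Let m ≥ 1 and Γ, Ψ_k, Z_w be as in the graph construction. If dim Z_w ≤ 2, then Z_w is contained in one of the four coordinate hyperplanes of ℂ⁴. -/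
open scoped Classical

/-- The edges `E₁ = {(i, i+1) : 0 ≤ i ≤ m-1}` of the graph `Γ` on `{0,…,m}`. -/
def E1 (m : ℕ) : Set (ℕ × ℕ) := {e | e.2 = e.1 + 1 ∧ e.2 ≤ m}

/-- The edges `E₂ = {(i, m-i) : 0 ≤ i < ⌊m/2⌋} ∪ {(m-i, i+1) : 0 ≤ i < ⌊(m-1)/2⌋}`. -/
def E2 (m : ℕ) : Set (ℕ × ℕ) :=
  {e | (∃ k, k < m / 2 ∧ e = (k, m - k)) ∨ (∃ k, k < (m - 1) / 2 ∧ e = (m - k, k + 1))}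

/-- `Ψ_k(w) ∈ ℂ⁴`: total weights of incoming `E₁`-edges, outgoing `E₁`-edges,
incoming `E₂`-edges and outgoing `E₂`-edges at the vertex `k`. -/
noncomputable def Psi (m : ℕ) (w : ℕ × ℕ → ℂ) (k : ℕ) : Fin 4 → ℂ :=
  ![∑ i ∈ Finset.range (m + 1), if (i, k) ∈ E1 m then w (i, k) else 0,
    ∑ i ∈ Finset.range (m + 1), if (k, i) ∈ E1 m then w (k, i) else 0,
    ∑ i ∈ Finset.range (m + 1), if (i, k) ∈ E2 m then w (i, k) else 0,
    ∑ i ∈ Finset.range (m + 1), if (k, i) ∈ E2 m then w (k, i) else 0]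

/-- `Z_w = span{Ψ₀(w),…,Ψ_m(w)} ⊆ ℂ⁴`. -/
noncomputable def Zw (m : ℕ) (w : ℕ × ℕ → ℂ) : Submodule ℂ (Fin 4 → ℂ) :=
  Submodule.span ℂ (Psi m w '' {k | k ≤ m})


lemma solve2 {p q r s x y : ℂ} (hdet : p * s - q * r ≠ 0)
    (h1 : p * x + q * y = 0) (h2 : r * x + s * y = 0) : x = 0 ∧ y = 0 := by
  constructor
  · by_contra hx
    apply hdet
    have h3 : (p * s - q * r) * x = s * (p * x + q * y) - q * (r * x + s * y) := by ring
    rw [h1, h2] at h3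
    simp at h3
    exact h3.resolve_right hx
  · by_contra hy
    apply hdet
    have h3 : (p * s - q * r) * y = p * (r * x + s * y) - r * (p * x + q * y) := by ring
    rw [h1, h2] at h3
    simp at h3
    exact h3.resolve_right hy

lemma key (m v f : ℕ) (hm : 1 ≤ m) (hv : v = m - m / 2) (hf : f = (m - 1) / 2)
    (p q r s : ℂ) (hdet : p * s - q * r ≠ 0) (a : ℤ → ℂ)
    (S0 : ∀ i : ℤ, i < 0 ∨ (m : ℤ) ≤ i → a i = 0)
    (S1 : q * a 0 = 0)
    (S2 : p * a ((v : ℤ) - 1) + q * a (v : ℤ) = 0)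
    (S3 : ∀ k : ℕ, m / 2 ≤ k → k ≤ m - f → r * a ((k : ℤ) - 1) + s * a (k : ℤ) = 0)
    (S4 : ∀ k : ℕ, k < m / 2 → r * a ((k : ℤ) - 1) + s * a (k : ℤ)
        = p * a ((m : ℤ) - k - 1) + q * a ((m : ℤ) - k))
    (S5 : ∀ k : ℕ, k < f → r * a ((m : ℤ) - k - 1) + s * a ((m : ℤ) - k)
        = p * a (k : ℤ) + q * a ((k : ℤ) + 1)) :
    ∀ i : ℤ, a i = 0 := by
  have hv1 : 1 ≤ v := by omega
  obtain ⟨Hm1, Hm2⟩ : a ((v : ℤ) - 1) = 0 ∧ a (v : ℤ) = 0 :=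
    solve2 hdet S2 (S3 v (by omega) (by omega))
  by_cases hpz : p = 0
  · have hq : q ≠ 0 := by intro h; exact hdet (by rw [hpz, h]; ring)
    have hr : r ≠ 0 := by intro h; exact hdet (by rw [hpz, h]; ring)
    by_cases hsz : s = 0
    · -- CASE III
      subst hpz hsz
      have main : ∀ t : ℕ, a (t : ℤ) = 0 ∧ a ((m : ℤ) - 1 - t) = 0 := by
        intro t
        induction t using Nat.strong_induction_on with
        | _ t IH =>
        rcases le_or_gt m t with hmt | hmt
        · exact ⟨S0 _ (Or.inr (by omega)), S0 _ (Or.inl (by omega))⟩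
        have h1 : a (t : ℤ) = 0 := by
          rcases Nat.eq_zero_or_pos t with rfl | ht1
          · simpa using (mul_eq_zero.mp S1).resolve_left hq
          rcases le_or_gt t f with htf | htf
          · have h5 := S5 (t - 1) (by omega)
            have z1 : a ((m : ℤ) - ((t - 1 : ℕ) : ℤ) - 1) = 0 := by
              have := (IH (t - 1) (by omega)).2
              rw [show (m : ℤ) - 1 - ((t - 1 : ℕ) : ℤ) = (m : ℤ) - ((t - 1 : ℕ) : ℤ) - 1 by ring] at this
              exact this
            rw [z1] at h5
            simp at h5
            have := h5.resolve_left hq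
            rw [show ((t - 1 : ℕ) : ℤ) + 1 = (t : ℤ) by omega] at this
            exact this
          · have := (IH (m - 1 - t) (by omega)).2
            rw [show (m : ℤ) - 1 - ((m - 1 - t : ℕ) : ℤ) = (t : ℤ) by omega] at this
            exact this
        refine ⟨h1, ?_⟩
        rcases le_or_gt t f with htf | htf
        · rcases lt_or_ge (t + 1) (m / 2) with htm | htm
          · have h4 := S4 (t + 1) htm
            rw [show ((t + 1 : ℕ) : ℤ) - 1 = (t : ℤ) by omega, h1] at h4
            simp at h4
            have := h4.resolve_left hq
            rw [show (m : ℤ) - 1 - t = (m : ℤ) - ((t + 1 : ℕ) : ℤ) by omega]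
            exact this
          · have : (m : ℤ) - 1 - t = (v : ℤ) ∨ (m : ℤ) - 1 - t = (v : ℤ) - 1 := by omega
            rcases this with h | h <;> rw [h]
            · exact Hm2
            · exact Hm1
        · have := (IH (m - 1 - t) (by omega)).1
          rw [show ((m - 1 - t : ℕ) : ℤ) = (m : ℤ) - 1 - t by omega] at this
          exact this
      intro i
      rcases lt_or_ge i 0 with h | h
      · exact S0 _ (Or.inl h)
      rcases lt_or_ge i (m : ℤ) with h2 | h2
      · have := (main i.toNat).1
        rw [show ((i.toNat : ℕ) : ℤ) = i by omega] at this
        exact this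
      · exact S0 _ (Or.inr h2)
    · -- CASE II
      have hs := hsz
      subst hpz
      have main : ∀ j : ℕ, a ((v : ℤ) - 1 - j) = 0 ∧ a ((v : ℤ) + j) = 0 := by
        intro j
        induction j using Nat.strong_induction_on with
        | _ j IH =>
        rcases Nat.eq_zero_or_pos j with rfl | hj1
        · constructor
          · simpa using Hm1
          · simpa using Hm2
        have right : a ((v : ℤ) + j) = 0 := by
          rcases le_or_gt (m : ℤ) ((v : ℤ) + j) with hbig | hbig
          · exact S0 _ (Or.inr hbig)
          by_cases hc : m - v - j < f
          · have h5 := S5 (m - v - j) hc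
            have z1 : a ((m : ℤ) - ((m - v - j : ℕ) : ℤ) - 1) = 0 := by
              have := (IH (j - 1) (by omega)).2
              rw [show (v : ℤ) + ((j - 1 : ℕ) : ℤ) = (m : ℤ) - ((m - v - j : ℕ) : ℤ) - 1 by omega] at this
              exact this
            have z2 : a (((m - v - j : ℕ) : ℤ) + 1) = 0 := by
              have := (IH (2 * v + j - m - 2) (by omega)).1
              rw [show (v : ℤ) - 1 - ((2 * v + j - m - 2 : ℕ) : ℤ) = ((m - v - j : ℕ) : ℤ) + 1 by omega] at this
              exact this
            rw [z1, z2] at h5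
            simp at h5
            have := h5.resolve_left hs
            rw [show (m : ℤ) - ((m - v - j : ℕ) : ℤ) = (v : ℤ) + j by omega] at this
            exact this
          · have hj : j = 1 := by omega
            have h3 := S3 (v + 1) (by omega) (by omega)
            rw [show ((v + 1 : ℕ) : ℤ) - 1 = (v : ℤ) by omega, Hm2] at h3
            simp at h3
            have := h3.resolve_left hs
            rw [show (v : ℤ) + j = ((v + 1 : ℕ) : ℤ) by omega]
            exact this
        refine ⟨?_, right⟩
        rcases lt_or_ge ((v : ℤ) - 1 - j) 0 with hneg | hneg
        · exact S0 _ (Or.inl hneg)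
        by_cases hc : v - j < m / 2
        · have h4 := S4 (v - j) hc
          have z1 : a (((v - j : ℕ) : ℤ)) = 0 := by
            have := (IH (j - 1) (by omega)).1
            rw [show (v : ℤ) - 1 - ((j - 1 : ℕ) : ℤ) = ((v - j : ℕ) : ℤ) by omega] at this
            exact this
          have z2 : a ((m : ℤ) - ((v - j : ℕ) : ℤ)) = 0 := by
            rcases eq_or_lt_of_le (show m ≤ 2 * v by omega) with hpar | hpar
            · rw [show (m : ℤ) - ((v - j : ℕ) : ℤ) = (v : ℤ) + j by omega]
              exact right
            · have := (IH (j - 1) (by omega)).2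
              rw [show (v : ℤ) + ((j - 1 : ℕ) : ℤ) = (m : ℤ) - ((v - j : ℕ) : ℤ) by omega] at this
              exact this
          rw [z1, z2] at h4
          simp at h4
          have := h4.resolve_left hr
          rw [show (v : ℤ) - 1 - j = ((v - j : ℕ) : ℤ) - 1 by omega]
          exact this
        · have hj : j = 1 := by omega
          have h3 := S3 (v - 1) (by omega) (by omega)
          rw [show ((v - 1 : ℕ) : ℤ) = (v : ℤ) - 1 by omega, Hm1] at h3
          simp at h3
          have := h3.resolve_left hr
          rw [show (v : ℤ) - 1 - j = (v : ℤ) - 1 - 1 by omega]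
          exact this
      intro i
      rcases lt_or_ge i 0 with h | h
      · exact S0 _ (Or.inl h)
      rcases lt_or_ge i (m : ℤ) with h2 | h2
      · rcases le_or_gt i ((v : ℤ) - 1) with h3 | h3
        · have := (main (v - 1 - i.toNat)).1
          rw [show (v : ℤ) - 1 - ((v - 1 - i.toNat : ℕ) : ℤ) = i by omega] at this
          exact this
        · have := (main (i.toNat - v)).2
          rw [show (v : ℤ) + ((i.toNat - v : ℕ) : ℤ) = i by omega] at this
          exact this
      · exact S0 _ (Or.inr h2)
  · have hp := hpz
    by_cases hqz : q = 0
    · have hs : s ≠ 0 := by intro h; exact hdet (by rw [hqz, h]; ring)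
      by_cases hrz : r = 0
      · -- CASE V
        subst hqz hrz
        have main : ∀ j : ℕ, a ((v : ℤ) - 1 - j) = 0 ∧ a ((v : ℤ) + j) = 0 := by
          intro j
          induction j using Nat.strong_induction_on with
          | _ j IH =>
          rcases Nat.eq_zero_or_pos j with rfl | hj1
          · constructor
            · simpa using Hm1
            · simpa using Hm2
          rcases eq_or_lt_of_le (show m ≤ 2 * v by omega) with hpar | hpar
          · -- m even : right first, then left
            have right : a ((v : ℤ) + j) = 0 := by
              rcases le_or_gt (m : ℤ) ((v : ℤ) + j) with hbig | hbig
              · exact S0 _ (Or.inr hbig)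
              by_cases hc : m - v - j < f
              · have h5 := S5 (m - v - j) hc
                have z2 : a (((m - v - j : ℕ) : ℤ)) = 0 := by
                  have := (IH (j - 1) (by omega)).1
                  rw [show (v : ℤ) - 1 - ((j - 1 : ℕ) : ℤ) = ((m - v - j : ℕ) : ℤ) by omega] at this
                  exact this
                rw [z2] at h5
                simp at h5
                have := h5.resolve_left hs
                rw [show (v : ℤ) + j = (m : ℤ) - ((m - v - j : ℕ) : ℤ) by omega]
                exact this
              · have hj : j = 1 := by omega
                have h3 := S3 (v + 1) (by omega) (by omega)
                simp at h3
                have := h3.resolve_left hs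
                rw [show (v : ℤ) + j = ((v + 1 : ℕ) : ℤ) by omega]
                exact this
            refine ⟨?_, right⟩
            rcases lt_or_ge ((v : ℤ) - 1 - j) 0 with hneg | hneg
            · exact S0 _ (Or.inl hneg)
            have h4 := S4 (v - 1 - j) (by omega)
            have z2 : a ((m : ℤ) - ((v - 1 - j : ℕ) : ℤ) - 1) = 0 := by
              rw [show (m : ℤ) - ((v - 1 - j : ℕ) : ℤ) - 1 = (v : ℤ) + j by omega]
              exact right
            rw [z2] at h4
            simp at h4
            have := h4.resolve_left hs
            rw [show (v : ℤ) - 1 - j = ((v - 1 - j : ℕ) : ℤ) by omega]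
            exact this
          · -- m odd : left first, then right
            have left : a ((v : ℤ) - 1 - j) = 0 := by
              rcases lt_or_ge ((v : ℤ) - 1 - j) 0 with hneg | hneg
              · exact S0 _ (Or.inl hneg)
              have h4 := S4 (v - 1 - j) (by omega)
              have z2 : a ((m : ℤ) - ((v - 1 - j : ℕ) : ℤ) - 1) = 0 := by
                have := (IH (j - 1) (by omega)).2
                rw [show (v : ℤ) + ((j - 1 : ℕ) : ℤ) = (m : ℤ) - ((v - 1 - j : ℕ) : ℤ) - 1 by omega] at this
                exact this
              rw [z2] at h4
              simp at h4
              have := h4.resolve_left hs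
              rw [show (v : ℤ) - 1 - j = ((v - 1 - j : ℕ) : ℤ) by omega]
              exact this
            refine ⟨left, ?_⟩
            rcases le_or_gt (m : ℤ) ((v : ℤ) + j) with hbig | hbig
            · exact S0 _ (Or.inr hbig)
            have h5 := S5 (m - v - j) (by omega)
            have z2 : a (((m - v - j : ℕ) : ℤ)) = 0 := by
              rw [show ((m - v - j : ℕ) : ℤ) = (v : ℤ) - 1 - j by omega]
              exact left
            rw [z2] at h5
            simp at h5
            have := h5.resolve_left hs
            rw [show (v : ℤ) + j = (m : ℤ) - ((m - v - j : ℕ) : ℤ) by omega]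
            exact this
        intro i
        rcases lt_or_ge i 0 with h | h
        · exact S0 _ (Or.inl h)
        rcases lt_or_ge i (m : ℤ) with h2 | h2
        · rcases le_or_gt i ((v : ℤ) - 1) with h3 | h3
          · have := (main (v - 1 - i.toNat)).1
            rw [show (v : ℤ) - 1 - ((v - 1 - i.toNat : ℕ) : ℤ) = i by omega] at this
            exact this
          · have := (main (i.toNat - v)).2
            rw [show (v : ℤ) + ((i.toNat - v : ℕ) : ℤ) = i by omega] at this
            exact this
        · exact S0 _ (Or.inr h2)
      · -- CASE IV
        have hr := hrz
        subst hqz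
        have main : ∀ j : ℕ, a ((v : ℤ) - 1 - j) = 0 ∧ a ((v : ℤ) + j) = 0 := by
          intro j
          induction j using Nat.strong_induction_on with
          | _ j IH =>
          rcases Nat.eq_zero_or_pos j with rfl | hj1
          · constructor
            · simpa using Hm1
            · simpa using Hm2
          have left : a ((v : ℤ) - 1 - j) = 0 := by
            rcases lt_or_ge ((v : ℤ) - 1 - j) 0 with hneg | hneg
            · exact S0 _ (Or.inl hneg)
            by_cases hc : v - j < m / 2
            · have h4 := S4 (v - j) hc
              have z1 : a (((v - j : ℕ) : ℤ)) = 0 := by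
                have := (IH (j - 1) (by omega)).1
                rw [show (v : ℤ) - 1 - ((j - 1 : ℕ) : ℤ) = ((v - j : ℕ) : ℤ) by omega] at this
                exact this
              have z2 : a ((m : ℤ) - ((v - j : ℕ) : ℤ) - 1) = 0 := by
                rcases eq_or_lt_of_le (show m ≤ 2 * v by omega) with hpar | hpar
                · -- m even: index = v + (j-1)
                  have := (IH (j - 1) (by omega)).2
                  rw [show (v : ℤ) + ((j - 1 : ℕ) : ℤ) = (m : ℤ) - ((v - j : ℕ) : ℤ) - 1 by omega] at this
                  exact this
                · -- m odd: index = v + (j-2) ; j ≥ 2 since hc gives v - j < v - 1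
                  have := (IH (j - 2) (by omega)).2
                  rw [show (v : ℤ) + ((j - 2 : ℕ) : ℤ) = (m : ℤ) - ((v - j : ℕ) : ℤ) - 1 by omega] at this
                  exact this
              rw [z1, z2] at h4
              simp at h4
              have := h4.resolve_left hr
              rw [show (v : ℤ) - 1 - j = ((v - j : ℕ) : ℤ) - 1 by omega]
              exact this
            · have hj : j = 1 := by omega
              have h3 := S3 (v - 1) (by omega) (by omega)
              rw [show ((v - 1 : ℕ) : ℤ) = (v : ℤ) - 1 by omega, Hm1] at h3
              simp at h3
              have := h3.resolve_left hr
              rw [show (v : ℤ) - 1 - j = (v : ℤ) - 1 - 1 by omega]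
              exact this
          refine ⟨left, ?_⟩
          rcases le_or_gt (m : ℤ) ((v : ℤ) + j) with hbig | hbig
          · exact S0 _ (Or.inr hbig)
          by_cases hc : m - v - j < f
          · have h5 := S5 (m - v - j) hc
            have z1 : a ((m : ℤ) - ((m - v - j : ℕ) : ℤ) - 1) = 0 := by
              have := (IH (j - 1) (by omega)).2
              rw [show (v : ℤ) + ((j - 1 : ℕ) : ℤ) = (m : ℤ) - ((m - v - j : ℕ) : ℤ) - 1 by omega] at this
              exact this
            have z2 : a (((m - v - j : ℕ) : ℤ)) = 0 := by
              rcases eq_or_lt_of_le (show m ≤ 2 * v by omega) with hpar | hpar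
              · -- m even: index = v - j = v - 1 - (j-1)
                have := (IH (j - 1) (by omega)).1
                rw [show (v : ℤ) - 1 - ((j - 1 : ℕ) : ℤ) = ((m - v - j : ℕ) : ℤ) by omega] at this
                exact this
              · -- m odd: index = v - 1 - j : use left
                rw [show ((m - v - j : ℕ) : ℤ) = (v : ℤ) - 1 - j by omega]
                exact left
            rw [z1, z2] at h5
            simp at h5
            have := h5.resolve_left hs
            rw [show (v : ℤ) + j = (m : ℤ) - ((m - v - j : ℕ) : ℤ) by omega]
            exact this
          · have hj : j = 1 := by omega
            have h3 := S3 (v + 1) (by omega) (by omega)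
            rw [show ((v + 1 : ℕ) : ℤ) - 1 = (v : ℤ) by omega, Hm2] at h3
            simp at h3
            have := h3.resolve_left hs
            rw [show (v : ℤ) + j = ((v + 1 : ℕ) : ℤ) by omega]
            exact this
        intro i
        rcases lt_or_ge i 0 with h | h
        · exact S0 _ (Or.inl h)
        rcases lt_or_ge i (m : ℤ) with h2 | h2
        · rcases le_or_gt i ((v : ℤ) - 1) with h3 | h3
          · have := (main (v - 1 - i.toNat)).1
            rw [show (v : ℤ) - 1 - ((v - 1 - i.toNat : ℕ) : ℤ) = i by omega] at this
            exact this
          · have := (main (i.toNat - v)).2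
            rw [show (v : ℤ) + ((i.toNat - v : ℕ) : ℤ) = i by omega] at this
            exact this
        · exact S0 _ (Or.inr h2)
    · -- CASE I
      have hq := hqz
      have main : ∀ t : ℕ, a (t : ℤ) = 0 ∧ a ((m : ℤ) - 1 - t) = 0 := by
        intro t
        induction t using Nat.strong_induction_on with
        | _ t IH =>
        rcases le_or_gt m t with hmt | hmt
        · exact ⟨S0 _ (Or.inr (by omega)), S0 _ (Or.inl (by omega))⟩
        have h1 : a (t : ℤ) = 0 := by
          rcases Nat.eq_zero_or_pos t with rfl | ht1
          · simpa using (mul_eq_zero.mp S1).resolve_left hq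
          rcases le_or_gt t f with htf | htf
          · have h5 := S5 (t - 1) (by omega)
            have z1 : a ((m : ℤ) - ((t - 1 : ℕ) : ℤ) - 1) = 0 := by
              have := (IH (t - 1) (by omega)).2
              rw [show (m : ℤ) - 1 - ((t - 1 : ℕ) : ℤ) = (m : ℤ) - ((t - 1 : ℕ) : ℤ) - 1 by ring] at this
              exact this
            have z2 : a ((m : ℤ) - ((t - 1 : ℕ) : ℤ)) = 0 := by
              rcases Nat.lt_or_ge t 2 with h | h
              · exact S0 _ (Or.inr (by omega))
              · have := (IH (t - 2) (by omega)).2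
                rw [show (m : ℤ) - 1 - ((t - 2 : ℕ) : ℤ) = (m : ℤ) - ((t - 1 : ℕ) : ℤ) by omega] at this
                exact this
            have z3 : a ((t - 1 : ℕ) : ℤ) = 0 := (IH (t - 1) (by omega)).1
            rw [z1, z2, z3] at h5
            simp at h5
            have := h5.resolve_left hq
            rw [show ((t - 1 : ℕ) : ℤ) + 1 = (t : ℤ) by omega] at this
            exact this
          · have := (IH (m - 1 - t) (by omega)).2
            rw [show (m : ℤ) - 1 - ((m - 1 - t : ℕ) : ℤ) = (t : ℤ) by omega] at this
            exact this
        refine ⟨h1, ?_⟩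
        rcases le_or_gt t f with htf | htf
        · rcases lt_or_ge t (m / 2) with htm | htm
          · have h4 := S4 t htm
            have z1 : a ((t : ℤ) - 1) = 0 := by
              rcases Nat.eq_zero_or_pos t with rfl | ht1
              · exact S0 _ (Or.inl (by omega))
              · have := (IH (t - 1) (by omega)).1
                rw [show ((t - 1 : ℕ) : ℤ) = (t : ℤ) - 1 by omega] at this
                exact this
            have z2 : a ((m : ℤ) - t) = 0 := by
              rcases Nat.eq_zero_or_pos t with rfl | ht1
              · exact S0 _ (Or.inr (by omega))
              · have := (IH (t - 1) (by omega)).2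
                rw [show (m : ℤ) - 1 - ((t - 1 : ℕ) : ℤ) = (m : ℤ) - t by omega] at this
                exact this
            rw [z1, h1, z2] at h4
            simp at h4
            rcases h4 with h | h
            · exact absurd h hp
            · rw [show (m : ℤ) - 1 - t = (m : ℤ) - t - 1 by ring]
              exact h
          · rw [show (m : ℤ) - 1 - t = (v : ℤ) - 1 by omega]
            exact Hm1
        · have := (IH (m - 1 - t) (by omega)).1
          rw [show ((m - 1 - t : ℕ) : ℤ) = (m : ℤ) - 1 - t by omega] at this
          exact this
      intro i
      rcases lt_or_ge i 0 with h | h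
      · exact S0 _ (Or.inl h)
      rcases lt_or_ge i (m : ℤ) with h2 | h2
      · have := (main i.toNat).1
        rw [show ((i.toNat : ℕ) : ℤ) = i by omega] at this
        exact this
      · exact S0 _ (Or.inr h2)

lemma psi0 (m : ℕ) (w : ℕ × ℕ → ℂ) (k : ℕ) (hk : k ≤ m) :
    Psi m w k 0 = if 1 ≤ k then w (k - 1, k) else 0 := by
  have h : Psi m w k 0 = ∑ i ∈ Finset.range (m + 1), if (i, k) ∈ E1 m then w (i, k) else 0 := by
    simp [Psi]
  rw [h]
  rcases Nat.eq_zero_or_pos k with rfl | hk1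
  · rw [if_neg (by omega)]
    apply Finset.sum_eq_zero
    intro i _
    rw [if_neg]
    rintro ⟨h1, _⟩
    omega
  · rw [if_pos (show 1 ≤ k by omega), Finset.sum_eq_single (k - 1)]
    · rw [if_pos ⟨by omega, hk⟩]
    · intro i _ hne
      rw [if_neg]
      rintro ⟨h1, _⟩
      omega
    · intro habs
      exact absurd (Finset.mem_range.mpr (by omega)) habs

lemma psi1 (m : ℕ) (w : ℕ × ℕ → ℂ) (k : ℕ) (hk : k ≤ m) :
    Psi m w k 1 = if k < m then w (k, k + 1) else 0 := by
  have h : Psi m w k 1 = ∑ i ∈ Finset.range (m + 1), if (k, i) ∈ E1 m then w (k, i) else 0 := by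
    simp [Psi]
  rw [h]
  rcases lt_or_ge k m with hk1 | hk1
  · rw [if_pos hk1, Finset.sum_eq_single (k + 1)]
    · rw [if_pos ⟨rfl, by omega⟩]
    · intro i _ hne
      rw [if_neg]
      rintro ⟨h1, _⟩
      omega
    · intro habs
      exact absurd (Finset.mem_range.mpr (by omega)) habs
  · rw [if_neg (by omega)]
    apply Finset.sum_eq_zero
    intro i _
    rw [if_neg]
    rintro ⟨h1, h2⟩
    omega

lemma mem_E2_iff (m i j : ℕ) : (i, j) ∈ E2 m ↔
    ((∃ t, t < m / 2 ∧ i = t ∧ j = m - t) ∨ (∃ t, t < (m - 1) / 2 ∧ i = m - t ∧ j = t + 1)) := by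
  constructor
  · rintro (⟨t, ht, he⟩ | ⟨t, ht, he⟩)
    · exact Or.inl ⟨t, ht, by simpa using congrArg Prod.fst he, by simpa using congrArg Prod.snd he⟩
    · exact Or.inr ⟨t, ht, by simpa using congrArg Prod.fst he, by simpa using congrArg Prod.snd he⟩
  · rintro (⟨t, ht, h1, h2⟩ | ⟨t, ht, h1, h2⟩)
    · exact Or.inl ⟨t, ht, by rw [h1, h2]⟩
    · exact Or.inr ⟨t, ht, by rw [h1, h2]⟩

lemma psi2 (m : ℕ) (w : ℕ × ℕ → ℂ) (k : ℕ) (hk : k ≤ m) :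
    Psi m w k 2 = if m - k < m / 2 then w (m - k, k)
      else if 1 ≤ k ∧ k ≤ (m - 1) / 2 then w (m - k + 1, k) else 0 := by
  have h : Psi m w k 2 = ∑ i ∈ Finset.range (m + 1), if (i, k) ∈ E2 m then w (i, k) else 0 := by
    simp [Psi]
  rw [h]
  rcases lt_or_ge (m - k) (m / 2) with h1 | h1
  · rw [if_pos h1, Finset.sum_eq_single (m - k)]
    · rw [if_pos ((mem_E2_iff m _ _).mpr (Or.inl ⟨m - k, h1, rfl, by omega⟩))]
    · intro i _ hne
      rw [if_neg]
      rw [mem_E2_iff]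
      rintro (⟨t, ht, rfl, h3⟩ | ⟨t, ht, rfl, h3⟩) <;> omega
    · intro habs
      exact absurd (Finset.mem_range.mpr (by omega)) habs
  · rw [if_neg (by omega)]
    by_cases h2 : 1 ≤ k ∧ k ≤ (m - 1) / 2
    · rw [if_pos h2, Finset.sum_eq_single (m - k + 1)]
      · rw [if_pos ((mem_E2_iff m _ _).mpr (Or.inr ⟨k - 1, by omega, by omega, by omega⟩))]
      · intro i _ hne
        rw [if_neg]
        rw [mem_E2_iff]
        rintro (⟨t, ht, rfl, h3⟩ | ⟨t, ht, rfl, h3⟩) <;> omega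
      · intro habs
        exact absurd (Finset.mem_range.mpr (by omega)) habs
    · rw [if_neg h2]
      apply Finset.sum_eq_zero
      intro i _
      rw [if_neg]
      rw [mem_E2_iff]
      rintro (⟨t, ht, rfl, h3⟩ | ⟨t, ht, rfl, h3⟩) <;> omega

lemma psi3 (m : ℕ) (w : ℕ × ℕ → ℂ) (k : ℕ) (hk : k ≤ m) :
    Psi m w k 3 = if k < m / 2 then w (k, m - k)
      else if m - (m - 1) / 2 < k then w (k, m - k + 1) else 0 := by
  have h : Psi m w k 3 = ∑ i ∈ Finset.range (m + 1), if (k, i) ∈ E2 m then w (k, i) else 0 := by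
    simp [Psi]
  rw [h]
  rcases lt_or_ge k (m / 2) with h1 | h1
  · rw [if_pos h1, Finset.sum_eq_single (m - k)]
    · rw [if_pos ((mem_E2_iff m _ _).mpr (Or.inl ⟨k, h1, rfl, rfl⟩))]
    · intro i _ hne
      rw [if_neg]
      rw [mem_E2_iff]
      rintro (⟨t, ht, h2, rfl⟩ | ⟨t, ht, h2, rfl⟩) <;> omega
    · intro habs
      exact absurd (Finset.mem_range.mpr (by omega)) habs
  · rw [if_neg (by omega)]
    by_cases h2 : m - (m - 1) / 2 < k
    · rw [if_pos h2, Finset.sum_eq_single (m - k + 1)]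
      · rw [if_pos ((mem_E2_iff m _ _).mpr (Or.inr ⟨m - k, by omega, by omega, by omega⟩))]
      · intro i _ hne
        rw [if_neg]
        rw [mem_E2_iff]
        rintro (⟨t, ht, h3, rfl⟩ | ⟨t, ht, h3, rfl⟩) <;> omega
      · intro habs
        exact absurd (Finset.mem_range.mpr (by omega)) habs
    · rw [if_neg h2]
      apply Finset.sum_eq_zero
      intro i _
      rw [if_neg]
      rw [mem_E2_iff]
      rintro (⟨t, ht, h3, rfl⟩ | ⟨t, ht, h3, rfl⟩) <;> omega


lemma psiMem (m : ℕ) (w : ℕ × ℕ → ℂ) (k : ℕ) (hk : k ≤ m) : Psi m w k ∈ Zw m w :=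
  Submodule.subset_span ⟨k, hk, rfl⟩

lemma hyper (m : ℕ) (w : ℕ × ℕ → ℂ) (c : Fin 4) (hall : ∀ k, k ≤ m → Psi m w k c = 0) :
    ∀ z ∈ Zw m w, z c = 0 := by
  intro z hz
  induction hz using Submodule.span_induction with
  | mem x hx => obtain ⟨k, hk, rfl⟩ := hx; exact hall k hk
  | zero => rfl
  | add x y _ _ hx hy => simp [hx, hy]
  | smul t x _ hx => simp [hx]

lemma graphrel (K : Submodule ℂ (Fin 4 → ℂ)) (hK : Module.finrank ℂ K ≤ 2)
    (z z' : Fin 4 → ℂ) (hz : z ∈ K) (hz' : z' ∈ K)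
    (h0 : z 0 = 0) (h1 : z 1 ≠ 0) (h0' : z' 0 ≠ 0) (h1' : z' 1 = 0) :
    ∃ p q r s : ℂ, ∀ ζ ∈ K, ζ 2 = p * ζ 0 + q * ζ 1 ∧ ζ 3 = r * ζ 0 + s * ζ 1 := by
  have hli : LinearIndependent ℂ ![z, z'] := by
    rw [LinearIndependent.pair_iff]
    intro a b hab
    have e1 := congrFun hab 1
    have e0 := congrFun hab 0
    simp [h0, h1'] at e1 e0
    exact ⟨e1.resolve_right h1, e0.resolve_right h0'⟩
  have hrange : Set.range ![z, z'] = {z, z'} := by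
    ext u
    simp [Matrix.range_cons, Matrix.range_empty, or_comm]
  have hfr2 : Module.finrank ℂ (Submodule.span ℂ {z, z'} : Submodule ℂ (Fin 4 → ℂ)) = 2 := by
    have := finrank_span_eq_card hli
    rw [hrange] at this
    simpa using this
  have hle : Submodule.span ℂ {z, z'} ≤ K := by
    rw [Submodule.span_le]
    exact Set.insert_subset_iff.mpr ⟨hz, Set.singleton_subset_iff.mpr hz'⟩
  have hspaneq : Submodule.span ℂ {z, z'} = K :=
    Submodule.eq_of_le_of_finrank_le hle (by omega)
  refine ⟨z' 2 / z' 0, z 2 / z 1, z' 3 / z' 0, z 3 / z 1, ?_⟩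
  intro ζ hζ
  rw [← hspaneq] at hζ
  induction hζ using Submodule.span_induction with
  | mem u hu =>
    simp only [Set.mem_insert_iff, Set.mem_singleton_iff] at hu
    rcases hu with rfl | rfl
    · rw [h0]
      constructor
      · rw [mul_zero, zero_add, div_mul_cancel₀ _ h1]
      · rw [mul_zero, zero_add, div_mul_cancel₀ _ h1]
    · rw [h1']
      constructor
      · rw [mul_zero, add_zero, div_mul_cancel₀ _ h0']
      · rw [mul_zero, add_zero, div_mul_cancel₀ _ h0']
  | zero => norm_num
  | add u u' _ _ hu hu' =>
    constructor
    · have := hu.1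
      have := hu'.1
      simp only [Pi.add_apply]
      rw [hu.1, hu'.1]; ring
    · simp only [Pi.add_apply]
      rw [hu.2, hu'.2]; ring
  | smul t u _ hu =>
    constructor
    · simp only [Pi.smul_apply, smul_eq_mul]
      rw [hu.1]; ring
    · simp only [Pi.smul_apply, smul_eq_mul]
      rw [hu.2]; ring

lemma detlem (p q r s u0 u1 u3 v0 v1 v2 : ℂ)
    (hu2 : 0 = p * u0 + q * u1) (hu3 : u3 = r * u0 + s * u1) (hu3ne : u3 ≠ 0)
    (hv2 : v2 = p * v0 + q * v1) (hv2ne : v2 ≠ 0) (hv3 : 0 = r * v0 + s * v1) :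
    p * s - q * r ≠ 0 := by
  intro hd
  by_cases hrs : r = 0 ∧ s = 0
  · obtain ⟨hr, hs⟩ := hrs
    rw [hr, hs] at hu3
    simp at hu3
    exact hu3ne hu3
  · obtain ⟨c, hcp, hcq⟩ : ∃ c, p = c * r ∧ q = c * s := by
      by_cases hr : r = 0
      · have hs : s ≠ 0 := fun h => hrs ⟨hr, h⟩
        refine ⟨q / s, ?_, (div_mul_cancel₀ q hs).symm⟩
        rw [hr, mul_zero]
        rw [hr, mul_zero, sub_zero] at hd
        exact (mul_eq_zero.mp hd).resolve_right hs
      · refine ⟨p / r, (div_mul_cancel₀ p hr).symm, ?_⟩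
        field_simp
        linear_combination -hd
    have h1 : c * u3 = 0 := by
      rw [hcp, hcq] at hu2
      rw [hu3]
      linear_combination -hu2
    have hc : c = 0 := (mul_eq_zero.mp h1).resolve_right hu3ne
    rw [hc, zero_mul] at hcp hcq
    rw [hcp, hcq] at hv2
    simp at hv2
    exact hv2ne hv2



/-- If `dim Z_w ≤ 2`, then `Z_w` is contained in one of the four coordinate
hyperplanes of `ℂ⁴`. -/
theorem stmt15 (m : ℕ) (hm : 1 ≤ m) (w : ℕ × ℕ → ℂ)
    (h : Module.finrank ℂ (Zw m w) ≤ 2) :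
    ∃ c : Fin 4, ∀ z ∈ Zw m w, z c = 0 := by
  by_cases hA : ∀ i, i < m → w (i, i + 1) = 0
  · refine ⟨1, hyper m w 1 ?_⟩
    intro k hk
    rw [psi1 m w k hk]
    split
    · exact hA k ‹_›
    · rfl
  push_neg at hA
  by_cases hB : (∀ k, k < m / 2 → w (k, m - k) = 0) ∧
      (∀ t, t < (m - 1) / 2 → w (m - t, t + 1) = 0)
  · refine ⟨3, hyper m w 3 ?_⟩
    intro k hk
    rw [psi3 m w k hk]
    split
    · exact hB.1 k ‹_›
    split
    · have := hB.2 (m - k) (by omega)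
      rw [show m - (m - k) = k by omega] at this
      exact this
    · rfl
  exfalso
  -- a-side witnesses
  set i0 := Nat.find hA with hi0def
  have hi0 := Nat.find_spec hA
  have hz0 : Psi m w i0 0 = 0 := by
    rw [psi0 m w i0 (by omega)]
    split
    · by_contra hne
      exact Nat.find_min hA (show i0 - 1 < i0 by omega)
        ⟨by omega, by rw [show i0 - 1 + 1 = i0 by omega]; exact hne⟩
    · rfl
  have hz1 : Psi m w i0 1 ≠ 0 := by
    rw [psi1 m w i0 (by omega), if_pos hi0.1]
    exact hi0.2
  set i1 := Nat.findGreatest (fun i => i < m ∧ w (i, i + 1) ≠ 0) m with hi1def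
  have hi1 : i1 < m ∧ w (i1, i1 + 1) ≠ 0 := by
    rw [hi1def]
    exact Nat.findGreatest_spec (P := fun i => i < m ∧ w (i, i + 1) ≠ 0) (show i0 ≤ m by omega) hi0
  have hgr : ∀ k, i1 < k → k ≤ m → ¬(k < m ∧ w (k, k + 1) ≠ 0) := by
    intro k hk1 hk2
    rw [hi1def] at hk1
    exact Nat.findGreatest_is_greatest (P := fun i => i < m ∧ w (i, i + 1) ≠ 0) hk1 hk2
  have hz'0 : Psi m w (i1 + 1) 0 ≠ 0 := by
    rw [psi0 m w (i1 + 1) (by omega), if_pos (by omega), show i1 + 1 - 1 = i1 by omega]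
    exact hi1.2
  have hz'1 : Psi m w (i1 + 1) 1 = 0 := by
    rw [psi1 m w (i1 + 1) (by omega)]
    split
    · by_contra hne
      exact hgr (i1 + 1) (by omega) (by omega) ⟨‹_›, hne⟩
    · rfl
  -- c-side witnesses
  have hWit : (∃ k, k ≤ m ∧ Psi m w k 3 ≠ 0) ∧ (∃ k, k ≤ m ∧ Psi m w k 2 ≠ 0) := by
    rcases not_and_or.mp hB with hB1 | hB1
    · push_neg at hB1
      obtain ⟨t, ht, hne⟩ := hB1
      constructor
      · exact ⟨t, by omega, by rw [psi3 m w t (by omega), if_pos ht]; exact hne⟩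
      · refine ⟨m - t, by omega, ?_⟩
        rw [psi2 m w (m - t) (by omega), if_pos (by omega), show m - (m - t) = t by omega]
        exact hne
    · push_neg at hB1
      obtain ⟨t, ht, hne⟩ := hB1
      constructor
      · refine ⟨m - t, by omega, ?_⟩
        rw [psi3 m w (m - t) (by omega), if_neg (by omega), if_pos (by omega),
          show m - (m - t) + 1 = t + 1 by omega]
        exact hne
      · refine ⟨t + 1, by omega, ?_⟩
        rw [psi2 m w (t + 1) (by omega), if_neg (by omega), if_pos (by omega),
          show m - (t + 1) + 1 = m - t by omega]
        exact hne
  obtain ⟨hW3, hW2⟩ := hWit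
  -- minimal cout-nonzero vertex in zigzag order
  have hS3ne : ((Finset.range (m + 1)).filter (fun k => Psi m w k 3 ≠ 0)).Nonempty := by
    obtain ⟨k, hk1, hk2⟩ := hW3
    exact ⟨k, Finset.mem_filter.mpr ⟨Finset.mem_range.mpr (by omega), hk2⟩⟩
  obtain ⟨ks, hksmem, hksmin⟩ := Finset.exists_min_image
    ((Finset.range (m + 1)).filter (fun k => Psi m w k 3 ≠ 0))
    (fun k => if 2 * k < m then 2 * k else 2 * (m - k) + 1) hS3ne
  have hksm : ks ≤ m := by
    have := Finset.mem_range.mp (Finset.mem_filter.mp hksmem).1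
    omega
  have hks3 : Psi m w ks 3 ≠ 0 := (Finset.mem_filter.mp hksmem).2
  have hks2 : Psi m w ks 2 = 0 := by
    by_contra hne
    rw [psi2 m w ks hksm] at hne
    by_cases hb1 : m - ks < m / 2
    · rw [if_pos hb1] at hne
      have hpredmem : m - ks ∈ (Finset.range (m + 1)).filter (fun k => Psi m w k 3 ≠ 0) := by
        refine Finset.mem_filter.mpr ⟨Finset.mem_range.mpr (by omega), ?_⟩
        rw [psi3 m w (m - ks) (by omega), if_pos hb1, show m - (m - ks) = ks by omega]
        exact hne
      have hcmp := hksmin _ hpredmem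
      rw [if_neg (show ¬ 2 * ks < m by omega), if_pos (show 2 * (m - ks) < m by omega)] at hcmp
      omega
    · rw [if_neg hb1] at hne
      by_cases hb2 : 1 ≤ ks ∧ ks ≤ (m - 1) / 2
      · rw [if_pos hb2] at hne
        have hpredmem : m - ks + 1 ∈ (Finset.range (m + 1)).filter (fun k => Psi m w k 3 ≠ 0) := by
          refine Finset.mem_filter.mpr ⟨Finset.mem_range.mpr (by omega), ?_⟩
          rw [psi3 m w (m - ks + 1) (by omega), if_neg (by omega), if_pos (by omega),
            show m - (m - ks + 1) + 1 = ks by omega]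
          exact hne
        have hcmp := hksmin _ hpredmem
        rw [if_pos (show 2 * ks < m by omega),
          if_neg (show ¬ 2 * (m - ks + 1) < m by omega)] at hcmp
        omega
      · rw [if_neg hb2] at hne
        exact hne rfl
  -- maximal cin-nonzero vertex in zigzag order
  have hS2ne : ((Finset.range (m + 1)).filter (fun k => Psi m w k 2 ≠ 0)).Nonempty := by
    obtain ⟨k, hk1, hk2⟩ := hW2
    exact ⟨k, Finset.mem_filter.mpr ⟨Finset.mem_range.mpr (by omega), hk2⟩⟩
  obtain ⟨kt, hktmem, hktmax⟩ := Finset.exists_max_image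
    ((Finset.range (m + 1)).filter (fun k => Psi m w k 2 ≠ 0))
    (fun k => if 2 * k < m then 2 * k else 2 * (m - k) + 1) hS2ne
  have hktm : kt ≤ m := by
    have := Finset.mem_range.mp (Finset.mem_filter.mp hktmem).1
    omega
  have hkt2 : Psi m w kt 2 ≠ 0 := (Finset.mem_filter.mp hktmem).2
  have hkt3 : Psi m w kt 3 = 0 := by
    by_contra hne
    rw [psi3 m w kt hktm] at hne
    by_cases hb1 : kt < m / 2
    · rw [if_pos hb1] at hne
      have hsuccmem : m - kt ∈ (Finset.range (m + 1)).filter (fun k => Psi m w k 2 ≠ 0) := by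
        refine Finset.mem_filter.mpr ⟨Finset.mem_range.mpr (by omega), ?_⟩
        rw [psi2 m w (m - kt) (by omega), if_pos (show m - (m - kt) < m / 2 by omega),
          show m - (m - kt) = kt by omega]
        exact hne
      have hcmp := hktmax _ hsuccmem
      rw [if_pos (show 2 * kt < m by omega), if_neg (show ¬ 2 * (m - kt) < m by omega)] at hcmp
      omega
    · rw [if_neg hb1] at hne
      by_cases hb2 : m - (m - 1) / 2 < kt
      · rw [if_pos hb2] at hne
        have hsuccmem : m - kt + 1 ∈ (Finset.range (m + 1)).filter (fun k => Psi m w k 2 ≠ 0) := by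
          refine Finset.mem_filter.mpr ⟨Finset.mem_range.mpr (by omega), ?_⟩
          rw [psi2 m w (m - kt + 1) (by omega), if_neg (by omega), if_pos (by omega),
            show m - (m - kt + 1) + 1 = kt by omega]
          exact hne
        have hcmp := hktmax _ hsuccmem
        rw [if_neg (show ¬ 2 * kt < m by omega),
          if_pos (show 2 * (m - kt + 1) < m by omega)] at hcmp
        omega
      · rw [if_neg hb2] at hne
        exact hne rfl
  -- build the linear relation
  obtain ⟨pp, qq, rr, ss, hrel⟩ := graphrel (Zw m w) h (Psi m w i0) (Psi m w (i1 + 1))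
    (psiMem m w i0 (by omega)) (psiMem m w (i1 + 1) (by omega)) hz0 hz1 hz'0 hz'1
  have hu := hrel (Psi m w ks) (psiMem m w ks hksm)
  have hv := hrel (Psi m w kt) (psiMem m w kt hktm)
  have hdet : pp * ss - qq * rr ≠ 0 := by
    refine detlem pp qq rr ss (Psi m w ks 0) (Psi m w ks 1) (Psi m w ks 3)
      (Psi m w kt 0) (Psi m w kt 1) (Psi m w kt 2) ?_ hu.2 hks3 hv.1 hkt2 ?_
    · rw [← hks2]; exact hu.1
    · rw [← hkt3]; exact hv.2
  -- the sequence
  set aseq : ℤ → ℂ := fun i => if 0 ≤ i ∧ i < (m : ℤ) then w (i.toNat, i.toNat + 1) else 0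
    with haseq
  have hS0 : ∀ i : ℤ, i < 0 ∨ (m : ℤ) ≤ i → aseq i = 0 := by
    intro i hi
    rw [haseq]
    simp only
    rw [if_neg (by omega)]
  have haval : ∀ i : ℕ, i < m → aseq (i : ℤ) = w (i, i + 1) := by
    intro i hi
    rw [haseq]
    simp only
    rw [if_pos (by constructor <;> omega)]
    simp
  have hP0 : ∀ k : ℕ, k ≤ m → Psi m w k 0 = aseq ((k : ℤ) - 1) := by
    intro k hk
    rw [psi0 m w k hk]
    rcases Nat.eq_zero_or_pos k with rfl | h1
    · rw [if_neg (by omega)]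
      exact (hS0 _ (Or.inl (by omega))).symm
    · rw [if_pos (show 1 ≤ k by omega), show (k : ℤ) - 1 = ((k - 1 : ℕ) : ℤ) by omega,
        haval (k - 1) (by omega), show k - 1 + 1 = k by omega]
  have hP1 : ∀ k : ℕ, k ≤ m → Psi m w k 1 = aseq (k : ℤ) := by
    intro k hk
    rw [psi1 m w k hk]
    rcases lt_or_ge k m with h1 | h1
    · rw [if_pos h1, haval k h1]
    · rw [if_neg (by omega)]
      exact (hS0 _ (Or.inr (by omega))).symm
  -- the five structural facts and key
  have hzero : ∀ i : ℤ, aseq i = 0 := by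
    refine key m (m - m / 2) ((m - 1) / 2) hm rfl rfl pp qq rr ss hdet aseq hS0 ?_ ?_ ?_ ?_ ?_
    · -- S1
      have h2 := (hrel (Psi m w 0) (psiMem m w 0 (by omega))).1
      rw [psi2 m w 0 (by omega), if_neg (by omega), if_neg (by omega),
        hP0 0 (by omega), hP1 0 (by omega)] at h2
      rw [show ((0 : ℕ) : ℤ) - 1 = (-1 : ℤ) by norm_num] at h2
      rw [hS0 (-1) (Or.inl (by omega))] at h2
      rw [show ((0 : ℕ) : ℤ) = (0 : ℤ) by norm_num] at h2
      linear_combination -h2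
    · -- S2
      have h2 := (hrel (Psi m w (m - m / 2)) (psiMem m w (m - m / 2) (by omega))).1
      rw [psi2 m w (m - m / 2) (by omega), if_neg (by omega), if_neg (by omega),
        hP0 (m - m / 2) (by omega), hP1 (m - m / 2) (by omega)] at h2
      linear_combination -h2
    · -- S3
      intro k hk1 hk2
      have h2 := (hrel (Psi m w k) (psiMem m w k (by omega))).2
      rw [psi3 m w k (by omega), if_neg (by omega), if_neg (by omega),
        hP0 k (by omega), hP1 k (by omega)] at h2
      linear_combination -h2
    · -- S4
      intro k hk
      have h1 := (hrel (Psi m w k) (psiMem m w k (by omega))).2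
      rw [psi3 m w k (by omega), if_pos hk, hP0 k (by omega), hP1 k (by omega)] at h1
      have h2 := (hrel (Psi m w (m - k)) (psiMem m w (m - k) (by omega))).1
      rw [psi2 m w (m - k) (by omega), if_pos (show m - (m - k) < m / 2 by omega),
        show m - (m - k) = k by omega, hP0 (m - k) (by omega), hP1 (m - k) (by omega),
        show ((m - k : ℕ) : ℤ) = (m : ℤ) - k by omega] at h2
      rw [← h1, ← h2]
    · -- S5
      intro k hk
      have h1 := (hrel (Psi m w (m - k)) (psiMem m w (m - k) (by omega))).2
      rw [psi3 m w (m - k) (by omega), if_neg (by omega), if_pos (by omega),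
        show m - (m - k) + 1 = k + 1 by omega, hP0 (m - k) (by omega), hP1 (m - k) (by omega),
        show ((m - k : ℕ) : ℤ) = (m : ℤ) - k by omega] at h1
      have h2 := (hrel (Psi m w (k + 1)) (psiMem m w (k + 1) (by omega))).1
      rw [psi2 m w (k + 1) (by omega), if_neg (by omega), if_pos (by omega),
        show m - (k + 1) + 1 = m - k by omega, hP0 (k + 1) (by omega), hP1 (k + 1) (by omega),
        show ((k + 1 : ℕ) : ℤ) - 1 = (k : ℤ) by omega,
        show ((k + 1 : ℕ) : ℤ) = (k : ℤ) + 1 by omega] at h2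
      rw [← h1, ← h2]
  have := hzero (i0 : ℤ)
  rw [haval i0 hi0.1] at this
  exact hi0.2 this
end

section
/- A tensor t ∈ ℂ² ⊗ ℂ² ⊗ ℂ^{m+1} has border rank at most 2 if and only if the image of the induced linear map (ℂ^{m+1})* → ℂ²⊗ℂ², ℓ ↦ (id⊗id⊗ℓ)(t), has dimension at most 2. In particular, for tensors t in the subspace W spanned by the vectors u_{i,j} = e₀⊗e₀⊗e_j + e₀⊗e₁⊗e_i + e₁⊗e₀⊗e_i for (i,j) ∈ E₁ and v_{i,j} = e₁⊗e₀⊗e_j + e₁⊗e₁⊗e_i + e₀⊗e₀⊗e_i for (i,j) ∈ E₂, border rank ≤ 2 is equivalent to dim Z_w ≤ 2 where w = Φ⁻¹(t) is the corresponding edge-weight function. -/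
open scoped Classical

/-- Tensors in `ℂ² ⊗ ℂ² ⊗ ℂ^{m+1}` (in coordinates) of rank at most `2`. -/
def rankLE2 (m : ℕ) (t : Fin 2 → Fin 2 → Fin (m + 1) → ℂ) : Prop :=
  ∃ (a a' b b' : Fin 2 → ℂ) (c c' : Fin (m + 1) → ℂ),
    ∀ i j k, t i j k = a i * b j * c k + a' i * b' j * c' k

/-- Border rank at most `2`: lying in the closure of the set of rank `≤ 2` tensors. -/
def borderRankLE2 (m : ℕ) (t : Fin 2 → Fin 2 → Fin (m + 1) → ℂ) : Prop :=
  t ∈ closure {s : Fin 2 → Fin 2 → Fin (m + 1) → ℂ | rankLE2 m s}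

/-- The image of the flattening `(ℂ^{m+1})* → ℂ² ⊗ ℂ²`, `ℓ ↦ (id ⊗ id ⊗ ℓ)(t)`:
the span of the slices `t(·,·,k)`. -/
noncomputable def flattenImage (m : ℕ) (t : Fin 2 → Fin 2 → Fin (m + 1) → ℂ) :
    Submodule ℂ (Fin 2 → Fin 2 → ℂ) :=
  Submodule.span ℂ (Set.range fun k : Fin (m + 1) => fun i j => t i j k)

/-- The basis tensor `u_{i,j} = e₀⊗e₀⊗e_j + e₀⊗e₁⊗e_i + e₁⊗e₀⊗e_i`. -/
def uT (m i j : ℕ) : Fin 2 → Fin 2 → Fin (m + 1) → ℂ := fun a b c =>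
  (if a = 0 ∧ b = 0 ∧ (c : ℕ) = j then 1 else 0) +
  (if a = 0 ∧ b = 1 ∧ (c : ℕ) = i then 1 else 0) +
  (if a = 1 ∧ b = 0 ∧ (c : ℕ) = i then 1 else 0)

/-- The basis tensor `v_{i,j} = e₁⊗e₀⊗e_j + e₁⊗e₁⊗e_i + e₀⊗e₀⊗e_i`. -/
def vT (m i j : ℕ) : Fin 2 → Fin 2 → Fin (m + 1) → ℂ := fun a b c =>
  (if a = 1 ∧ b = 0 ∧ (c : ℕ) = j then 1 else 0) +
  (if a = 1 ∧ b = 1 ∧ (c : ℕ) = i then 1 else 0) +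
  (if a = 0 ∧ b = 0 ∧ (c : ℕ) = i then 1 else 0)

/-- The isomorphism `Φ : ℂ^E → W`, sending an edge-weight function `w` to
`∑_{(i,j)∈E₁} w(i,j)·u_{i,j} + ∑_{(i,j)∈E₂} w(i,j)·v_{i,j}`. -/
noncomputable def PhiT (m : ℕ) (w : ℕ × ℕ → ℂ) : Fin 2 → Fin 2 → Fin (m + 1) → ℂ :=
  fun a b c =>
    ∑ i ∈ Finset.range (m + 1), ∑ j ∈ Finset.range (m + 1),
      ((if (i, j) ∈ E1 m then w (i, j) * uT m i j a b c else 0) +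
       (if (i, j) ∈ E2 m then w (i, j) * vT m i j a b c else 0))

lemma rank1_factor (p q r s : ℂ) (h : p * s - q * r = 0) :
    ∃ u1 u2 v1 v2 : ℂ, p = u1*v1 ∧ q = u1*v2 ∧ r = u2*v1 ∧ s = u2*v2 := by
  by_cases hp : p = 0
  · subst hp
    by_cases hq : q = 0
    · subst hq
      exact ⟨0, 1, r, s, by ring, by ring, by ring, by ring⟩
    · have hr : r = 0 := by
        have : q * r = 0 := by linear_combination -h
        rcases mul_eq_zero.mp this with h' | h' <;> tauto
      exact ⟨q, s, 0, 1, by simp, by ring, by simp [hr], by ring⟩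
  · refine ⟨p, r, 1, q/p, by ring, by field_simp, by ring, ?_⟩
    field_simp; ring
    linear_combination h

lemma quad_avoid (α β γ : ℂ) (hα : α ≠ 0) (ε : ℝ) (hε : 0 < ε) :
    ∃ z : ℂ, ‖z‖ < ε ∧ α*z^2 + β*z + γ ≠ 0 := by
  by_contra hc
  push_neg at hc
  have key : ∀ r : ℝ, 0 < r → r < ε → α*(r:ℂ)^2 + β*r + γ = 0 := by
    intro r hr hrε
    refine hc _ ?_
    simpa [Complex.norm_real, abs_of_pos hr] using hrε
  have h1 := key (ε/2) (by linarith) (by linarith)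
  have h2 := key (ε/4) (by linarith) (by linarith)
  have h3 := key (ε/8) (by linarith) (by linarith)
  have d12 : ((ε/2 : ℝ) : ℂ) - ((ε/4 : ℝ) : ℂ) ≠ 0 := by
    rw [sub_ne_zero]
    intro h
    have := Complex.ofReal_inj.mp h
    linarith
  have d13 : ((ε/2 : ℝ) : ℂ) - ((ε/8 : ℝ) : ℂ) ≠ 0 := by
    rw [sub_ne_zero]
    intro h
    have := Complex.ofReal_inj.mp h
    linarith
  have k12 : α*(((ε/2 : ℝ) : ℂ) + ((ε/4 : ℝ) : ℂ)) + β = 0 := by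
    have h' : (((ε/2 : ℝ) : ℂ) - ((ε/4 : ℝ) : ℂ)) * (α*(((ε/2 : ℝ) : ℂ) + ((ε/4 : ℝ) : ℂ)) + β) = 0 := by
      linear_combination h1 - h2
    exact (mul_eq_zero.mp h').resolve_left d12
  have k13 : α*(((ε/2 : ℝ) : ℂ) + ((ε/8 : ℝ) : ℂ)) + β = 0 := by
    have h' : (((ε/2 : ℝ) : ℂ) - ((ε/8 : ℝ) : ℂ)) * (α*(((ε/2 : ℝ) : ℂ) + ((ε/8 : ℝ) : ℂ)) + β) = 0 := by
      linear_combination h1 - h3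
    exact (mul_eq_zero.mp h').resolve_left d13
  have : α * (((ε/4 : ℝ) : ℂ) - ((ε/8 : ℝ) : ℂ)) = 0 := by linear_combination k12 - k13
  rcases mul_eq_zero.mp this with h' | h'
  · exact hα h'
  · rw [sub_eq_zero] at h'
    have := Complex.ofReal_inj.mp h'
    linarith

lemma core (s : Fin 2 → Fin 2 → Fin (1+1) → ℂ) (l1 l2 : ℂ)
    (hD : (s 0 0 1 * s 1 1 1 - s 0 1 1 * s 1 0 1) ≠ 0)
    (hne : l1 ≠ l2)
    (hsum : l1 + l2 = (s 0 0 0 * s 1 1 1 - s 0 1 0 * s 1 0 1) + (-(s 1 0 0 * s 0 1 1) + s 1 1 0 * s 0 0 1))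
    (hprod : l1 * l2 = (s 0 0 0 * s 1 1 1 - s 0 1 0 * s 1 0 1) * (-(s 1 0 0 * s 0 1 1) + s 1 1 0 * s 0 0 1) - (-(s 0 0 0 * s 0 1 1) + s 0 1 0 * s 0 0 1) * (s 1 0 0 * s 1 1 1 - s 1 1 0 * s 1 0 1)) :
    rankLE2 1 s := by
  have he : l1 - l2 ≠ 0 := sub_ne_zero.mpr hne
  obtain ⟨u1, u2, v1, v2, e1, e2, e3, e4⟩ := rank1_factor
    (((s 0 0 0 * s 1 1 1 - s 0 1 0 * s 1 0 1) - l2) * s 0 0 1 + (-(s 0 0 0 * s 0 1 1) + s 0 1 0 * s 0 0 1) * s 1 0 1) (((s 0 0 0 * s 1 1 1 - s 0 1 0 * s 1 0 1) - l2) * s 0 1 1 + (-(s 0 0 0 * s 0 1 1) + s 0 1 0 * s 0 0 1) * s 1 1 1) ((s 1 0 0 * s 1 1 1 - s 1 1 0 * s 1 0 1) * s 0 0 1 + ((-(s 1 0 0 * s 0 1 1) + s 1 1 0 * s 0 0 1) - l2) * s 1 0 1) ((s 1 0 0 * s 1 1 1 - s 1 1 0 * s 1 0 1) * s 0 1 1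 + ((-(s 1 0 0 * s 0 1 1) + s 1 1 0 * s 0 0 1) - l2) * s 1 1 1)
    (by linear_combination (s 0 0 1 * s 1 1 1 - s 0 1 1 * s 1 0 1) * (l2 * hsum - hprod))
  obtain ⟨w1, w2, x1, x2, f1, f2, f3, f4⟩ := rank1_factor
    ((l1 - (s 0 0 0 * s 1 1 1 - s 0 1 0 * s 1 0 1)) * s 0 0 1 - (-(s 0 0 0 * s 0 1 1) + s 0 1 0 * s 0 0 1) * s 1 0 1) ((l1 - (s 0 0 0 * s 1 1 1 - s 0 1 0 * s 1 0 1)) * s 0 1 1 - (-(s 0 0 0 * s 0 1 1) + s 0 1 0 * s 0 0 1) * s 1 1 1) (-((s 1 0 0 * s 1 1 1 - s 1 1 0 * s 1 0 1)) * s 0 0 1 + (l1 - (-(s 1 0 0 * s 0 1 1) + s 1 1 0 * s 0 0 1)) * s 1 0 1) (-((s 1 0 0 * s 1 1 1 - s 1 1 0 * s 1 0 1)) * s 0 1 1 + (l1 - (-(s 1 0 0 * s 0 1 1) + s 1 1 0 * s 0 0 1)) * s 1 1 1)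
    (by linear_combination (s 0 0 1 * s 1 1 1 - s 0 1 1 * s 1 0 1) * (l1 * hsum - hprod))
  have hD' : s 1 1 1 * s 0 0 1 - s 1 0 1 * s 0 1 1 ≠ 0 := by
    intro h0; apply hD; linear_combination h0
  refine ⟨![u1, u2], ![w1, w2], ![v1, v2], ![x1, x2],
    ![l1 / ((l1 - l2) * (s 0 0 1 * s 1 1 1 - s 0 1 1 * s 1 0 1)), 1 / (l1 - l2)],
    ![l2 / ((l1 - l2) * (s 0 0 1 * s 1 1 1 - s 0 1 1 * s 1 0 1)), 1 / (l1 - l2)], ?_⟩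
  intro i j k
  fin_cases i <;> fin_cases j <;> fin_cases k <;>
    simp only [Matrix.cons_val', Matrix.cons_val_zero, Matrix.cons_val_one, Matrix.head_cons,
      Matrix.head_fin_const, Matrix.cons_val_fin_one, Fin.zero_eta, Fin.mk_one, Fin.isValue]
  · rw [← e1, ← f1]; field_simp [hD']; ring
  · rw [← e1, ← f1]; field_simp [hD']; ring
  · rw [← e2, ← f2]; field_simp [hD']; ring
  · rw [← e2, ← f2]; field_simp [hD']; ring
  · rw [← e3, ← f3]; field_simp [hD']; ring
  · rw [← e3, ← f3]; field_simp [hD']; ring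
  · rw [← e4, ← f4]; field_simp [hD']; ring
  · rw [← e4, ← f4]; field_simp [hD']; ring

def Gfam (s : Fin 2 → Fin 2 → Fin (1+1) → ℂ) (p : ℂ × ℂ) : Fin 2 → Fin 2 → Fin (1+1) → ℂ :=
  fun i j k => if k = 0 then
      s i j 0 + p.2 * ((if i = 0 then (1:ℂ) else 2) * (s i j 1 + p.1 * (if i = j then 1 else 0)))
    else s i j 1 + p.1 * (if i = j then 1 else 0)

lemma Gfam_key (s : Fin 2 → Fin 2 → Fin (1+1) → ℂ) (ε : ℝ) (hε : 0 < ε) :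
    ∃ p : ℂ × ℂ, ‖p.1‖ < ε ∧ ‖p.2‖ < ε ∧ rankLE2 1 (Gfam s p) := by
  obtain ⟨z, hz, hzq⟩ := quad_avoid 1 (s 0 0 1 + s 1 1 1)
    (s 0 0 1 * s 1 1 1 - s 0 1 1 * s 1 0 1) one_ne_zero ε hε
  have hD : (s 0 0 1 + z) * (s 1 1 1 + z) - s 0 1 1 * s 1 0 1 ≠ 0 := by
    intro h; exact hzq (by linear_combination h)
  have hD2 : ((s 0 0 1 + z) * (s 1 1 1 + z) - s 0 1 1 * s 1 0 1)^2 ≠ 0 := pow_ne_zero 2 hD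
  have hquad : ∀ v : ℂ, ((((s 0 0 0 + v * (s 0 0 1 + z)) * (s 1 1 1 + z) - (s 0 1 0 + v * s 0 1 1) * s 1 0 1) + (-((s 1 0 0 + v * (2 * s 1 0 1)) * s 0 1 1) + (s 1 1 0 + v * (2 * (s 1 1 1 + z))) * (s 0 0 1 + z)))^2 - 4 * (((s 0 0 0 + v * (s 0 0 1 + z)) * (s 1 1 1 + z) - (s 0 1 0 + v * s 0 1 1) * s 1 0 1) * (-((s 1 0 0 + v * (2 * s 1 0 1)) * s 0 1 1) + (s 1 1 0 + v * (2 * (s 1 1 1 + z))) * (s 0 0 1 + z)) - (-((s 0 0 0 + v * (s 0 0 1 + z)) * s 0 1 1) + (s 0 1 0 + v * s 0 1 1) * (s 0 0 1 + z)) * ((s 1 0 0 + v * (2 * s 1 0 1)) * (s 1 1 1 + z) - (s 1 1 0 + v * (2 * (s 1 1 1 + z))) * s 1 0 1))) = ((s 0 0 1 + z) * (s 1 1 1 + z) - s 0 1 1 * s 1 0 1)^2 * v^2 + (((((s 0 0 0 + (1:ℂ) * (s 0 0 1 + z)) * (s 1 1 1 + z) - (s 0 1 0 + (1:ℂ) *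 s 0 1 1) * s 1 0 1) + (-((s 1 0 0 + (1:ℂ) * (2 * s 1 0 1)) * s 0 1 1) + (s 1 1 0 + (1:ℂ) * (2 * (s 1 1 1 + z))) * (s 0 0 1 + z)))^2 - 4 * (((s 0 0 0 + (1:ℂ) * (s 0 0 1 + z)) * (s 1 1 1 + z) - (s 0 1 0 + (1:ℂ) * s 0 1 1) * s 1 0 1) * (-((s 1 0 0 + (1:ℂ) * (2 * s 1 0 1)) * s 0 1 1) + (s 1 1 0 + (1:ℂ) * (2 * (s 1 1 1 + z))) * (s 0 0 1 + z)) - (-((s 0 0 0 + (1:ℂ) * (s 0 0 1 + z)) * s 0 1 1) + (s 0 1 0 + (1:ℂ) * s 0 1 1) * (s 0 0 1 + z)) * ((s 1 0 0 + (1:ℂ) * (2 * s 1 0 1)) * (s 1 1 1 + z) - (s 1 1 0 + (1:ℂ) * (2 * (s 1 1 1 + z))) * s 1 0 1))) - ((s 0 0 1 + z) * (s 1 1 1 + z) - s 0 1 1 * s 1 0 1)^2 - ((((s 0 0 0 + (0:ℂ) * (s 0 0 1 + z)) * (s 1 1 1 + z) - (s 0 1 0 + (0:ℂ) * s 0 1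 1) * s 1 0 1) + (-((s 1 0 0 + (0:ℂ) * (2 * s 1 0 1)) * s 0 1 1) + (s 1 1 0 + (0:ℂ) * (2 * (s 1 1 1 + z))) * (s 0 0 1 + z)))^2 - 4 * (((s 0 0 0 + (0:ℂ) * (s 0 0 1 + z)) * (s 1 1 1 + z) - (s 0 1 0 + (0:ℂ) * s 0 1 1) * s 1 0 1) * (-((s 1 0 0 + (0:ℂ) * (2 * s 1 0 1)) * s 0 1 1) + (s 1 1 0 + (0:ℂ) * (2 * (s 1 1 1 + z))) * (s 0 0 1 + z)) - (-((s 0 0 0 + (0:ℂ) * (s 0 0 1 + z)) * s 0 1 1) + (s 0 1 0 + (0:ℂ) * s 0 1 1) * (s 0 0 1 + z)) * ((s 1 0 0 + (0:ℂ) * (2 * s 1 0 1)) * (s 1 1 1 + z) - (s 1 1 0 + (0:ℂ) * (2 * (s 1 1 1 + z))) * s 1 0 1)))) * v + ((((s 0 0 0 + (0:ℂ) * (s 0 0 1 + z)) * (s 1 1 1 + z) - (s 0 1 0 + (0:ℂ) * s 0 1 1) * s 1 0 1) + (-((s 1 0 0 + (0:ℂ) * (2 * s 1 0 1)) * s 0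 1 1) + (s 1 1 0 + (0:ℂ) * (2 * (s 1 1 1 + z))) * (s 0 0 1 + z)))^2 - 4 * (((s 0 0 0 + (0:ℂ) * (s 0 0 1 + z)) * (s 1 1 1 + z) - (s 0 1 0 + (0:ℂ) * s 0 1 1) * s 1 0 1) * (-((s 1 0 0 + (0:ℂ) * (2 * s 1 0 1)) * s 0 1 1) + (s 1 1 0 + (0:ℂ) * (2 * (s 1 1 1 + z))) * (s 0 0 1 + z)) - (-((s 0 0 0 + (0:ℂ) * (s 0 0 1 + z)) * s 0 1 1) + (s 0 1 0 + (0:ℂ) * s 0 1 1) * (s 0 0 1 + z)) * ((s 1 0 0 + (0:ℂ) * (2 * s 1 0 1)) * (s 1 1 1 + z) - (s 1 1 0 + (0:ℂ) * (2 * (s 1 1 1 + z))) * s 1 0 1))) := by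
    intro v; ring
  obtain ⟨v, hv, hvq⟩ := quad_avoid (((s 0 0 1 + z) * (s 1 1 1 + z) - s 0 1 1 * s 1 0 1)^2) (((((s 0 0 0 + (1:ℂ) * (s 0 0 1 + z)) * (s 1 1 1 + z) - (s 0 1 0 + (1:ℂ) * s 0 1 1) * s 1 0 1) + (-((s 1 0 0 + (1:ℂ) * (2 * s 1 0 1)) * s 0 1 1) + (s 1 1 0 + (1:ℂ) * (2 * (s 1 1 1 + z))) * (s 0 0 1 + z)))^2 - 4 * (((s 0 0 0 + (1:ℂ) * (s 0 0 1 + z)) * (s 1 1 1 + z) - (s 0 1 0 + (1:ℂ) * s 0 1 1) * s 1 0 1) * (-((s 1 0 0 + (1:ℂ) * (2 * s 1 0 1)) * s 0 1 1) + (s 1 1 0 + (1:ℂ) * (2 * (s 1 1 1 + z))) * (s 0 0 1 + z)) - (-((s 0 0 0 + (1:ℂ) * (s 0 0 1 + z)) * s 0 1 1) + (s 0 1 0 + (1:ℂ) * s 0 1 1) * (s 0 0 1 + z)) * ((s 1 0 0 + (1:ℂ) * (2 * s 1 0 1)) * (s 1 1 1 + z) - (s 1 1 0 + (1:ℂ)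 * (2 * (s 1 1 1 + z))) * s 1 0 1))) - ((s 0 0 1 + z) * (s 1 1 1 + z) - s 0 1 1 * s 1 0 1)^2 - ((((s 0 0 0 + (0:ℂ) * (s 0 0 1 + z)) * (s 1 1 1 + z) - (s 0 1 0 + (0:ℂ) * s 0 1 1) * s 1 0 1) + (-((s 1 0 0 + (0:ℂ) * (2 * s 1 0 1)) * s 0 1 1) + (s 1 1 0 + (0:ℂ) * (2 * (s 1 1 1 + z))) * (s 0 0 1 + z)))^2 - 4 * (((s 0 0 0 + (0:ℂ) * (s 0 0 1 + z)) * (s 1 1 1 + z) - (s 0 1 0 + (0:ℂ) * s 0 1 1) * s 1 0 1) * (-((s 1 0 0 + (0:ℂ) * (2 * s 1 0 1)) * s 0 1 1) + (s 1 1 0 + (0:ℂ) * (2 * (s 1 1 1 + z))) * (s 0 0 1 + z)) - (-((s 0 0 0 + (0:ℂ) * (s 0 0 1 + z)) * s 0 1 1) + (s 0 1 0 + (0:ℂ) * s 0 1 1) * (s 0 0 1 + z)) * ((s 1 0 0 + (0:ℂ) * (2 * s 1 0 1)) * (s 1 1 1 + z) - (s 1 1 0 + (0:ℂ) * (2 *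 (s 1 1 1 + z))) * s 1 0 1)))) ((((s 0 0 0 + (0:ℂ) * (s 0 0 1 + z)) * (s 1 1 1 + z) - (s 0 1 0 + (0:ℂ) * s 0 1 1) * s 1 0 1) + (-((s 1 0 0 + (0:ℂ) * (2 * s 1 0 1)) * s 0 1 1) + (s 1 1 0 + (0:ℂ) * (2 * (s 1 1 1 + z))) * (s 0 0 1 + z)))^2 - 4 * (((s 0 0 0 + (0:ℂ) * (s 0 0 1 + z)) * (s 1 1 1 + z) - (s 0 1 0 + (0:ℂ) * s 0 1 1) * s 1 0 1) * (-((s 1 0 0 + (0:ℂ) * (2 * s 1 0 1)) * s 0 1 1) + (s 1 1 0 + (0:ℂ) * (2 * (s 1 1 1 + z))) * (s 0 0 1 + z)) - (-((s 0 0 0 + (0:ℂ) * (s 0 0 1 + z)) * s 0 1 1) + (s 0 1 0 + (0:ℂ) * s 0 1 1) * (s 0 0 1 + z)) * ((s 1 0 0 + (0:ℂ) * (2 * s 1 0 1)) * (s 1 1 1 + z) - (s 1 1 0 + (0:ℂ) * (2 * (s 1 1 1 + z))) * s 1 0 1))) hD2 ε hε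
  have hdisc : ((((s 0 0 0 + v * (s 0 0 1 + z)) * (s 1 1 1 + z) - (s 0 1 0 + v * s 0 1 1) * s 1 0 1) + (-((s 1 0 0 + v * (2 * s 1 0 1)) * s 0 1 1) + (s 1 1 0 + v * (2 * (s 1 1 1 + z))) * (s 0 0 1 + z)))^2 - 4 * (((s 0 0 0 + v * (s 0 0 1 + z)) * (s 1 1 1 + z) - (s 0 1 0 + v * s 0 1 1) * s 1 0 1) * (-((s 1 0 0 + v * (2 * s 1 0 1)) * s 0 1 1) + (s 1 1 0 + v * (2 * (s 1 1 1 + z))) * (s 0 0 1 + z)) - (-((s 0 0 0 + v * (s 0 0 1 + z)) * s 0 1 1) + (s 0 1 0 + v * s 0 1 1) * (s 0 0 1 + z)) * ((s 1 0 0 + v * (2 * s 1 0 1)) * (s 1 1 1 + z) - (s 1 1 0 + v * (2 * (s 1 1 1 + z))) * s 1 0 1))) ≠ 0 := by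
    intro h; exact hvq (by rw [← hquad v]; exact h)
  obtain ⟨r, hr⟩ := IsAlgClosed.exists_pow_nat_eq ((((s 0 0 0 + v * (s 0 0 1 + z)) * (s 1 1 1 + z) - (s 0 1 0 + v * s 0 1 1) * s 1 0 1) + (-((s 1 0 0 + v * (2 * s 1 0 1)) * s 0 1 1) + (s 1 1 0 + v * (2 * (s 1 1 1 + z))) * (s 0 0 1 + z)))^2 - 4 * (((s 0 0 0 + v * (s 0 0 1 + z)) * (s 1 1 1 + z) - (s 0 1 0 + v * s 0 1 1) * s 1 0 1) * (-((s 1 0 0 + v * (2 * s 1 0 1)) * s 0 1 1) + (s 1 1 0 + v * (2 * (s 1 1 1 + z))) * (s 0 0 1 + z)) - (-((s 0 0 0 + v * (s 0 0 1 + z)) * s 0 1 1) + (s 0 1 0 + v * s 0 1 1) * (s 0 0 1 + z)) * ((s 1 0 0 + v * (2 * s 1 0 1)) * (s 1 1 1 + z) - (s 1 1 0 + v * (2 * (s 1 1 1 + z))) * s 1 0 1))) two_pos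
  have hrne : r ≠ 0 := by
    intro h0; exact hdisc (by rw [← hr, h0]; ring)
  refine ⟨(z, v), hz, hv, ?_⟩
  refine core (Gfam s (z, v)) (((((s 0 0 0 + v * (s 0 0 1 + z)) * (s 1 1 1 + z) - (s 0 1 0 + v * s 0 1 1) * s 1 0 1) + (-((s 1 0 0 + v * (2 * s 1 0 1)) * s 0 1 1) + (s 1 1 0 + v * (2 * (s 1 1 1 + z))) * (s 0 0 1 + z))) + r) / 2) (((((s 0 0 0 + v * (s 0 0 1 + z)) * (s 1 1 1 + z) - (s 0 1 0 + v * s 0 1 1) * s 1 0 1) + (-((s 1 0 0 + v * (2 * s 1 0 1)) * s 0 1 1) + (s 1 1 0 + v * (2 * (s 1 1 1 + z))) * (s 0 0 1 + z))) - r) / 2) ?_ ?_ ?_ ?_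
  · simp only [Gfam]
    norm_num
    intro h; exact hD (by linear_combination h)
  · intro h
    exact hrne (by linear_combination h)
  · simp only [Gfam]
    norm_num
    ring
  · simp only [Gfam]
    norm_num
    linear_combination (-(1:ℂ)/4) * hr

lemma dense22 (s : Fin 2 → Fin 2 → Fin (1+1) → ℂ) : borderRankLE2 1 s := by
  have hcont : Continuous fun p : ℂ × ℂ => Gfam s p := by
    apply continuous_pi; intro i; apply continuous_pi; intro j; apply continuous_pi; intro k
    by_cases hk : k = 0 <;> simp only [Gfam, hk, if_true, if_false, reduceIte] <;> fun_prop
  have hG0 : Gfam s (0, 0) = s := by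
    funext i j k
    fin_cases k <;> simp [Gfam]
  have key : ∀ n : ℕ, ∃ p : ℂ × ℂ, ‖p.1‖ < 1/(n+1) ∧ ‖p.2‖ < 1/(n+1) ∧ rankLE2 1 (Gfam s p) :=
    fun n => Gfam_key s _ (by positivity)
  choose pn h1 h2 h3 using key
  have t1 : Filter.Tendsto (fun n => (pn n).1) Filter.atTop (nhds 0) :=
    squeeze_zero_norm (fun n => le_of_lt (h1 n)) tendsto_one_div_add_atTop_nhds_zero_nat
  have t2 : Filter.Tendsto (fun n => (pn n).2) Filter.atTop (nhds 0) :=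
    squeeze_zero_norm (fun n => le_of_lt (h2 n)) tendsto_one_div_add_atTop_nhds_zero_nat
  have hten : Filter.Tendsto pn Filter.atTop (nhds ((0 : ℂ), (0 : ℂ))) := by
    simpa using t1.prodMk_nhds t2
  have hlim : Filter.Tendsto (fun n => Gfam s (pn n)) Filter.atTop (nhds s) := by
    have := (hcont.tendsto ((0 : ℂ), (0 : ℂ))).comp hten
    rwa [hG0] at this
  exact mem_closure_of_tendsto hlim (Filter.Eventually.of_forall h3)

lemma border_of_flatten (m : ℕ) (t : Fin 2 → Fin 2 → Fin (m + 1) → ℂ)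
    (h : Module.finrank ℂ (flattenImage m t) ≤ 2) : borderRankLE2 m t := by
  classical
  set W := flattenImage m t with hWdef
  set n := Module.finrank ℂ W with hn
  let b : Module.Basis (Fin n) ℂ W := Module.finBasis ℂ W
  let f : Fin n → (Fin 2 → Fin 2 → ℂ) := fun i => (b i : Fin 2 → Fin 2 → ℂ)
  let A : Fin 2 → Fin 2 → ℂ := if h0 : 0 < n then f ⟨0, h0⟩ else 0
  let B : Fin 2 → Fin 2 → ℂ := if h1 : 1 < n then f ⟨1, h1⟩ else 0
  have hsub : ∀ i : Fin n, f i = A ∨ f i = B := by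
    intro i
    have hi : i.val < n := i.isLt
    have hv : i.val = 0 ∨ i.val = 1 := by omega
    rcases hv with hv | hv
    · left
      have : i = ⟨0, by omega⟩ := Fin.ext (by simp only [Fin.val_mk]; omega)
      rw [this]
      simp only [A, dif_pos (show 0 < n by omega)]
    · right
      have : i = ⟨1, by omega⟩ := Fin.ext (by simp only [Fin.val_mk]; omega)
      rw [this]
      simp only [B, dif_pos (show 1 < n by omega)]
  have hspan : ∀ x : W, (x : Fin 2 → Fin 2 → ℂ) ∈ Submodule.span ℂ {A, B} := by
    intro x
    have hx := b.sum_repr x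
    have hco : (x : Fin 2 → Fin 2 → ℂ) = ∑ i, b.repr x i • f i := by
      conv_lhs => rw [← hx]
      push_cast
      rfl
    rw [hco]
    apply Submodule.sum_mem
    intro i _
    apply Submodule.smul_mem
    rcases hsub i with h' | h' <;> rw [h'] <;> apply Submodule.subset_span <;> simp
  have hslice : ∀ k : Fin (m+1), ∃ x y : ℂ, x • A + y • B = fun i j => t i j k := by
    intro k
    refine Submodule.mem_span_pair.mp (hspan ⟨fun i j => t i j k, ?_⟩)
    exact Submodule.subset_span ⟨k, rfl⟩
  choose xc yc hxy using hslice
  let s2 : Fin 2 → Fin 2 → Fin (1+1) → ℂ := fun i j k => if k = 0 then A i j else B i j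
  let F : (Fin 2 → Fin 2 → Fin (1+1) → ℂ) → (Fin 2 → Fin 2 → Fin (m+1) → ℂ) :=
    fun σ i j k => xc k * σ i j 0 + yc k * σ i j 1
  have hFcont : Continuous F := by
    apply continuous_pi; intro i; apply continuous_pi; intro j; apply continuous_pi; intro k
    have c1 : Continuous fun σ : Fin 2 → Fin 2 → Fin (1+1) → ℂ => σ i j 0 :=
      (continuous_apply (0 : Fin (1+1))).comp ((continuous_apply j).comp (continuous_apply i))
    have c2 : Continuous fun σ : Fin 2 → Fin 2 → Fin (1+1) → ℂ => σ i j 1 :=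
      (continuous_apply (1 : Fin (1+1))).comp ((continuous_apply j).comp (continuous_apply i))
    exact ((continuous_const.mul c1).add (continuous_const.mul c2))
  have hFs : F s2 = t := by
    funext i j k
    have := congr_fun (congr_fun (hxy k) i) j
    simp only [Pi.add_apply, Pi.smul_apply, smul_eq_mul] at this
    simpa [F, s2] using this
  have hFrank : ∀ σ, rankLE2 1 σ → rankLE2 m (F σ) := by
    rintro σ ⟨a, a', bb, bb', c, c', hd⟩
    refine ⟨a, a', bb, bb', fun k => xc k * c 0 + yc k * c 1,
      fun k => xc k * c' 0 + yc k * c' 1, ?_⟩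
    intro i j k
    show xc k * σ i j 0 + yc k * σ i j 1 = _
    rw [hd i j 0, hd i j 1]
    ring
  have hsub2 : closure {σ | rankLE2 1 σ} ⊆ F ⁻¹' closure {τ : Fin 2 → Fin 2 → Fin (m+1) → ℂ | rankLE2 m τ} :=
    closure_minimal (fun σ hσ => subset_closure (hFrank σ hσ))
      (IsClosed.preimage hFcont isClosed_closure)
  have := hsub2 (dense22 s2)
  have h2 : F s2 ∈ closure {τ : Fin 2 → Fin 2 → Fin (m+1) → ℂ | rankLE2 m τ} := this
  rw [hFs] at h2
  exact h2

noncomputable def uncur : (Fin 2 → Fin 2 → ℂ) ≃ₗ[ℂ] (Fin 2 × Fin 2 → ℂ) where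
  toFun f := fun q => f q.1 q.2
  invFun g := fun i j => g (i, j)
  map_add' _ _ := rfl
  map_smul' _ _ := rfl
  left_inv _ := rfl
  right_inv _ := rfl

noncomputable def sliceF (m : ℕ) (t : Fin 2 → Fin 2 → Fin (m + 1) → ℂ) (k : Fin (m + 1)) :
    Fin 2 × Fin 2 → ℂ := fun q => t q.1 q.2 k

lemma finrank_flatten_eq (m : ℕ) (t : Fin 2 → Fin 2 → Fin (m + 1) → ℂ) :
    Module.finrank ℂ (flattenImage m t) =
      Module.finrank ℂ (Submodule.span ℂ (Set.range (sliceF m t))) := by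
  have hset : (⇑(uncur : (Fin 2 → Fin 2 → ℂ) →ₗ[ℂ] (Fin 2 × Fin 2 → ℂ)) ''
      Set.range fun k : Fin (m+1) => fun i j => t i j k) =
      Set.range (sliceF m t) := by
    ext g
    constructor
    · rintro ⟨f, ⟨k, rfl⟩, rfl⟩; exact ⟨k, rfl⟩
    · rintro ⟨k, rfl⟩; exact ⟨_, ⟨k, rfl⟩, rfl⟩
  rw [← LinearEquiv.finrank_map_eq uncur (flattenImage m t), flattenImage, Submodule.map_span,
    hset]

noncomputable def detMat (m : ℕ) (t : Fin 2 → Fin 2 → Fin (m + 1) → ℂ)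
    (k1 k2 k3 : Fin (m + 1)) (p : Fin 2 × Fin 2) :
    Matrix (Fin 2 × Fin 2) (Fin 2 × Fin 2) ℂ :=
  Matrix.of fun r q =>
    if r = ((0, 0) : Fin 2 × Fin 2) then sliceF m t k1 q
    else if r = ((0, 1) : Fin 2 × Fin 2) then sliceF m t k2 q
    else if r = ((1, 0) : Fin 2 × Fin 2) then sliceF m t k3 q
    else if q = p then 1 else 0

lemma vecMul_detMat (m : ℕ) (t : Fin 2 → Fin 2 → Fin (m + 1) → ℂ)
    (k1 k2 k3 : Fin (m + 1)) (p : Fin 2 × Fin 2) (v : Fin 2 × Fin 2 → ℂ) (q : Fin 2 × Fin 2) :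
    Matrix.vecMul v (detMat m t k1 k2 k3 p) q =
      v (0, 0) * sliceF m t k1 q + v (0, 1) * sliceF m t k2 q + v (1, 0) * sliceF m t k3 q +
        v (1, 1) * (if q = p then 1 else 0) := by
  simp only [Matrix.vecMul, dotProduct, detMat, Matrix.of_apply]
  rw [Fintype.sum_prod_type]
  simp only [Fin.sum_univ_two]
  norm_num [Prod.ext_iff]
  ring

lemma det_zero_of_finrank_le (m : ℕ) (t : Fin 2 → Fin 2 → Fin (m + 1) → ℂ)
    (h : Module.finrank ℂ (Submodule.span ℂ (Set.range (sliceF m t))) ≤ 2)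
    (k1 k2 k3 : Fin (m + 1)) (p : Fin 2 × Fin 2) :
    (detMat m t k1 k2 k3 p).det = 0 := by
  classical
  set g1 := sliceF m t k1
  set g2 := sliceF m t k2
  set g3 := sliceF m t k3
  have hdep : ¬ LinearIndependent ℂ ![g1, g2, g3] := by
    intro hind
    have h3 : Module.finrank ℂ (Submodule.span ℂ (Set.range ![g1, g2, g3])) = 3 := by
      rw [finrank_span_eq_card hind]
      simp
    have hle : Submodule.span ℂ (Set.range ![g1, g2, g3]) ≤
        Submodule.span ℂ (Set.range (sliceF m t)) := by
      rw [Submodule.span_le]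
      rintro x ⟨i, rfl⟩
      fin_cases i
      · exact Submodule.subset_span ⟨k1, rfl⟩
      · exact Submodule.subset_span ⟨k2, rfl⟩
      · exact Submodule.subset_span ⟨k3, rfl⟩
    have := Submodule.finrank_mono hle
    omega
  rw [Fintype.not_linearIndependent_iff] at hdep
  obtain ⟨g, hg, i0, hi0⟩ := hdep
  rw [← Matrix.exists_vecMul_eq_zero_iff]
  refine ⟨fun r => if r = ((0,0) : Fin 2 × Fin 2) then g 0
    else if r = ((0,1) : Fin 2 × Fin 2) then g 1
    else if r = ((1,0) : Fin 2 × Fin 2) then g 2 else 0, ?_, ?_⟩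
  · intro hzero
    apply hi0
    fin_cases i0
    · simpa using congr_fun hzero (0, 0)
    · simpa [Prod.ext_iff] using congr_fun hzero (0, 1)
    · simpa [Prod.ext_iff] using congr_fun hzero (1, 0)
  · funext q
    rw [vecMul_detMat]
    have hgq := congr_fun hg q
    simp only [Fin.sum_univ_three, Matrix.cons_val_zero, Matrix.cons_val_one, Matrix.head_cons,
      Pi.add_apply, Pi.smul_apply, smul_eq_mul, Pi.zero_apply,
      Matrix.cons_val_two, Matrix.tail_cons] at hgq
    norm_num [Prod.ext_iff]
    linear_combination hgq

lemma finrank_le_of_det_zero (m : ℕ) (t : Fin 2 → Fin 2 → Fin (m + 1) → ℂ)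
    (h : ∀ (k1 k2 k3 : Fin (m + 1)) (p : Fin 2 × Fin 2), (detMat m t k1 k2 k3 p).det = 0) :
    Module.finrank ℂ (Submodule.span ℂ (Set.range (sliceF m t))) ≤ 2 := by
  classical
  by_contra hc
  push_neg at hc
  obtain ⟨sset, hsub, hspan, hind⟩ := exists_linearIndependent ℂ (Set.range (sliceF m t))
  have hsfin : sset.Finite := (Set.finite_range _).subset hsub
  haveI := hsfin.fintype
  have hcard : Module.finrank ℂ (Submodule.span ℂ sset) = sset.toFinset.card :=
    finrank_span_set_eq_card hind
  rw [hspan] at hcard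
  have h3 : 3 ≤ sset.toFinset.card := by omega
  obtain ⟨t3, ht3sub, ht3card⟩ := Finset.exists_subset_card_eq h3
  obtain ⟨x, y, z, hxy, hxz, hyz, ht3⟩ := Finset.card_eq_three.mp ht3card
  have hmem : ∀ v ∈ ({x, y, z} : Finset (Fin 2 × Fin 2 → ℂ)), v ∈ sset := by
    intro v hv
    have := ht3sub (ht3 ▸ hv)
    simpa using this
  have hxs : x ∈ sset := hmem x (by simp)
  have hys : y ∈ sset := hmem y (by simp)
  have hzs : z ∈ sset := hmem z (by simp)
  obtain ⟨k1, hk1⟩ := hsub hxs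
  obtain ⟨k2, hk2⟩ := hsub hys
  obtain ⟨k3, hk3⟩ := hsub hzs
  -- independence of the triple
  have hind3 : LinearIndependent ℂ ![x, y, z] := by
    have hf : LinearIndependent ℂ
        ((fun (a : sset) => (a : Fin 2 × Fin 2 → ℂ)) ∘
          (fun i : Fin 3 => (⟨![x, y, z] i, by fin_cases i <;> assumption⟩ : sset))) := by
      apply hind.comp
      intro a b hab
      have : (![x, y, z] a) = (![x, y, z] b) := congr_arg Subtype.val hab
      fin_cases a <;> fin_cases b <;> simp_all
    exact hf
  -- a standard basis vector not in the span
  have hnot : ∃ p : Fin 2 × Fin 2,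
      (fun q => if q = p then (1:ℂ) else 0) ∉ Submodule.span ℂ (Set.range ![x, y, z]) := by
    by_contra hall
    push_neg at hall
    have htop : Submodule.span ℂ (Set.range ![x, y, z]) = ⊤ := by
      rw [eq_top_iff]
      intro v _
      have hv : v = ∑ p : Fin 2 × Fin 2, v p • (fun q => if q = p then (1:ℂ) else 0) := by
        funext q
        simp [Finset.sum_apply, Finset.sum_ite_eq, smul_eq_mul]
      rw [hv]
      exact Submodule.sum_mem _ fun p _ => Submodule.smul_mem _ _ (hall p)
    have hfr3 : Module.finrank ℂ (Submodule.span ℂ (Set.range ![x, y, z])) = 3 := by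
      rw [finrank_span_eq_card hind3]; simp
    rw [htop] at hfr3
    have : Module.finrank ℂ (Fin 2 × Fin 2 → ℂ) = 4 := by
      simp [Module.finrank_pi]
    rw [finrank_top] at hfr3
    omega
  obtain ⟨p, hp⟩ := hnot
  have hdet := h k1 k2 k3 p
  rw [← Matrix.exists_vecMul_eq_zero_iff] at hdet
  obtain ⟨v, hv0, hvM⟩ := hdet
  have hexp : ∀ q, v (0,0) * x q + v (0,1) * y q + v (1,0) * z q +
      v (1,1) * (if q = p then 1 else 0) = 0 := by
    intro q
    have := congr_fun hvM q
    rw [vecMul_detMat] at this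
    rw [hk1, hk2, hk3] at this
    exact this
  -- first: v (1,1) = 0
  have hv11 : v (1,1) = 0 := by
    by_contra hne
    apply hp
    have hx' : x ∈ Submodule.span ℂ (Set.range ![x, y, z]) := Submodule.subset_span ⟨0, rfl⟩
    have hy' : y ∈ Submodule.span ℂ (Set.range ![x, y, z]) := Submodule.subset_span ⟨1, rfl⟩
    have hz' : z ∈ Submodule.span ℂ (Set.range ![x, y, z]) := Submodule.subset_span ⟨2, rfl⟩
    have key : v (1,1) • (fun q => if q = p then (1:ℂ) else 0) =
        -(v (0,0) • x) - v (0,1) • y - v (1,0) • z := by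
      funext q
      simp only [Pi.smul_apply, Pi.sub_apply, Pi.neg_apply, smul_eq_mul]
      linear_combination hexp q
    have hmem2 : (fun q => if q = p then (1:ℂ) else 0) =
        (v (1,1))⁻¹ • (v (1,1) • (fun q => if q = p then (1:ℂ) else 0)) := by
      rw [smul_smul, inv_mul_cancel₀ hne, one_smul]
    rw [hmem2, key]
    exact Submodule.smul_mem _ _ (Submodule.sub_mem _ (Submodule.sub_mem _
      (Submodule.neg_mem _ (Submodule.smul_mem _ _ hx')) (Submodule.smul_mem _ _ hy'))
      (Submodule.smul_mem _ _ hz'))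
  -- then the first three coefficients vanish by independence
  have hcoef := Fintype.linearIndependent_iff.mp hind3 ![v (0,0), v (0,1), v (1,0)] ?_
  · apply hv0
    funext r
    have e1 : v (0,0) = 0 := by simpa using hcoef 0
    have e2 : v (0,1) = 0 := by simpa using hcoef 1
    have e3 : v (1,0) = 0 := by simpa using hcoef 2
    fin_cases r <;> simp_all
  · funext q
    have := hexp q
    rw [hv11] at this
    simp only [Fin.sum_univ_three, Matrix.cons_val_zero, Matrix.cons_val_one, Matrix.head_cons,
      Matrix.cons_val_two, Matrix.tail_cons, Pi.add_apply, Pi.smul_apply, smul_eq_mul,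
      Pi.zero_apply]
    linear_combination this

lemma flatten_le_of_rank (m : ℕ) (t : Fin 2 → Fin 2 → Fin (m + 1) → ℂ) (h : rankLE2 m t) :
    Module.finrank ℂ (Submodule.span ℂ (Set.range (sliceF m t))) ≤ 2 := by
  obtain ⟨a, a', b, b', c, c', hd⟩ := h
  set X : Fin 2 × Fin 2 → ℂ := fun q => a q.1 * b q.2 with hX
  set Y : Fin 2 × Fin 2 → ℂ := fun q => a' q.1 * b' q.2 with hY
  have hle : Submodule.span ℂ (Set.range (sliceF m t)) ≤
      Submodule.span ℂ (Set.range ![X, Y]) := by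
    rw [Submodule.span_le]
    rintro _ ⟨k, rfl⟩
    have hs : sliceF m t k = c k • X + c' k • Y := by
      funext q
      simp only [sliceF, Pi.add_apply, Pi.smul_apply, smul_eq_mul, hX, hY, hd]
      ring
    rw [hs]
    exact Submodule.add_mem _ (Submodule.smul_mem _ _ (Submodule.subset_span ⟨0, rfl⟩))
      (Submodule.smul_mem _ _ (Submodule.subset_span ⟨1, rfl⟩))
  refine le_trans (Submodule.finrank_mono hle) ?_
  simpa [Set.finrank] using finrank_range_le_card (R := ℂ) ![X, Y]

lemma isClosed_detcond (m : ℕ) :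
    IsClosed {t : Fin 2 → Fin 2 → Fin (m + 1) → ℂ |
      ∀ (k1 k2 k3 : Fin (m + 1)) (p : Fin 2 × Fin 2), (detMat m t k1 k2 k3 p).det = 0} := by
  have : {t : Fin 2 → Fin 2 → Fin (m + 1) → ℂ |
      ∀ (k1 k2 k3 : Fin (m + 1)) (p : Fin 2 × Fin 2), (detMat m t k1 k2 k3 p).det = 0} =
      ⋂ (k1 : Fin (m+1)), ⋂ (k2 : Fin (m+1)), ⋂ (k3 : Fin (m+1)), ⋂ (p : Fin 2 × Fin 2),
        {t | (detMat m t k1 k2 k3 p).det = 0} := by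
    ext u
    simp [Set.mem_iInter]
  rw [this]
  refine isClosed_iInter fun k1 => isClosed_iInter fun k2 => isClosed_iInter fun k3 =>
    isClosed_iInter fun p => isClosed_eq ?_ continuous_const
  apply Continuous.matrix_det
  apply continuous_matrix
  intro r q
  simp only [detMat, Matrix.of_apply]
  have centry : ∀ k : Fin (m+1), Continuous fun u : Fin 2 → Fin 2 → Fin (m + 1) → ℂ =>
      sliceF m u k q := fun k =>
    (continuous_apply k).comp ((continuous_apply q.2).comp (continuous_apply q.1))
  split_ifs <;> first | exact centry _ | exact continuous_const

lemma part1 (m : ℕ) (t : Fin 2 → Fin 2 → Fin (m + 1) → ℂ) :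
    borderRankLE2 m t ↔ Module.finrank ℂ (flattenImage m t) ≤ 2 := by
  constructor
  · intro h
    rw [finrank_flatten_eq]
    apply finrank_le_of_det_zero
    have hsub : {s : Fin 2 → Fin 2 → Fin (m + 1) → ℂ | rankLE2 m s} ⊆
        {t : Fin 2 → Fin 2 → Fin (m + 1) → ℂ |
          ∀ (k1 k2 k3 : Fin (m + 1)) (p : Fin 2 × Fin 2), (detMat m t k1 k2 k3 p).det = 0} :=
      fun s hs => det_zero_of_finrank_le m s (flatten_le_of_rank m s hs)
    exact closure_minimal hsub (isClosed_detcond m) h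
  · exact border_of_flatten m t

noncomputable def Lmap : (Fin 2 → Fin 2 → ℂ) ≃ₗ[ℂ] (Fin 4 → ℂ) where
  toFun M := ![M 0 0 - M 1 1, M 0 1, M 1 0 - M 0 1, M 1 1]
  invFun x := ![![x 0 + x 3, x 1], ![x 2 + x 1, x 3]]
  map_add' M N := by
    funext i
    fin_cases i <;>
      simp [Matrix.cons_val_zero, Matrix.cons_val_one, Matrix.head_cons, Pi.add_apply] <;> ring
  map_smul' c M := by
    funext i
    fin_cases i <;>
      simp [Matrix.cons_val_zero, Matrix.cons_val_one, Matrix.head_cons, Pi.smul_apply,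
        smul_eq_mul] <;> ring
  left_inv M := by
    funext i j
    fin_cases i <;> fin_cases j <;>
      simp [Matrix.cons_val_zero, Matrix.cons_val_one, Matrix.head_cons] <;> ring
  right_inv x := by
    funext i
    fin_cases i <;>
      simp [Matrix.cons_val_zero, Matrix.cons_val_one, Matrix.head_cons] <;> ring

lemma collapse1 (m : ℕ) (P : ℕ → ℕ → Prop) (w : ℕ → ℕ → ℂ) (k : ℕ) (hk : k < m + 1) :
    (∑ i ∈ Finset.range (m+1), ∑ j ∈ Finset.range (m+1),
      (if P i j then w i j * (if k = j then (1:ℂ) else 0) else 0)) =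
    ∑ i ∈ Finset.range (m+1), (if P i k then w i k else 0) := by
  apply Finset.sum_congr rfl
  intro i _
  have h : ∀ j, (if P i j then w i j * (if k = j then (1:ℂ) else 0) else 0)
      = (if k = j then (if P i j then w i j else 0) else 0) := by
    intro j
    split_ifs <;> simp
  rw [Finset.sum_congr rfl fun j _ => h j, Finset.sum_ite_eq]
  simp [Finset.mem_range.mpr hk]

lemma collapse2 (m : ℕ) (P : ℕ → ℕ → Prop) (w : ℕ → ℕ → ℂ) (k : ℕ) (hk : k < m + 1) :
    (∑ i ∈ Finset.range (m+1), ∑ j ∈ Finset.range (m+1),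
      (if P i j then w i j * (if k = i then (1:ℂ) else 0) else 0)) =
    ∑ j ∈ Finset.range (m+1), (if P k j then w k j else 0) := by
  have h : ∀ i ∈ Finset.range (m+1), (∑ j ∈ Finset.range (m+1),
      (if P i j then w i j * (if k = i then (1:ℂ) else 0) else 0)) =
      (if k = i then (∑ j ∈ Finset.range (m+1), (if P i j then w i j else 0)) else 0) := by
    intro i _
    by_cases hki : k = i
    · subst hki
      simp
    · simp [hki]
  rw [Finset.sum_congr rfl h, Finset.sum_ite_eq]
  simp [Finset.mem_range.mpr hk]

lemma phi00 (m : ℕ) (w : ℕ × ℕ → ℂ) (k : Fin (m+1)) :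
    PhiT m w 0 0 k =
      (∑ i ∈ Finset.range (m+1), if (i, (k:ℕ)) ∈ E1 m then w (i, (k:ℕ)) else 0) +
      (∑ j ∈ Finset.range (m+1), if ((k:ℕ), j) ∈ E2 m then w ((k:ℕ), j) else 0) := by
  have hu : ∀ i j : ℕ, uT m i j 0 0 k = if (k:ℕ) = j then (1:ℂ) else 0 := by
    intro i j; simp [uT]
  have hv : ∀ i j : ℕ, vT m i j 0 0 k = if (k:ℕ) = i then (1:ℂ) else 0 := by
    intro i j; simp [vT]
  simp only [PhiT, hu, hv, Finset.sum_add_distrib]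
  rw [collapse1 m (fun i j => (i, j) ∈ E1 m) (fun i j => w (i, j)) (k:ℕ) k.isLt,
    collapse2 m (fun i j => (i, j) ∈ E2 m) (fun i j => w (i, j)) (k:ℕ) k.isLt]

lemma phi01 (m : ℕ) (w : ℕ × ℕ → ℂ) (k : Fin (m+1)) :
    PhiT m w 0 1 k =
      (∑ j ∈ Finset.range (m+1), if ((k:ℕ), j) ∈ E1 m then w ((k:ℕ), j) else 0) := by
  have hu : ∀ i j : ℕ, uT m i j 0 1 k = if (k:ℕ) = i then (1:ℂ) else 0 := by
    intro i j; simp [uT]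
  have hv : ∀ i j : ℕ, vT m i j 0 1 k = 0 := by
    intro i j; simp [vT]
  simp only [PhiT, hu, hv, mul_zero, ite_self, add_zero, Finset.sum_const_zero]
  rw [collapse2 m (fun i j => (i, j) ∈ E1 m) (fun i j => w (i, j)) (k:ℕ) k.isLt]

lemma phi10 (m : ℕ) (w : ℕ × ℕ → ℂ) (k : Fin (m+1)) :
    PhiT m w 1 0 k =
      (∑ j ∈ Finset.range (m+1), if ((k:ℕ), j) ∈ E1 m then w ((k:ℕ), j) else 0) +
      (∑ i ∈ Finset.range (m+1), if (i, (k:ℕ)) ∈ E2 m then w (i, (k:ℕ)) else 0) := by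
  have hu : ∀ i j : ℕ, uT m i j 1 0 k = if (k:ℕ) = i then (1:ℂ) else 0 := by
    intro i j; simp [uT]
  have hv : ∀ i j : ℕ, vT m i j 1 0 k = if (k:ℕ) = j then (1:ℂ) else 0 := by
    intro i j; simp [vT]
  simp only [PhiT, hu, hv, Finset.sum_add_distrib]
  rw [collapse2 m (fun i j => (i, j) ∈ E1 m) (fun i j => w (i, j)) (k:ℕ) k.isLt,
    collapse1 m (fun i j => (i, j) ∈ E2 m) (fun i j => w (i, j)) (k:ℕ) k.isLt]

lemma phi11 (m : ℕ) (w : ℕ × ℕ → ℂ) (k : Fin (m+1)) :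
    PhiT m w 1 1 k =
      (∑ j ∈ Finset.range (m+1), if ((k:ℕ), j) ∈ E2 m then w ((k:ℕ), j) else 0) := by
  have hu : ∀ i j : ℕ, uT m i j 1 1 k = 0 := by
    intro i j; simp [uT]
  have hv : ∀ i j : ℕ, vT m i j 1 1 k = if (k:ℕ) = i then (1:ℂ) else 0 := by
    intro i j; simp [vT]
  simp only [PhiT, hu, hv, mul_zero, ite_self, zero_add, Finset.sum_const_zero]
  rw [collapse2 m (fun i j => (i, j) ∈ E2 m) (fun i j => w (i, j)) (k:ℕ) k.isLt]

lemma psi_eq (m : ℕ) (w : ℕ × ℕ → ℂ) (k : Fin (m+1)) :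
    Psi m w (k:ℕ) = Lmap (fun i j => PhiT m w i j k) := by
  funext r
  fin_cases r <;>
    simp only [Psi, Lmap, LinearEquiv.coe_mk, LinearMap.coe_mk, AddHom.coe_mk,
      Matrix.cons_val_zero, Matrix.cons_val_one, Matrix.head_cons, Fin.isValue,
      Matrix.cons_val_two, Matrix.tail_cons, Matrix.cons_val_three] <;>
    rw [phi00, phi01, phi10, phi11] <;> ring

lemma finrank_Zw_eq (m : ℕ) (w : ℕ × ℕ → ℂ) :
    Module.finrank ℂ (Zw m w) = Module.finrank ℂ (flattenImage m (PhiT m w)) := by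
  have hset : Psi m w '' {k | k ≤ m} =
      ⇑(Lmap : (Fin 2 → Fin 2 → ℂ) →ₗ[ℂ] (Fin 4 → ℂ)) ''
        (Set.range fun k : Fin (m+1) => fun i j => PhiT m w i j k) := by
    ext x
    constructor
    · rintro ⟨k, hk, rfl⟩
      have hk' : k ≤ m := hk
      refine ⟨fun i j => PhiT m w i j (⟨k, by omega⟩ : Fin (m+1)), ⟨⟨k, by omega⟩, rfl⟩, ?_⟩
      rw [LinearEquiv.coe_coe]
      have := psi_eq m w (⟨k, by omega⟩ : Fin (m+1))
      simpa using this.symm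
    · rintro ⟨_, ⟨k, rfl⟩, rfl⟩
      refine ⟨(k : ℕ), by simpa using Nat.lt_succ_iff.mp k.isLt, ?_⟩
      rw [LinearEquiv.coe_coe, ← psi_eq]
  rw [Zw, hset, ← Submodule.map_span, ← flattenImage, LinearEquiv.finrank_map_eq]


/-- A tensor `t ∈ ℂ²⊗ℂ²⊗ℂ^{m+1}` has border rank at most `2` iff the image of the
induced map `(ℂ^{m+1})* → ℂ²⊗ℂ²` has dimension at most `2`; in particular, for
tensors `t = Φ(w)` in the subspace `W` spanned by the `u_{i,j}` ((i,j) ∈ E₁) and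
`v_{i,j}` ((i,j) ∈ E₂), border rank `≤ 2` is equivalent to `dim Z_w ≤ 2`. -/
theorem stmt16 (m : ℕ) (hm : 1 ≤ m) :
    (∀ t : Fin 2 → Fin 2 → Fin (m + 1) → ℂ,
      borderRankLE2 m t ↔ Module.finrank ℂ (flattenImage m t) ≤ 2) ∧
    (∀ w : ℕ × ℕ → ℂ,
      borderRankLE2 m (PhiT m w) ↔ Module.finrank ℂ (Zw m w) ≤ 2) := by
  refine ⟨part1 m, fun w => (part1 m (PhiT m w)).trans ?_⟩
  rw [finrank_Zw_eq]
end

section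
/- For every m-dimensional index pair (i,j) ∈ E₁, the tensor ∑_{(i,j)∈E₁} λ_{i,j} u_{i,j} (with u_{i,j} = e₀⊗e₀⊗e_j + e₀⊗e₁⊗e_i + e₁⊗e₀⊗e_i) is a tangent vector to the Segre variety and has rank at most 2 only when all λ_{i,j} = 0. In particular, the projective linear space L₁ = ℙW₁ spanned by the u_{i,j} does not meet the set of nonzero tensors of rank ≤ 2 in ℙ(ℂ²⊗ℂ²⊗ℂ^{m+1}). -/
lemma pick (m n : ℕ) (f : ℕ → ℂ) :
    ∑ j ∈ Finset.range m, f j * (if n = j then 1 else 0) =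
      if n < m then f n else 0 := by
  simp [mul_ite, eq_comm, Finset.sum_ite_eq', Finset.mem_range]

lemma pick' (m n : ℕ) (f : ℕ → ℂ) :
    ∑ j ∈ Finset.range m, f j * (if n = j + 1 then 1 else 0) =
      if 0 < n ∧ n - 1 < m then f (n - 1) else 0 := by
  cases n with
  | zero => simp
  | succ k =>
      simp only [add_left_inj]
      rw [pick]
      simp

lemma s00 (m : ℕ) (lam : ℕ → ℂ) (k : Fin (m + 1)) :
    (∑ i ∈ Finset.range m, lam i * uT m i (i + 1) 0 0 k) =
      if 0 < (k : ℕ) ∧ (k : ℕ) - 1 < m then lam ((k : ℕ) - 1) else 0 := by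
  rw [← pick' m (k : ℕ) lam]
  refine Finset.sum_congr rfl fun j _ => ?_
  simp [uT]

lemma s01 (m : ℕ) (lam : ℕ → ℂ) (k : Fin (m + 1)) :
    (∑ i ∈ Finset.range m, lam i * uT m i (i + 1) 0 1 k) =
      if (k : ℕ) < m then lam (k : ℕ) else 0 := by
  rw [← pick m (k : ℕ) lam]
  refine Finset.sum_congr rfl fun j _ => ?_
  simp [uT]

lemma s10 (m : ℕ) (lam : ℕ → ℂ) (k : Fin (m + 1)) :
    (∑ i ∈ Finset.range m, lam i * uT m i (i + 1) 1 0 k) =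
      if (k : ℕ) < m then lam (k : ℕ) else 0 := by
  rw [← pick m (k : ℕ) lam]
  refine Finset.sum_congr rfl fun j _ => ?_
  simp [uT]

lemma s11 (m : ℕ) (lam : ℕ → ℂ) (k : Fin (m + 1)) :
    (∑ i ∈ Finset.range m, lam i * uT m i (i + 1) 1 1 k) = 0 := by
  refine Finset.sum_eq_zero fun j _ => ?_
  simp [uT]

/-- A combination `∑_{(i,j)∈E₁} λ_{i,j} u_{i,j}` (a tangent vector to the Segre
variety, with `E₁ = {(i,i+1) : 0 ≤ i ≤ m-1}`) has rank at most `2` only when all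
`λ_{i,j} = 0`; i.e. the projective linear space `L₁ = ℙW₁` does not meet the set of
nonzero tensors of rank `≤ 2`. -/
theorem stmt17 (m : ℕ) (hm : 1 ≤ m) (lam : ℕ → ℂ)
    (h : rankLE2 m (fun a b c => ∑ i ∈ Finset.range m, lam i * uT m i (i + 1) a b c)) :
    ∀ i < m, lam i = 0 := by
  obtain ⟨a, a', b, b', c, c', hd⟩ := h
  simp only at hd
  intro i
  induction i using Nat.strong_induction_on with
  | _ i IH =>
    intro hi
    set ki : Fin (m + 1) := ⟨i, by omega⟩ with hki
    set ki1 : Fin (m + 1) := ⟨i + 1, by omega⟩ with hki1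
    have hkiv : (ki : ℕ) = i := rfl
    have hki1v : (ki1 : ℕ) = i + 1 := rfl
    -- the eight equations
    have E1 : a 0 * b 0 * c ki + a' 0 * b' 0 * c' ki = 0 := by
      rw [← hd 0 0 ki, s00, hkiv]
      split
      · next hc => exact IH (i - 1) (by omega) (by omega)
      · rfl
    have E2 : a 0 * b 1 * c ki + a' 0 * b' 1 * c' ki = lam i := by
      rw [← hd 0 1 ki, s01, hkiv, if_pos hi]
    have E3 : a 1 * b 0 * c ki + a' 1 * b' 0 * c' ki = lam i := by
      rw [← hd 1 0 ki, s10, hkiv, if_pos hi]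
    have E4 : a 1 * b 1 * c ki + a' 1 * b' 1 * c' ki = 0 := by
      rw [← hd 1 1 ki, s11]
    have E5 : a 0 * b 0 * c ki1 + a' 0 * b' 0 * c' ki1 = lam i := by
      rw [← hd 0 0 ki1, s00, hki1v]
      simp [hi]
    have E67 : a 0 * b 1 * c ki1 + a' 0 * b' 1 * c' ki1
        = a 1 * b 0 * c ki1 + a' 1 * b' 0 * c' ki1 := by
      rw [← hd 0 1 ki1, ← hd 1 0 ki1, s01, s10]
    have E8 : a 1 * b 1 * c ki1 + a' 1 * b' 1 * c' ki1 = 0 := by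
      rw [← hd 1 1 ki1, s11]
    by_cases hΔ : c ki * c' ki1 - c' ki * c ki1 = 0
    · by_cases hx : c ki = 0
      · by_cases hx' : c' ki = 0
        · rw [← E2, hx, hx']; ring
        · have hz : lam i * c' ki = 0 := by
            linear_combination -(c' ki) * E5 + c' ki1 * E1 - (a 0 * b 0) * hΔ
          rcases mul_eq_zero.mp hz with h0 | h0
          · exact h0
          · exact absurd h0 hx'
      · have hz : lam i * c ki = 0 := by
          linear_combination -(c ki) * E5 + c ki1 * E1 + (a' 0 * b' 0) * hΔ
        rcases mul_eq_zero.mp hz with h0 | h0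
        · exact h0
        · exact absurd h0 hx
    · have hA11 : a 1 * b 1 = 0 := by
        have h1 : a 1 * b 1 * (c ki * c' ki1 - c' ki * c ki1) = 0 := by
          linear_combination c' ki1 * E4 - c' ki * E8
        rcases mul_eq_zero.mp h1 with h0 | h0
        · exact h0
        · exact absurd h0 hΔ
      have hB11 : a' 1 * b' 1 = 0 := by
        have h1 : a' 1 * b' 1 * (c ki * c' ki1 - c' ki * c ki1) = 0 := by
          linear_combination c ki * E8 - c ki1 * E4
        rcases mul_eq_zero.mp h1 with h0 | h0
        · exact h0
        · exact absurd h0 hΔ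
      have hP : a 0 * b 1 - a 1 * b 0 = 0 := by
        have h1 : (a 0 * b 1 - a 1 * b 0) * (c ki * c' ki1 - c' ki * c ki1) = 0 := by
          linear_combination c' ki1 * (E2 - E3) - c' ki * E67
        rcases mul_eq_zero.mp h1 with h0 | h0
        · exact h0
        · exact absurd h0 hΔ
      have hQ : a' 0 * b' 1 - a' 1 * b' 0 = 0 := by
        have h1 : (a' 0 * b' 1 - a' 1 * b' 0) * (c ki * c' ki1 - c' ki * c ki1) = 0 := by
          linear_combination c ki * E67 - c ki1 * (E2 - E3)
        rcases mul_eq_zero.mp h1 with h0 | h0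
        · exact h0
        · exact absurd h0 hΔ
      have hA01 : a 0 * b 1 = 0 := by
        have h1 : (a 0 * b 1) ^ 2 = 0 := by
          linear_combination (a 0 * b 0) * hA11 + (a 0 * b 1) * hP
        exact pow_eq_zero_iff (by norm_num) |>.mp h1
      have hB01 : a' 0 * b' 1 = 0 := by
        have h1 : (a' 0 * b' 1) ^ 2 = 0 := by
          linear_combination (a' 0 * b' 0) * hB11 + (a' 0 * b' 1) * hQ
        exact pow_eq_zero_iff (by norm_num) |>.mp h1
      linear_combination -E2 + c ki * hA01 + c' ki * hB01
end

section
/- The map ℙ(1,6,10,15) → ℙ⁴ given by [x₀:x₁:x₂:x₃] ↦ [x₀³⁰ : x₀²⁴x₁ : x₀²⁰x₂ + x₁⁵ : x₀¹⁵x₃ + x₂³ : x₃²] is injective. -/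
private lemma root_of_unity_aux (n : ℕ) (hn : n ≠ 0) (x y c : ℂ) (h : x ^ n = c ^ n * y ^ n) :
    ∃ ζ : ℂ, ζ ^ n = 1 ∧ x = ζ * c * y := by
  rcases eq_or_ne (c * y) 0 with hcy | hcy
  · have hx : x = 0 := by
      have hx' : x ^ n = 0 := by rw [h, ← mul_pow, hcy, zero_pow hn]
      exact pow_eq_zero_iff hn |>.mp hx'
    exact ⟨1, one_pow n, by rw [hx, one_mul, hcy]⟩
  · have hc0 : c ≠ 0 := fun h' => hcy (by rw [h', zero_mul])
    have hy0 : y ≠ 0 := fun h' => hcy (by rw [h', mul_zero])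
    refine ⟨x / (c * y), ?_, ?_⟩
    · rw [div_pow, mul_pow, h]
      exact div_self (mul_ne_zero (pow_ne_zero n hc0) (pow_ne_zero n hy0))
    · field_simp

/-- The map `ℙ(1,6,10,15) → ℙ⁴`,
`[x₀:x₁:x₂:x₃] ↦ [x₀³⁰ : x₀²⁴x₁ : x₀²⁰x₂ + x₁⁵ : x₀¹⁵x₃ + x₂³ : x₃²]` is injective:
if the five coordinates agree up to a common nonzero scalar, the two points of the
weighted projective space agree, i.e. the coordinates differ by the weighted
`ℂ*`-action `t·(x₀,x₁,x₂,x₃) = (tx₀, t⁶x₁, t¹⁰x₂, t¹⁵x₃)`. -/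
theorem stmt18 (x₀ x₁ x₂ x₃ y₀ y₁ y₂ y₃ : ℂ)
    (hx : (x₀, x₁, x₂, x₃) ≠ 0) (hy : (y₀, y₁, y₂, y₃) ≠ 0)
    (lam : ℂ) (hlam : lam ≠ 0)
    (h1 : x₀ ^ 30 = lam * y₀ ^ 30)
    (h2 : x₀ ^ 24 * x₁ = lam * (y₀ ^ 24 * y₁))
    (h3 : x₀ ^ 20 * x₂ + x₁ ^ 5 = lam * (y₀ ^ 20 * y₂ + y₁ ^ 5))
    (h4 : x₀ ^ 15 * x₃ + x₂ ^ 3 = lam * (y₀ ^ 15 * y₃ + y₂ ^ 3))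
    (h5 : x₃ ^ 2 = lam * y₃ ^ 2) :
    ∃ t : ℂ, t ≠ 0 ∧ x₀ = t * y₀ ∧ x₁ = t ^ 6 * y₁ ∧ x₂ = t ^ 10 * y₂ ∧ x₃ = t ^ 15 * y₃ := by
  rcases eq_or_ne y₀ 0 with hy0 | hy0
  · -- degenerate case: y₀ = 0, hence x₀ = 0
    subst hy0
    have hx0 : x₀ = 0 := by
      have : x₀ ^ 30 = 0 := by rw [h1]; ring
      exact pow_eq_zero_iff (by norm_num) |>.mp this
    subst hx0
    obtain ⟨μ, hμ⟩ := IsAlgClosed.exists_pow_nat_eq (k := ℂ) lam (n := 30) (by norm_num)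
    have hμ0 : μ ≠ 0 := by
      intro h; rw [h] at hμ; apply hlam; rw [← hμ]; ring
    have e1 : x₁ ^ 5 = (μ ^ 6) ^ 5 * y₁ ^ 5 := by
      have : (μ ^ 6) ^ 5 = lam := by rw [← hμ]; ring
      rw [this]; linear_combination h3
    have e2 : x₂ ^ 3 = (μ ^ 10) ^ 3 * y₂ ^ 3 := by
      have : (μ ^ 10) ^ 3 = lam := by rw [← hμ]; ring
      rw [this]; linear_combination h4
    have e3 : x₃ ^ 2 = (μ ^ 15) ^ 2 * y₃ ^ 2 := by
      have : (μ ^ 15) ^ 2 = lam := by rw [← hμ]; ring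
      rw [this]; linear_combination h5
    obtain ⟨ζ, hζ, hxζ⟩ := root_of_unity_aux 5 (by norm_num) x₁ y₁ (μ ^ 6) e1
    obtain ⟨ω, hω, hxω⟩ := root_of_unity_aux 3 (by norm_num) x₂ y₂ (μ ^ 10) e2
    obtain ⟨ε, hε, hxε⟩ := root_of_unity_aux 2 (by norm_num) x₃ y₃ (μ ^ 15) e3
    have hζ0 : ζ ≠ 0 := by intro h; rw [h] at hζ; norm_num at hζ
    have hω0 : ω ≠ 0 := by intro h; rw [h] at hω; norm_num at hω
    have hε0 : ε ≠ 0 := by intro h; rw [h] at hε; norm_num at hε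
    refine ⟨ζ * ω * ε * μ, mul_ne_zero (mul_ne_zero (mul_ne_zero hζ0 hω0) hε0) hμ0, by ring, ?_, ?_, ?_⟩
    · have : (ζ * ω * ε * μ) ^ 6 = (ζ ^ 5) * ((ω ^ 3) ^ 2) * ((ε ^ 2) ^ 3) * (ζ * μ ^ 6) := by
        ring
      rw [this, hζ, hω, hε, hxζ]; ring
    · have : (ζ * ω * ε * μ) ^ 10 = ((ζ ^ 5) ^ 2) * ((ω ^ 3) ^ 3) * ((ε ^ 2) ^ 5) * (ω * μ ^ 10) := by
        ring
      rw [this, hζ, hω, hε, hxω]; ring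
    · have : (ζ * ω * ε * μ) ^ 15 = ((ζ ^ 5) ^ 3) * ((ω ^ 3) ^ 5) * ((ε ^ 2) ^ 7) * (ε * μ ^ 15) := by
        ring
      rw [this, hζ, hω, hε, hxε]; ring
  · -- main case: y₀ ≠ 0
    have hx0 : x₀ ≠ 0 := by
      intro h
      rw [h] at h1
      have : lam * y₀ ^ 30 = 0 := by rw [← h1]; ring
      rcases mul_eq_zero.mp this with h' | h'
      · exact hlam h'
      · exact hy0 (pow_eq_zero_iff (by norm_num) |>.mp h')
    set t : ℂ := x₀ / y₀ with ht_def
    have ht0 : t ≠ 0 := div_ne_zero hx0 hy0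
    have hxt : x₀ = t * y₀ := (div_mul_cancel₀ x₀ hy0).symm
    rw [hxt] at h1 h2 h3 h4
    have ht30 : t ^ 30 = lam := by
      have h30 : t ^ 30 * y₀ ^ 30 = lam * y₀ ^ 30 := by linear_combination h1
      exact mul_right_cancel₀ (pow_ne_zero 30 hy0) h30
    have e1 : x₁ = t ^ 6 * y₁ := by
      have hne : (t * y₀) ^ 24 ≠ 0 := pow_ne_zero 24 (mul_ne_zero ht0 hy0)
      apply mul_left_cancel₀ hne
      linear_combination h2 - y₀ ^ 24 * y₁ * ht30
    rw [e1] at h3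
    have e2 : x₂ = t ^ 10 * y₂ := by
      have hne : (t * y₀) ^ 20 ≠ 0 := pow_ne_zero 20 (mul_ne_zero ht0 hy0)
      apply mul_left_cancel₀ hne
      linear_combination h3 - (y₀ ^ 20 * y₂ + y₁ ^ 5) * ht30
    rw [e2] at h4
    have e3 : x₃ = t ^ 15 * y₃ := by
      have hne : (t * y₀) ^ 15 ≠ 0 := pow_ne_zero 15 (mul_ne_zero ht0 hy0)
      apply mul_left_cancel₀ hne
      linear_combination h4 - (y₀ ^ 15 * y₃ + y₂ ^ 3) * ht30
    exact ⟨t, ht0, hxt, e1, e2, e3⟩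
end
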